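/- arXiv:math/0407186 — 4 statements merged into one kernel-verified Lean document; each statement's English description precedes it below -/
import Mathlib

section
/- Let X be an integer Urysohn space. Then there exists an isometric bijection g : X → X such that the cyclic group generated by g acts transitively on X, i.e. for all x, y ∈ X there exists n ∈ ℤ with gⁿ(x) = y. -/
def IsIntegerUrysohn (X : Type*) [MetricSpace X] : Prop :=
  Nonempty X ∧ Countable X ∧
    (∀ x y : X, ∃ q : ℤ, dist x y = (q : ℝ)) ∧
    (∀ (A : Finset X) (g : X → ℤ),
      (∀ a ∈ A, 0 ≤ g a) →
      (∀ a ∈ A, ∀ b ∈ A,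
        |(g a : ℝ) - (g b : ℝ)| ≤ dist a b ∧ dist a b ≤ (g a : ℝ) + (g b : ℝ)) →
      ∃ z : X, ∀ a ∈ A, dist z a = (g a : ℝ))

namespace IUAux

variable {X : Type*} [MetricSpace X]

noncomputable def D (h : IsIntegerUrysohn X) (x y : X) : ℕ :=
  (h.2.2.1 x y).choose.toNat

lemma hD (h : IsIntegerUrysohn X) (x y : X) : dist x y = (D h x y : ℝ) := by
  have hq := (h.2.2.1 x y).choose_spec
  have h0 : (0:ℝ) ≤ ((h.2.2.1 x y).choose : ℝ) := by rw [← hq]; exact dist_nonneg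
  have h0' : (0:ℤ) ≤ (h.2.2.1 x y).choose := by exact_mod_cast h0
  rw [hq, D]
  norm_cast
  omega

lemma D_comm (h : IsIntegerUrysohn X) (x y : X) : D h x y = D h y x := by
  have := hD h x y; have := hD h y x
  have hxy : ((D h x y : ℝ)) = (D h y x : ℝ) := by
    rw [← hD h x y, ← hD h y x, dist_comm]
  exact_mod_cast hxy

lemma D_triangle (h : IsIntegerUrysohn X) (x y z : X) :
    D h x z ≤ D h x y + D h y z := by
  have := dist_triangle x y z
  rw [hD h x z, hD h x y, hD h y z] at this
  exact_mod_cast this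

lemma D_eq_zero_iff (h : IsIntegerUrysohn X) (x y : X) : D h x y = 0 ↔ x = y := by
  constructor
  · intro h0
    have : dist x y = 0 := by rw [hD h x y, h0]; norm_num
    exact dist_eq_zero.1 this
  · intro he
    subst he
    have : ((D h x x : ℝ)) = 0 := by rw [← hD h x x, dist_self]
    exact_mod_cast this

lemma D_self (h : IsIntegerUrysohn X) (x : X) : D h x x = 0 :=
  (D_eq_zero_iff h x x).2 rfl

lemma one_le_D (h : IsIntegerUrysohn X) {x y : X} (hne : x ≠ y) : 1 ≤ D h x y := by
  rcases Nat.eq_zero_or_pos (D h x y) with h0 | h1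
  · exact absurd ((D_eq_zero_iff h x y).1 h0) hne
  · exact h1

/-- The extension property, in terms of `D` and a finite list of (distinct) points. -/
lemma exists_point (h : IsIntegerUrysohn X) (m : ℕ) (p : ℕ → X)
    (hinj : ∀ i j, i < m → j < m → p i = p j → i = j) (gv : ℕ → ℕ)
    (hcond : ∀ i j, i < m → j < m →
      D h (p i) (p j) ≤ gv i + gv j ∧ gv i ≤ gv j + D h (p i) (p j)) :
    ∃ z : X, ∀ i, i < m → D h z (p i) = gv i := by
  classical
  set A : Finset X := (Finset.range m).image p with hA
  set g : X → ℤ := fun y => if hy : ∃ i, i < m ∧ p i = y then (gv hy.choose : ℤ) else 0 with hg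
  have hmem : ∀ a ∈ A, ∃ i, i < m ∧ p i = a := by
    intro a ha
    rw [hA, Finset.mem_image] at ha
    obtain ⟨i, hi, rfl⟩ := ha
    exact ⟨i, Finset.mem_range.1 hi, rfl⟩
  have hgval : ∀ i, i < m → g (p i) = (gv i : ℤ) := by
    intro i hi
    have hy : ∃ j, j < m ∧ p j = p i := ⟨i, hi, rfl⟩
    have hspec := hy.choose_spec
    have : hy.choose = i := hinj _ _ hspec.1 hi hspec.2
    simp only [hg, dif_pos hy, this]
  have hpos : ∀ a ∈ A, 0 ≤ g a := by
    intro a ha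
    obtain ⟨i, hi, rfl⟩ := hmem a ha
    rw [hgval i hi]; positivity
  have hcond2 : ∀ a ∈ A, ∀ b ∈ A,
      |(g a : ℝ) - (g b : ℝ)| ≤ dist a b ∧ dist a b ≤ (g a : ℝ) + (g b : ℝ) := by
    intro a ha b hb
    obtain ⟨i, hi, rfl⟩ := hmem a ha
    obtain ⟨j, hj, rfl⟩ := hmem b hb
    rw [hgval i hi, hgval j hj, hD h (p i) (p j)]
    obtain ⟨h1, h2⟩ := hcond i j hi hj
    obtain ⟨h1', h2'⟩ := hcond j i hj hi
    rw [D_comm h (p j) (p i)] at h2' h1'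
    constructor
    · rw [abs_sub_le_iff]
      constructor
      · have : (gv i : ℝ) ≤ (gv j : ℝ) + (D h (p i) (p j) : ℝ) := by exact_mod_cast h2
        push_cast
        linarith
      · have : (gv j : ℝ) ≤ (gv i : ℝ) + (D h (p i) (p j) : ℝ) := by exact_mod_cast h2'
        push_cast
        linarith
    · push_cast; exact_mod_cast h1
  obtain ⟨z, hz⟩ := h.2.2.2 A g hpos hcond2
  refine ⟨z, fun i hi => ?_⟩
  have hzi := hz (p i) (by rw [hA, Finset.mem_image]; exact ⟨i, Finset.mem_range.2 hi, rfl⟩)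
  rw [hgval i hi, hD h z (p i)] at hzi
  exact_mod_cast hzi


section Combo

variable (n N : ℕ) (fv dd : ℕ → ℕ)

def okg (z : ℤ) : Prop := z.natAbs ≤ n ∨ (N - n ≤ z.natAbs ∧ z.natAbs ≤ N)

def cval (z : ℤ) : ℕ := if z.natAbs ≤ n then fv z.natAbs else dd (N - z.natAbs)

def ComboL (l : List ℤ) : Prop := ∀ z ∈ l, okg n N z

def ccost (l : List ℤ) : ℕ := (l.map (cval n N fv dd)).sum

def nuSet (k : ℤ) : Set ℕ := {c | ∃ l, ComboL n N l ∧ l.sum = k ∧ ccost n N fv dd l = c}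

noncomputable def nu (k : ℤ) : ℕ := sInf (nuSet n N fv dd k)


lemma ccost_cons (z : ℤ) (l : List ℤ) :
    ccost n N fv dd (z :: l) = cval n N fv dd z + ccost n N fv dd l := by
  simp [ccost]

lemma ccost_perm {l l' : List ℤ} (h : l.Perm l') :
    ccost n N fv dd l = ccost n N fv dd l' :=
  List.Perm.sum_eq (h.map _)

lemma ComboL_perm {l l' : List ℤ} (h : l.Perm l') (hc : ComboL n N l) : ComboL n N l' :=
  fun z hz => hc z (h.symm.subset hz)

lemma sum_map_neg (l : List ℤ) : (l.map (fun z => -z)).sum = -l.sum := by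
  induction l with
  | nil => simp
  | cons a t ih => simp [ih]; ring

lemma nuSet_nonempty (h1n : 1 ≤ n) (k : ℤ) : (nuSet n N fv dd k).Nonempty := by
  classical
  refine ⟨ccost n N fv dd (List.replicate k.natAbs (if 0 ≤ k then (1:ℤ) else -1)), ?_⟩
  refine ⟨List.replicate k.natAbs (if 0 ≤ k then (1:ℤ) else -1), ?_, ?_, rfl⟩
  · intro z hz
    rw [List.mem_replicate] at hz
    rw [hz.2]
    left
    split <;> simp [h1n]
  · rw [List.sum_replicate]
    by_cases hk : 0 ≤ k
    · rw [if_pos hk, nsmul_eq_mul]; omega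
    · rw [if_neg hk, nsmul_eq_mul]; omega

lemma nu_le {l : List ℤ} (hc : ComboL n N l) {k : ℤ} (hs : l.sum = k) :
    nu n N fv dd k ≤ ccost n N fv dd l :=
  Nat.sInf_le ⟨l, hc, hs, rfl⟩

lemma nu_spec (h1n : 1 ≤ n) (k : ℤ) :
    ∃ l, ComboL n N l ∧ l.sum = k ∧ ccost n N fv dd l = nu n N fv dd k :=
  Nat.sInf_mem (nuSet_nonempty n N fv dd h1n k)

lemma nu_zero : nu n N fv dd 0 = 0 :=
  Nat.le_zero.1 (nu_le n N fv dd (l := []) (fun z hz => absurd hz List.not_mem_nil) rfl)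

lemma nu_add (h1n : 1 ≤ n) (a b : ℤ) :
    nu n N fv dd (a + b) ≤ nu n N fv dd a + nu n N fv dd b := by
  obtain ⟨l1, hc1, hs1, he1⟩ := nu_spec n N fv dd h1n a
  obtain ⟨l2, hc2, hs2, he2⟩ := nu_spec n N fv dd h1n b
  have hc : ComboL n N (l1 ++ l2) := by
    intro z hz
    rcases List.mem_append.1 hz with h | h
    exacts [hc1 z h, hc2 z h]
  have := nu_le n N fv dd hc (k := a + b) (by rw [List.sum_append, hs1, hs2])
  rw [← he1, ← he2]
  calc nu n N fv dd (a+b) ≤ ccost n N fv dd (l1 ++ l2) := this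
    _ = ccost n N fv dd l1 + ccost n N fv dd l2 := by simp [ccost]

lemma nu_neg_le (k : ℤ) (h1n : 1 ≤ n) : nu n N fv dd (-k) ≤ nu n N fv dd k := by
  obtain ⟨l, hc, hs, he⟩ := nu_spec n N fv dd h1n k
  have hmap : (l.map (fun z => -z)).sum = -k := by
    rw [← hs, sum_map_neg]
  have hcomb : ComboL n N (l.map (fun z => -z)) := by
    intro z hz
    obtain ⟨w, hw, rfl⟩ := List.mem_map.1 hz
    have := hc w hw
    simpa [okg] using this
  have hcost : ccost n N fv dd (l.map (fun z => -z)) = ccost n N fv dd l := by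
    simp [ccost, List.map_map]
    congr 1
    apply List.map_congr_left
    intro z hz
    simp [cval]
  calc nu n N fv dd (-k) ≤ ccost n N fv dd (l.map (fun z => -z)) := nu_le n N fv dd hcomb hmap
    _ = nu n N fv dd k := by rw [hcost, he]

lemma nu_neg (h1n : 1 ≤ n) (k : ℤ) : nu n N fv dd (-k) = nu n N fv dd k := by
  refine le_antisymm (nu_neg_le n N fv dd k h1n) ?_
  have := nu_neg_le n N fv dd (-k) h1n
  rwa [neg_neg] at this

lemma nu_sub (h1n : 1 ≤ n) (a b : ℤ) :
    nu n N fv dd (a - b) ≤ nu n N fv dd a + nu n N fv dd b := by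
  rw [sub_eq_add_neg]
  calc nu n N fv dd (a + -b) ≤ nu n N fv dd a + nu n N fv dd (-b) := nu_add n N fv dd h1n a (-b)
    _ = nu n N fv dd a + nu n N fv dd b := by rw [nu_neg n N fv dd h1n b]


lemma sum_pos_list (t : List ℤ) (h : ∀ z ∈ t, 0 < z) : 0 ≤ t.sum := by
  induction t with
  | nil => simp
  | cons a r ih =>
    have ha := h a (List.mem_cons_self)
    have := ih (fun z hz => h z (List.mem_cons_of_mem a hz))
    simp only [List.sum_cons]
    omega

lemma sum_neg_list (t : List ℤ) (h : ∀ z ∈ t, z < 0) : t.sum ≤ 0 := by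
  induction t with
  | nil => simp
  | cons a r ih =>
    have ha := h a (List.mem_cons_self)
    have := ih (fun z hz => h z (List.mem_cons_of_mem a hz))
    simp only [List.sum_cons]
    omega

lemma bg_sum_pos (c : ℤ) (t : List ℤ) (h : ∀ z ∈ t, c ≤ z) : (t.length : ℤ) * c ≤ t.sum := by
  induction t with
  | nil => simp
  | cons a r ih =>
    have ha := h a (List.mem_cons_self)
    have := ih (fun z hz => h z (List.mem_cons_of_mem a hz))
    simp only [List.sum_cons, List.length_cons]
    push_cast
    nlinarith

lemma bg_sum_neg (c : ℤ) (t : List ℤ) (h : ∀ z ∈ t, z ≤ -c) : t.sum ≤ -((t.length : ℤ) * c) := by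
  induction t with
  | nil => simp
  | cons a r ih =>
    have ha := h a (List.mem_cons_self)
    have := ih (fun z hz => h z (List.mem_cons_of_mem a hz))
    simp only [List.sum_cons, List.length_cons]
    push_cast
    nlinarith

lemma sum_filter_split (p : ℤ → Bool) (l : List ℤ) :
    (l.filter p).sum + (l.filter (fun z => !(p z))).sum = l.sum := by
  induction l with
  | nil => simp
  | cons a t ih =>
    by_cases hpa : p a = true
    · simp only [List.filter_cons, hpa, if_pos, List.sum_cons, Bool.not_true]
      simp only [Bool.false_eq_true, if_false]
      omega
    · have hpa' : p a = false := by simp at hpa; exact hpa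
      simp only [List.filter_cons, hpa', List.sum_cons, Bool.not_false]
      simp only [Bool.false_eq_true, if_false, if_pos, List.sum_cons]
      omega

lemma ccost_filter_split (p : ℤ → Bool) (l : List ℤ) :
    ccost n N fv dd (l.filter p) + ccost n N fv dd (l.filter (fun z => !(p z))) =
      ccost n N fv dd l := by
  induction l with
  | nil => simp [ccost]
  | cons a t ih =>
    by_cases hpa : p a = true
    · simp only [List.filter_cons, hpa, if_true, Bool.not_true, Bool.false_eq_true, if_false,
        ccost_cons]
      omega
    · have hpa' : p a = false := by simp at hpa; exact hpa
      simp only [List.filter_cons, hpa', Bool.not_false, Bool.false_eq_true, if_false, if_true,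
        ccost_cons]
      omega

lemma small_size (hf1 : ∀ a, 1 ≤ a → a ≤ n → 1 ≤ fv a) :
    ∀ l : List ℤ, (∀ z ∈ l, z.natAbs ≤ n) → l.sum.natAbs ≤ n * ccost n N fv dd l := by
  intro l
  induction l with
  | nil => simp [ccost]
  | cons a t ih =>
    intro hsm
    have ha : a.natAbs ≤ n := hsm a (List.mem_cons_self)
    have ht := ih (fun z hz => hsm z (List.mem_cons_of_mem a hz))
    have h1 : (a + t.sum).natAbs ≤ a.natAbs + t.sum.natAbs := Int.natAbs_add_le a t.sum
    have h2 : a.natAbs ≤ n * cval n N fv dd a := by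
      rcases Nat.eq_zero_or_pos a.natAbs with h0 | hpos
      · simp [h0]
      · have hcv : 1 ≤ cval n N fv dd a := by
          rw [cval, if_pos ha]; exact hf1 _ hpos ha
        calc a.natAbs ≤ n := ha
          _ = n * 1 := (mul_one n).symm
          _ ≤ n * cval n N fv dd a := Nat.mul_le_mul_left n hcv
    rw [List.sum_cons, ccost_cons, Nat.mul_add]
    omega

lemma small_bound (hf0 : fv 0 = 0)
    (hadd : ∀ a b, a + b ≤ n → fv (a + b) ≤ fv a + fv b)
    (hsub : ∀ a b, b ≤ a → a ≤ n → fv (a - b) ≤ fv a + fv b) :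
    ∀ c (l : List ℤ), l.length ≤ c → (∀ z ∈ l, z.natAbs ≤ n) → l.sum.natAbs ≤ n →
      fv l.sum.natAbs ≤ ccost n N fv dd l := by
  intro c
  induction c with
  | zero =>
    intro l hl _ _
    have heq : l = [] := List.length_eq_zero_iff.1 (Nat.le_zero.1 hl)
    subst heq; simp [ccost, hf0]
  | succ c ih =>
    intro l hl hsm hsum
    classical
    by_cases h0 : ∃ z ∈ l, z = 0
    · obtain ⟨z, hz, rfl⟩ := h0
      have hperm : l.Perm ((0 : ℤ) :: l.erase 0) := List.perm_cons_erase hz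
      have hsum' : (l.erase 0).sum = l.sum := by
        have := hperm.sum_eq; simp only [List.sum_cons, zero_add] at this; omega
      have hlen : (l.erase 0).length + 1 = l.length := by
        have := hperm.length_eq; simp only [List.length_cons] at this; omega
      have hcost : ccost n N fv dd l = ccost n N fv dd (l.erase 0) := by
        rw [ccost_perm n N fv dd hperm, ccost_cons]
        have : cval n N fv dd 0 = 0 := by
          rw [cval]; simp [hf0]
        omega
      rw [hcost, ← hsum']
      exact ih _ (by omega) (fun w hw => hsm w (List.erase_subset hw)) (by rw [hsum']; exact hsum)
    · by_cases hmix : (∃ z ∈ l, 0 < z) ∧ (∃ w ∈ l, w < 0)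
      · obtain ⟨⟨z, hz, hzpos⟩, ⟨w, hw, hwneg⟩⟩ := hmix
        have hne : w ≠ z := by omega
        have hw' : w ∈ l.erase z := (List.mem_erase_of_ne hne).2 hw
        have hperm : l.Perm (z :: w :: ((l.erase z).erase w)) :=
          (List.perm_cons_erase hz).trans ((List.perm_cons_erase hw').cons z)
        set rest := ((l.erase z).erase w) with hrest
        have hrsub : ∀ y ∈ rest, y ∈ l := fun y hy =>
          List.erase_subset (List.erase_subset hy)
        have hzn : z.natAbs ≤ n := hsm z hz
        have hwn : w.natAbs ≤ n := hsm w hw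
        have hlen : l.length = rest.length + 2 := by
          have := hperm.length_eq; simp only [List.length_cons] at this; omega
        have hsum2 : ((z + w) :: rest).sum = l.sum := by
          have := hperm.sum_eq; simp only [List.sum_cons] at this ⊢; omega
        have habs : (z + w).natAbs ≤ n := by omega
        have hcv : fv ((z + w).natAbs) ≤ fv z.natAbs + fv w.natAbs := by
          rcases le_or_gt w.natAbs z.natAbs with hle | hlt
          · have h1 : (z + w).natAbs = z.natAbs - w.natAbs := by omega
            rw [h1]; exact hsub _ _ hle hzn
          · have h1 : (z + w).natAbs = w.natAbs - z.natAbs := by omega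
            rw [h1]
            have := hsub w.natAbs z.natAbs (le_of_lt hlt) hwn
            omega
        have hsm' : ∀ y ∈ (z + w) :: rest, y.natAbs ≤ n := by
          intro y hy
          rcases List.mem_cons.1 hy with rfl | hy'
          · exact habs
          · exact hsm y (hrsub y hy')
        have hrec := ih ((z + w) :: rest) (by simp only [List.length_cons]; omega) hsm'
          (by rw [hsum2]; exact hsum)
        rw [← hsum2]
        calc fv ((z + w) :: rest).sum.natAbs ≤ ccost n N fv dd ((z + w) :: rest) := hrec
          _ ≤ ccost n N fv dd l := by
              rw [ccost_perm n N fv dd hperm, ccost_cons, ccost_cons, ccost_cons]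
              have e1 : cval n N fv dd (z + w) = fv (z + w).natAbs := by rw [cval, if_pos habs]
              have e2 : cval n N fv dd z = fv z.natAbs := by rw [cval, if_pos hzn]
              have e3 : cval n N fv dd w = fv w.natAbs := by rw [cval, if_pos hwn]
              rw [e1, e2, e3]
              omega
      · push_neg at h0
        have hsign : (∀ y ∈ l, 0 < y) ∨ (∀ y ∈ l, y < 0) := by
          rcases not_and_or.1 hmix with h | h
          · push_neg at h
            right; intro y hy
            have h1 := h y hy
            have h2 := h0 y hy
            omega
          · push_neg at h
            left; intro y hy
            have h1 := h y hy
            have h2 := h0 y hy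
            omega
        rcases l with _ | ⟨a, t⟩
        · simp [ccost, hf0]
        rcases t with _ | ⟨b, t⟩
        · simp only [List.sum_cons, List.sum_nil, add_zero, ccost_cons]
          have : cval n N fv dd a = fv a.natAbs := by
            rw [cval, if_pos (hsm a (List.mem_cons_self))]
          rw [this]
          simp [ccost]
        · have hab : (a + b).natAbs = a.natAbs + b.natAbs ∧ a.natAbs + b.natAbs ≤ n := by
            rcases hsign with hall | hall
            · have ha := hall a (by simp)
              have hb := hall b (by simp)
              have ht : 0 ≤ t.sum := sum_pos_list t (fun y hy => hall y (by simp [hy]))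
              have : (a :: b :: t).sum = a + b + t.sum := by simp [add_assoc]
              rw [this] at hsum
              constructor
              · omega
              · omega
            · have ha := hall a (by simp)
              have hb := hall b (by simp)
              have ht : t.sum ≤ 0 := sum_neg_list t (fun y hy => hall y (by simp [hy]))
              have : (a :: b :: t).sum = a + b + t.sum := by simp [add_assoc]
              rw [this] at hsum
              constructor
              · omega
              · omega
          have han : a.natAbs ≤ n := hsm a (by simp)
          have hbn : b.natAbs ≤ n := hsm b (by simp)
          have hsum2 : ((a + b) :: t).sum = (a :: b :: t).sum := by simp [add_assoc]
          have hsm' : ∀ y ∈ (a + b) :: t, y.natAbs ≤ n := by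
            intro y hy
            rcases List.mem_cons.1 hy with rfl | hy'
            · omega
            · exact hsm y (by simp [hy'])
          have hrec := ih ((a + b) :: t) (by simp at hl ⊢; omega) hsm'
            (by rw [hsum2]; exact hsum)
          rw [← hsum2]
          calc fv ((a + b) :: t).sum.natAbs ≤ ccost n N fv dd ((a + b) :: t) := hrec
            _ ≤ ccost n N fv dd (a :: b :: t) := by
                rw [ccost_cons, ccost_cons, ccost_cons]
                have e1 : cval n N fv dd (a + b) = fv (a + b).natAbs := by
                  rw [cval, if_pos (by omega)]
                have e2 : cval n N fv dd a = fv a.natAbs := by rw [cval, if_pos han]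
                have e3 : cval n N fv dd b = fv b.natAbs := by rw [cval, if_pos hbn]
                have := hadd a.natAbs b.natAbs (by omega)
                rw [e1, e2, e3, hab.1]
                omega


variable (K : ℕ)

lemma master
    (h1n : 1 ≤ n) (h2n : 2 * n < N) (hNK : n * (K + 1) + n ≤ N)
    (hfK : ∀ a, a ≤ n → fv a ≤ K) (hdK : ∀ i, i ≤ n → dd i ≤ K)
    (hf0 : fv 0 = 0) (hf1 : ∀ a, 1 ≤ a → a ≤ n → 1 ≤ fv a)
    (hadd : ∀ a b, a + b ≤ n → fv (a + b) ≤ fv a + fv b)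
    (hsub : ∀ a b, b ≤ a → a ≤ n → fv (a - b) ≤ fv a + fv b)
    (hx1 : ∀ i j, i ≤ j → j ≤ n → fv (j - i) ≤ dd i + dd j)
    (hx2 : ∀ i j, i ≤ n → j ≤ n → dd i ≤ dd j + fv (max i j - min i j)) :
    ∀ c (l : List ℤ), l.length ≤ c → ComboL n N l →
      (∀ k : ℕ, k ≤ n → l.sum = (k : ℤ) → fv k ≤ ccost n N fv dd l) ∧
      (∀ i : ℕ, i ≤ n → l.sum = (N : ℤ) - (i : ℤ) → dd i ≤ ccost n N fv dd l) := by
  intro c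
  induction c with
  | zero =>
    intro l hl _
    have heq : l = [] := List.length_eq_zero_iff.1 (Nat.le_zero.1 hl)
    subst heq
    constructor
    · intro k hk hs
      simp only [List.sum_nil] at hs
      have : k = 0 := by exact_mod_cast hs.symm
      subst this
      simp [ccost, hf0]
    · intro i hi hs
      simp only [List.sum_nil] at hs
      exfalso; omega
  | succ c ih =>
    intro l hl hcomb
    classical
    have hmul : n * (K + 1) = n * K + n := by ring
    by_cases hpair : (∃ z ∈ l, 0 < z ∧ n < z.natAbs) ∧ (∃ w ∈ l, w < 0 ∧ n < w.natAbs)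
    · obtain ⟨⟨z, hz, hzpos, hzbig⟩, ⟨w, hw, hwneg, hwbig⟩⟩ := hpair
      have hzb : N - n ≤ z.natAbs ∧ z.natAbs ≤ N := (hcomb z hz).resolve_left (by omega)
      have hwb : N - n ≤ w.natAbs ∧ w.natAbs ≤ N := (hcomb w hw).resolve_left (by omega)
      have hne : w ≠ z := by omega
      have hw' : w ∈ l.erase z := (List.mem_erase_of_ne hne).2 hw
      have hperm : l.Perm (z :: w :: ((l.erase z).erase w)) :=
        (List.perm_cons_erase hz).trans ((List.perm_cons_erase hw').cons z)
      set rest := ((l.erase z).erase w) with hrest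
      have hrsub : ∀ y ∈ rest, y ∈ l := fun y hy =>
        List.erase_subset (List.erase_subset hy)
      have hlen : l.length = rest.length + 2 := by
        have := hperm.length_eq; simp only [List.length_cons] at this; omega
      have hsum2 : ((z + w) :: rest).sum = l.sum := by
        have := hperm.sum_eq; simp only [List.sum_cons] at this ⊢; omega
      have habs : (z + w).natAbs ≤ n := by omega
      have hcomb' : ComboL n N ((z + w) :: rest) := by
        intro y hy
        rcases List.mem_cons.1 hy with rfl | hy'
        · left; exact habs
        · exact hcomb y (hrsub y hy')
      -- cost comparison
      have hcostcmp : ccost n N fv dd ((z + w) :: rest) ≤ ccost n N fv dd l := by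
        rw [ccost_perm n N fv dd hperm, ccost_cons, ccost_cons, ccost_cons]
        have e1 : cval n N fv dd (z + w) = fv (z + w).natAbs := by rw [cval, if_pos habs]
        have e2 : cval n N fv dd z = dd (N - z.natAbs) := by rw [cval, if_neg (by omega)]
        have e3 : cval n N fv dd w = dd (N - w.natAbs) := by rw [cval, if_neg (by omega)]
        set i := N - z.natAbs with hi
        set j := N - w.natAbs with hj
        have hin : i ≤ n := by omega
        have hjn : j ≤ n := by omega
        have habs2 : (z + w).natAbs = max i j - min i j := by omega
        have hfle : fv (z + w).natAbs ≤ dd i + dd j := by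
          rw [habs2]
          rcases le_total i j with hij | hij
          · have := hx1 i j hij hjn
            rw [max_eq_right hij, min_eq_left hij]
            omega
          · have := hx1 j i hij hin
            rw [max_eq_left hij, min_eq_right hij]
            omega
        rw [e1, e2, e3]
        omega
      obtain ⟨ih1, ih2⟩ := ih ((z + w) :: rest)
        (by simp only [List.length_cons]; omega) hcomb'
      constructor
      · intro k hk hs
        have := ih1 k hk (by rw [hsum2]; exact hs)
        omega
      · intro i hi hs
        have := ih2 i hi (by rw [hsum2]; exact hs)
        omega
    · -- no opposite-signed pair of big entries
      set p : ℤ → Bool := fun z => decide (z.natAbs ≤ n) with hp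
      set S := l.filter p with hS
      set Bg := l.filter (fun z => !(p z)) with hBg
      have hsplitsum : S.sum + Bg.sum = l.sum := sum_filter_split p l
      have hsplitcost : ccost n N fv dd S + ccost n N fv dd Bg = ccost n N fv dd l :=
        ccost_filter_split n N fv dd p l
      have hSsmall : ∀ z ∈ S, z.natAbs ≤ n := by
        intro z hz
        have := (List.mem_filter.1 hz).2
        simpa [hp] using this
      have hBgfacts : ∀ z ∈ Bg, N - n ≤ z.natAbs ∧ z.natAbs ≤ N ∧ z ≠ 0 ∧ n < z.natAbs := by
        intro z hz
        have h1 := (List.mem_filter.1 hz).1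
        have h2 := (List.mem_filter.1 hz).2
        have h3 : ¬ z.natAbs ≤ n := by simpa [hp] using h2
        have h4 := (hcomb z h1).resolve_left h3
        refine ⟨h4.1, h4.2, by omega, by omega⟩
      have hBgmem : ∀ z ∈ Bg, z ∈ l := fun z hz => (List.mem_filter.1 hz).1
      have hsign : (∀ z ∈ Bg, 0 < z) ∨ (∀ z ∈ Bg, z < 0) := by
        by_contra hcon
        push_neg at hcon
        obtain ⟨⟨z, hz, hz'⟩, ⟨w, hw, hw'⟩⟩ := hcon
        have hzf := hBgfacts z hz
        have hwf := hBgfacts w hw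
        exact hpair ⟨⟨w, hBgmem w hw, by omega, hwf.2.2.2⟩, ⟨z, hBgmem z hz, by omega, hzf.2.2.2⟩⟩
      have hSsize : S.sum.natAbs ≤ n * ccost n N fv dd S :=
        small_size n N fv dd hf1 S hSsmall
      have hcostS : ccost n N fv dd S ≤ ccost n N fv dd l := by omega
      -- helper: if n*K ≤ S.sum.natAbs then K ≤ ccost l
      have hbig_cost : ∀ t : ℕ, t ≤ K → n * K ≤ S.sum.natAbs → t ≤ ccost n N fv dd l := by
        intro t ht hbig
        have h1 : n * K ≤ n * ccost n N fv dd S := le_trans hbig hSsize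
        have h2 : K ≤ ccost n N fv dd S := Nat.le_of_mul_le_mul_left h1 (by omega)
        omega
      rcases hBgeq : Bg with _ | ⟨z, Bg'⟩
      · -- no big entries
        have hsum0 : S.sum = l.sum := by rw [hBgeq] at hsplitsum; simpa using hsplitsum
        have hcost0 : ccost n N fv dd S = ccost n N fv dd l := by
          rw [hBgeq] at hsplitcost
          have hnil : ccost n N fv dd ([] : List ℤ) = 0 := by simp [ccost]
          omega
        constructor
        · intro k hk hs
          have hkabs : S.sum.natAbs = k := by rw [hsum0, hs]; simp
          have := small_bound n N fv dd hf0 hadd hsub S.length S (le_refl _) hSsmall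
            (by omega)
          rw [hkabs] at this
          omega
        · intro i hi hs
          have habs : S.sum.natAbs = N - i := by rw [hsum0, hs]; omega
          exact hbig_cost (dd i) (hdK i hi) (by omega)
      rcases hBg'eq : Bg' with _ | ⟨w, Bg''⟩
      · -- exactly one big entry z
        have hzmem : z ∈ Bg := by rw [hBgeq]; simp
        have hzf := hBgfacts z hzmem
        have hBsum : Bg.sum = z := by rw [hBgeq, hBg'eq]; simp
        have hcostz : ccost n N fv dd Bg = dd (N - z.natAbs) := by
          rw [hBgeq, hBg'eq]
          simp [ccost, cval, if_neg (show ¬ z.natAbs ≤ n by omega)]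
        rcases hsign with hsp | hsn
        · have hzpos : 0 < z := hsp z hzmem
          have hzabs : (z : ℤ) = (z.natAbs : ℤ) := by omega
          constructor
          · intro k hk hs
            -- S.sum = k - z, huge
            have hSs : S.sum = (k : ℤ) - z := by omega
            have : n * K ≤ S.sum.natAbs := by
              have h5 : n * (K + 1) + n ≤ N := hNK
              omega
            exact hbig_cost (fv k) (hfK k hk) this
          · intro i hi hs
            set j := N - z.natAbs with hj
            have hjn : j ≤ n := by omega
            have hSs : S.sum = (j : ℤ) - (i : ℤ) := by omega
            have hSabs : S.sum.natAbs = max i j - min i j := by omega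
            have hsb := small_bound n N fv dd hf0 hadd hsub S.length S (le_refl _) hSsmall
              (by omega)
            rw [hSabs] at hsb
            have := hx2 i j hi hjn
            omega
        · have hzneg : z < 0 := hsn z hzmem
          constructor
          · intro k hk hs
            have hSs : S.sum = (k : ℤ) - z := by omega
            have : n * K ≤ S.sum.natAbs := by omega
            exact hbig_cost (fv k) (hfK k hk) this
          · intro i hi hs
            have hSs : S.sum = (N : ℤ) - (i : ℤ) - z := by omega
            have : n * K ≤ S.sum.natAbs := by omega
            exact hbig_cost (dd i) (hdK i hi) this
      · -- at least two big entries, all same sign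
        have hzmem : z ∈ Bg := by rw [hBgeq]; simp
        have hwmem : w ∈ Bg := by rw [hBgeq, hBg'eq]; simp
        have hlen2 : 2 ≤ Bg.length := by rw [hBgeq, hBg'eq]; simp
        rcases hsign with hsp | hsn
        · have hlb : ((Bg.length : ℤ)) * ((N : ℤ) - (n : ℤ)) ≤ Bg.sum := by
            have := bg_sum_pos ((N : ℤ) - (n : ℤ)) Bg (fun y hy => by
              have hyf := hBgfacts y hy
              have := hsp y hy
              omega)
            omega
          have hBsum : 2 * ((N : ℤ) - (n : ℤ)) ≤ Bg.sum := by nlinarith [hlb]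
          constructor
          · intro k hk hs
            have : n * K ≤ S.sum.natAbs := by omega
            exact hbig_cost (fv k) (hfK k hk) this
          · intro i hi hs
            have : n * K ≤ S.sum.natAbs := by omega
            exact hbig_cost (dd i) (hdK i hi) this
        · have hub : Bg.sum ≤ -(((Bg.length : ℤ)) * ((N : ℤ) - (n : ℤ))) := by
            have := bg_sum_neg ((N : ℤ) - (n : ℤ)) Bg (fun y hy => by
              have hyf := hBgfacts y hy
              have := hsn y hy
              omega)
            omega
          have hBsum : Bg.sum ≤ -(2 * ((N : ℤ) - (n : ℤ))) := by nlinarith [hub]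
          constructor
          · intro k hk hs
            have : n * K ≤ S.sum.natAbs := by omega
            exact hbig_cost (fv k) (hfK k hk) this
          · intro i hi hs
            have : n * K ≤ S.sum.natAbs := by omega
            exact hbig_cost (dd i) (hdK i hi) this


section Anchors
variable (h1n : 1 ≤ n) (h2n : 2 * n < N) (hNK : n * (K + 1) + n ≤ N)
  (hfK : ∀ a, a ≤ n → fv a ≤ K) (hdK : ∀ i, i ≤ n → dd i ≤ K)
  (hf0 : fv 0 = 0) (hf1 : ∀ a, 1 ≤ a → a ≤ n → 1 ≤ fv a)
  (hadd : ∀ a b, a + b ≤ n → fv (a + b) ≤ fv a + fv b)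
  (hsub : ∀ a b, b ≤ a → a ≤ n → fv (a - b) ≤ fv a + fv b)
  (hx1 : ∀ i j, i ≤ j → j ≤ n → fv (j - i) ≤ dd i + dd j)
  (hx2 : ∀ i j, i ≤ n → j ≤ n → dd i ≤ dd j + fv (max i j - min i j))

include h1n h2n hNK hfK hdK hf0 hf1 hadd hsub hx1 hx2 in
lemma nu_small (k : ℕ) (hk : k ≤ n) : nu n N fv dd (k : ℤ) = fv k := by
  refine le_antisymm ?_ ?_
  · have hc : ComboL n N [(k : ℤ)] := by
      intro z hz
      simp only [List.mem_singleton] at hz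
      subst hz
      left
      simpa using hk
    have := nu_le n N fv dd hc (k := (k : ℤ)) (by simp)
    calc nu n N fv dd (k : ℤ) ≤ ccost n N fv dd [(k : ℤ)] := this
      _ = fv k := by simp [ccost, cval, Int.natAbs_natCast, hk]
  · obtain ⟨l, hcl, hsl, hel⟩ := nu_spec n N fv dd h1n (k : ℤ)
    have := (master n N fv dd K h1n h2n hNK hfK hdK hf0 hf1 hadd hsub hx1 hx2
      l.length l (le_refl _) hcl).1 k hk hsl
    omega

include h1n h2n hNK hfK hdK hf0 hf1 hadd hsub hx1 hx2 in
lemma nu_far (i : ℕ) (hi : i ≤ n) : nu n N fv dd ((N : ℤ) - (i : ℤ)) = dd i := by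
  refine le_antisymm ?_ ?_
  · have hc : ComboL n N [((N - i : ℕ) : ℤ)] := by
      intro z hz
      simp only [List.mem_singleton] at hz
      subst hz
      right
      simp only [Int.natAbs_natCast]
      omega
    have := nu_le n N fv dd hc (k := (N : ℤ) - (i : ℤ)) (by simp; omega)
    calc nu n N fv dd ((N : ℤ) - i) ≤ ccost n N fv dd [((N - i : ℕ) : ℤ)] := this
      _ = dd i := by
          simp only [ccost, List.map_cons, List.map_nil, List.sum_cons, List.sum_nil, add_zero,
            cval, Int.natAbs_natCast]
          rw [if_neg (by omega)]
          congr 1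
          omega
  · obtain ⟨l, hcl, hsl, hel⟩ := nu_spec n N fv dd h1n ((N : ℤ) - (i : ℤ))
    have := (master n N fv dd K h1n h2n hNK hfK hdK hf0 hf1 hadd hsub hx1 hx2
      l.length l (le_refl _) hcl).2 i hi hsl
    omega

include h1n h2n hf1 in
lemma nu_pos (hd1 : ∀ i, i ≤ n → 1 ≤ dd i) (k : ℤ) (hk : k ≠ 0) : 1 ≤ nu n N fv dd k := by
  obtain ⟨l, hcl, hsl, hel⟩ := nu_spec n N fv dd h1n k
  have hzex : ∃ z ∈ l, z ≠ 0 := by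
    by_contra hcon
    push_neg at hcon
    exact hk (by rw [← hsl]; exact List.sum_eq_zero hcon)
  obtain ⟨z, hz, hz0⟩ := hzex
  have hval : 1 ≤ cval n N fv dd z := by
    rcases hcl z hz with hsm | hbg
    · rw [cval, if_pos hsm]
      exact hf1 _ (by omega) hsm
    · rw [cval, if_neg (by omega)]
      exact hd1 _ (by omega)
  have hmem : cval n N fv dd z ∈ l.map (cval n N fv dd) := List.mem_map_of_mem hz
  have := List.single_le_sum (fun x (_ : x ∈ l.map (cval n N fv dd)) => Nat.zero_le x) _ hmem
  rw [← hel]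
  calc 1 ≤ cval n N fv dd z := hval
    _ ≤ ccost n N fv dd l := this

end Anchors
end Combo


section Steps

variable {X : Type*} [MetricSpace X]

def Good (h : IsIntegerUrysohn X) (L : ℕ) (w : ℕ → X) : Prop :=
  1 ≤ L ∧
  (∀ i j, i ≤ j → j ≤ L → D h (w i) (w j) = D h (w 0) (w (j - i))) ∧
  (∀ k, 1 ≤ k → k ≤ L → 1 ≤ D h (w 0) (w k))

namespace Good

variable {h : IsIntegerUrysohn X} {L : ℕ} {w : ℕ → X} (hg : Good h L w)

include hg

lemma hadd : ∀ a b, a + b ≤ L →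
    D h (w 0) (w (a + b)) ≤ D h (w 0) (w a) + D h (w 0) (w b) := by
  intro a b hab
  have h1 := D_triangle h (w 0) (w a) (w (a + b))
  have h2 := hg.2.1 a (a + b) (by omega) hab
  rw [Nat.add_sub_cancel_left] at h2
  omega

lemma hsub : ∀ a b, b ≤ a → a ≤ L →
    D h (w 0) (w (a - b)) ≤ D h (w 0) (w a) + D h (w 0) (w b) := by
  intro a b hba ha
  have h1 := D_triangle h (w 0) (w a) (w (a - b))
  have h2 : D h (w a) (w (a - b)) = D h (w 0) (w b) := by
    rw [D_comm h (w a) (w (a - b))]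
    have h3 := hg.2.1 (a - b) a (by omega) ha
    rw [h3]
    congr 2
    omega
  omega

lemma distinct : ∀ i j, i < j → j ≤ L → w i ≠ w j := by
  intro i j hij hj heq
  have h1 := hg.2.1 i j (by omega) hj
  have h2 := hg.2.2 (j - i) (by omega) (by omega)
  rw [← h1, heq, D_self] at h2
  omega

end Good

lemma absorb (h : IsIntegerUrysohn X) (L : ℕ) (w : ℕ → X) (hg : Good h L w) (x : X)
    (hx : ∀ i, i ≤ L → w i ≠ x) :
    ∃ (L' : ℕ) (w' : ℕ → X), Good h L' w' ∧ L < L' ∧ (∀ i, i ≤ L → w' i = w i) ∧ w' L' = x := by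
  classical
  obtain ⟨h1L, hinv, hpos⟩ := hg
  have hgg : Good h L w := ⟨h1L, hinv, hpos⟩
  set fv : ℕ → ℕ := fun k => D h (w 0) (w k) with hfv
  set dd : ℕ → ℕ := fun i => D h x (w i) with hdd
  set K : ℕ := (Finset.range (L + 1)).sup (fun a => max (fv a) (dd a)) with hK
  set N : ℕ := L * (K + 1) + 2 * L with hN
  have hfK : ∀ a, a ≤ L → fv a ≤ K := by
    intro a ha
    have h9 : max (fv a) (dd a) ≤ K :=
      Finset.le_sup (f := fun a => max (fv a) (dd a)) (Finset.mem_range.2 (by omega : a < L + 1))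
    exact le_trans (le_max_left _ _) h9
  have hdK : ∀ a, a ≤ L → dd a ≤ K := by
    intro a ha
    have h9 : max (fv a) (dd a) ≤ K :=
      Finset.le_sup (f := fun a => max (fv a) (dd a)) (Finset.mem_range.2 (by omega : a < L + 1))
    exact le_trans (le_max_right _ _) h9
  have h2n : 2 * L < N := by
    have h9 : 1 * 1 ≤ L * (K + 1) := Nat.mul_le_mul h1L (by omega)
    omega
  have hNK : L * (K + 1) + L ≤ N := by omega
  have hf1 : ∀ a, 1 ≤ a → a ≤ L → 1 ≤ fv a := fun a h1 h2 => hpos a h1 h2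
  have hd1 : ∀ i, i ≤ L → 1 ≤ dd i := by
    intro i hi
    exact one_le_D h (fun heq => hx i hi heq.symm)
  have hadd : ∀ a b, a + b ≤ L → fv (a + b) ≤ fv a + fv b := hgg.hadd
  have hsub : ∀ a b, b ≤ a → a ≤ L → fv (a - b) ≤ fv a + fv b := hgg.hsub
  have hx1 : ∀ i j, i ≤ j → j ≤ L → fv (j - i) ≤ dd i + dd j := by
    intro i j hij hj
    show D h (w 0) (w (j - i)) ≤ D h x (w i) + D h x (w j)
    rw [← hinv i j hij hj, D_comm h x (w i)]
    exact D_triangle h (w i) x (w j)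
  have hx2 : ∀ i j, i ≤ L → j ≤ L → dd i ≤ dd j + fv (max i j - min i j) := by
    intro i j hi hj
    show D h x (w i) ≤ D h x (w j) + D h (w 0) (w (max i j - min i j))
    rcases le_total i j with hij | hij
    · rw [max_eq_right hij, min_eq_left hij, ← hinv i j hij hj, D_comm h (w i) (w j)]
      exact D_triangle h x (w j) (w i)
    · rw [max_eq_left hij, min_eq_right hij, ← hinv j i hij hi]
      exact D_triangle h x (w j) (w i)
  have hf0 : fv 0 = 0 := D_self h _
  -- the extended gap function
  set nv : ℕ → ℕ := fun k => nu L N fv dd (k : ℤ) with hnv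
  have nv_zero : nv 0 = 0 := nu_zero L N fv dd
  have nv_small : ∀ k, k ≤ L → nv k = fv k := fun k hk =>
    nu_small L N fv dd K h1L h2n hNK hfK hdK hf0 hf1 hadd hsub hx1 hx2 k hk
  have nv_far : ∀ i, i ≤ L → nv (N - i) = dd i := by
    intro i hi
    have hcast : ((N - i : ℕ) : ℤ) = (N : ℤ) - (i : ℤ) := by omega
    show nu L N fv dd ((N - i : ℕ) : ℤ) = dd i
    rw [hcast]
    exact nu_far L N fv dd K h1L h2n hNK hfK hdK hf0 hf1 hadd hsub hx1 hx2 i hi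
  have nv_pos : ∀ k, 1 ≤ k → 1 ≤ nv k := by
    intro k hk
    exact nu_pos L N fv dd h1L h2n hf1 hd1 (k : ℤ) (by omega)
  have nv_add : ∀ a b : ℕ, nv (a + b) ≤ nv a + nv b := by
    intro a b
    have h9 := nu_add L N fv dd h1L (a : ℤ) (b : ℤ)
    show nu L N fv dd ((a + b : ℕ) : ℤ) ≤ nu L N fv dd (a : ℤ) + nu L N fv dd (b : ℤ)
    rw [Nat.cast_add]
    exact h9
  have nv_sub : ∀ a b : ℕ, a ≤ b → nv (b - a) ≤ nv a + nv b := by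
    intro a b hab
    have hcast : ((b - a : ℕ) : ℤ) = (b : ℤ) + (-(a : ℤ)) := by omega
    have h9 := nu_add L N fv dd h1L (b : ℤ) (-(a : ℤ))
    have h8 := nu_neg L N fv dd h1L (a : ℤ)
    show nu L N fv dd ((b - a : ℕ) : ℤ) ≤ nu L N fv dd (a : ℤ) + nu L N fv dd (b : ℤ)
    rw [hcast]
    omega
  -- Build intermediate points one at a time.
  have claim : ∀ t, L + t ≤ N - 1 →
      ∃ v : ℕ → X, (∀ i, i ≤ L → v i = w i) ∧
        (∀ i j, i ≤ j → j ≤ L + t → D h (v i) (v j) = nv (j - i)) ∧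
        (∀ i, i ≤ L + t → D h x (v i) = nv (N - i)) := by
    intro t
    induction t with
    | zero =>
      intro _
      refine ⟨w, fun i _ => rfl, ?_, ?_⟩
      · intro i j hij hj
        rw [nv_small (j - i) (by omega)]
        exact hinv i j hij (by omega)
      · intro i hi
        rw [nv_far i (by omega)]
    | succ t ih =>
      intro hbound
      obtain ⟨v, hpre, hvv, hvx⟩ := ih (by omega)
      set m := L + t + 1 with hm
      have hm1 : 1 ≤ m := by omega
      have hmN : m ≤ N - 1 := hbound
      have hNL : 2 * L < N := h2n
      have hvnex : ∀ i, i < m → v i ≠ x := by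
        intro i hi heq
        have h9 := hvx i (by omega)
        rw [heq, D_self] at h9
        have h8 := nv_pos (N - i) (by omega)
        omega
      have hvdist : ∀ i j, i < j → j < m → v i ≠ v j := by
        intro i j hij hj heq
        have h9 := hvv i j (by omega) (by omega)
        rw [heq, D_self] at h9
        have h8 := nv_pos (j - i) (by omega)
        omega
      set p : ℕ → X := fun i => if i = m then x else v i with hp
      set gv : ℕ → ℕ := fun i => if i = m then nv (N - m) else nv (m - i) with hgv
      have hinj : ∀ i j, i < m + 1 → j < m + 1 → p i = p j → i = j := by
        intro i j hi hj heq
        by_cases hi' : i = m <;> by_cases hj' : j = m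
        · omega
        · exfalso
          simp only [hp, hi', if_pos, if_neg hj'] at heq
          exact hvnex j (by omega) heq.symm
        · exfalso
          simp only [hp, hj', if_pos, if_neg hi'] at heq
          exact hvnex i (by omega) heq
        · simp only [hp, if_neg hi', if_neg hj'] at heq
          rcases lt_trichotomy i j with hlt | hlt | hlt
          · exact absurd heq (hvdist i j hlt (by omega))
          · exact hlt
          · exact absurd heq.symm (hvdist j i hlt (by omega))
      have key1 : ∀ i, i < m → D h x (p i) = nv (N - i) := by
        intro i hi
        simp only [hp, if_neg (by omega : ¬ i = m)]
        exact hvx i (by omega)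
      have hcond : ∀ i j, i < m + 1 → j < m + 1 →
          D h (p i) (p j) ≤ gv i + gv j ∧ gv i ≤ gv j + D h (p i) (p j) := by
        intro i j hi hj
        by_cases hi' : i = m <;> by_cases hj' : j = m
        · subst hi'; subst hj'
          simp only [hp, if_pos, hgv]
          rw [D_self]
          omega
        · subst hi'
          have hpm : p m = x := by simp [hp]
          have hD : D h (p m) (p j) = nv (N - j) := by
            rw [hpm]
            exact key1 j (by omega)
          have e1 : (N - m) + (m - j) = N - j := by omega
          have c1 := nv_add (N - m) (m - j)
          rw [e1] at c1
          have c2 := nv_sub (m - j) (N - j) (by omega)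
          have e2 : N - j - (m - j) = N - m := by omega
          rw [e2] at c2
          rw [hD]
          simp only [hgv, if_pos, if_neg hj']
          omega
        · subst hj'
          have hpm : p m = x := by simp [hp]
          have hD : D h (p i) (p m) = nv (N - i) := by
            rw [hpm, D_comm]
            exact key1 i (by omega)
          have e1 : (N - m) + (m - i) = N - i := by omega
          have c1 := nv_add (N - m) (m - i)
          rw [e1] at c1
          have c2 := nv_sub (m - i) (N - i) (by omega)
          have e2 : N - i - (m - i) = N - m := by omega
          rw [e2] at c2
          have c3 := nv_sub (N - m) (N - i) (by omega)
          have e3 : N - i - (N - m) = m - i := by omega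
          rw [e3] at c3
          rw [hD]
          simp only [hgv, if_pos, if_neg hi']
          omega
        · have hgvi : gv i = nv (m - i) := by simp only [hgv, if_neg hi']
          have hgvj : gv j = nv (m - j) := by simp only [hgv, if_neg hj']
          rcases le_total i j with hij | hij
          · have hD : D h (p i) (p j) = nv (j - i) := by
              simp only [hp, if_neg hi', if_neg hj']
              exact hvv i j hij (by omega)
            have c1 := nv_sub (m - j) (m - i) (by omega)
            have e1 : m - i - (m - j) = j - i := by omega
            rw [e1] at c1
            have c2 := nv_add (j - i) (m - j)
            have e2 : (j - i) + (m - j) = m - i := by omega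
            rw [e2] at c2
            rw [hD, hgvi, hgvj]
            omega
          · have hD : D h (p i) (p j) = nv (i - j) := by
              simp only [hp, if_neg hi', if_neg hj']
              rw [D_comm]
              exact hvv j i hij (by omega)
            have c1 := nv_sub (m - i) (m - j) (by omega)
            have e1 : m - j - (m - i) = i - j := by omega
            rw [e1] at c1
            have c2 := nv_sub (i - j) (m - j) (by omega)
            have e2 : m - j - (i - j) = m - i := by omega
            rw [e2] at c2
            rw [hD, hgvi, hgvj]
            omega
      obtain ⟨z, hz⟩ := exists_point h (m + 1) p hinj gv hcond
      have hzval : ∀ i, i < m → D h z (v i) = nv (m - i) := by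
        intro i hi
        have h9 := hz i (by omega)
        have hpi : p i = v i := by simp [hp]; intro hc; omega
        have hgi : gv i = nv (m - i) := by simp [hgv]; intro hc; omega
        rw [hpi, hgi] at h9
        exact h9
      have hzx : D h z x = nv (N - m) := by
        have h9 := hz m (by omega)
        have hpm : p m = x := by simp [hp]
        have hgm : gv m = nv (N - m) := by simp [hgv]
        rw [hpm, hgm] at h9
        exact h9
      refine ⟨fun i => if i = m then z else v i, ?_, ?_, ?_⟩
      · intro i hi
        show (if i = m then z else v i) = w i
        rw [if_neg (by omega : ¬ i = m)]
        exact hpre i hi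
      · intro i j hij hj
        show D h (if i = m then z else v i) (if j = m then z else v j) = nv (j - i)
        by_cases hj' : j = m
        · subst hj'
          by_cases hi' : i = m
          · subst hi'
            simp only [if_pos]
            rw [D_self, Nat.sub_self, nv_zero]
          · rw [if_neg hi', if_pos rfl, D_comm]
            exact hzval i (by omega)
        · rw [if_neg (by omega : ¬ i = m), if_neg hj']
          exact hvv i j hij (by omega)
      · intro i hi
        show D h x (if i = m then z else v i) = nv (N - i)
        by_cases hi' : i = m
        · subst hi'
          rw [if_pos rfl, D_comm]
          exact hzx
        · rw [if_neg hi']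
          exact hvx i (by omega)
  -- conclude
  have hL1N : L + (N - 1 - L) ≤ N - 1 := by omega
  obtain ⟨v, hpre, hvv, hvx⟩ := claim (N - 1 - L) hL1N
  have hvtop : L + (N - 1 - L) = N - 1 := by omega
  rw [hvtop] at hvv hvx
  have hC : ∀ i j, i ≤ j → j ≤ N →
      D h (if i = N then x else v i) (if j = N then x else v j) = nv (j - i) := by
    intro i j hij hj
    by_cases hj' : j = N
    · subst hj'
      by_cases hi' : i = N
      · subst hi'
        simp only [if_pos]
        rw [D_self, Nat.sub_self, nv_zero]
      · rw [if_neg hi', if_pos rfl, D_comm]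
        exact hvx i (by omega)
    · rw [if_neg (by omega : ¬ i = N), if_neg hj']
      exact hvv i j hij (by omega)
  refine ⟨N, fun i => if i = N then x else v i, ?_, by omega, ?_, by simp⟩
  · refine ⟨by omega, ?_, ?_⟩
    · intro i j hij hj
      show D h (if i = N then x else v i) (if j = N then x else v j) =
        D h (if (0 : ℕ) = N then x else v 0) (if j - i = N then x else v (j - i))
      rw [hC i j hij hj]
      have h9 := hC 0 (j - i) (by omega) (by omega)
      rw [Nat.sub_zero] at h9
      exact h9.symm
    · intro k hk1 hk2
      show 1 ≤ D h (if (0 : ℕ) = N then x else v 0) (if k = N then x else v k)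
      have h9 := hC 0 k (by omega) hk2
      rw [Nat.sub_zero] at h9
      rw [h9]
      exact nv_pos k hk1
  · intro i hi
    show (if i = N then x else v i) = w i
    rw [if_neg (by omega : ¬ i = N)]
    exact hpre i hi


lemma cands (h : IsIntegerUrysohn X) (L : ℕ) (w : ℕ → X) (hg : Good h L w) :
    ∃ cand : ℕ, 1 ≤ cand ∧
      (∀ j, 1 ≤ j → j ≤ L → cand ≤ D h (w 0) (w j) + D h (w 0) (w (L + 1 - j))) ∧
      (∀ j, 1 ≤ j → j ≤ L → D h (w 0) (w j) ≤ cand + D h (w 0) (w (L + 1 - j)) ∧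
        D h (w 0) (w (L + 1 - j)) ≤ cand + D h (w 0) (w j)) := by
  classical
  obtain ⟨h1L, hinv, hpos⟩ := hg
  have hgg : Good h L w := ⟨h1L, hinv, hpos⟩
  set fv : ℕ → ℕ := fun k => D h (w 0) (w k) with hfv
  show ∃ cand : ℕ, 1 ≤ cand ∧
      (∀ j, 1 ≤ j → j ≤ L → cand ≤ fv j + fv (L + 1 - j)) ∧
      (∀ j, 1 ≤ j → j ≤ L → fv j ≤ cand + fv (L + 1 - j) ∧ fv (L + 1 - j) ≤ cand + fv j)
  set cand : ℕ :=
    max 1 ((Finset.Icc 1 L).sup fun j => max (fv j - fv (L + 1 - j)) (fv (L + 1 - j) - fv j))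
    with hcand
  have hpos' : ∀ k, 1 ≤ k → k ≤ L → 1 ≤ fv k := hpos
  have hkey : ∀ j j', 1 ≤ j → j ≤ L → 1 ≤ j' → j' ≤ L →
      fv j' ≤ fv j + (fv (L + 1 - j) + fv (L + 1 - j')) := by
    intro j j' h1 h2 h1' h2'
    rcases le_total j j' with hjj | hjj
    · have t1 : fv (j + (j' - j)) ≤ fv j + fv (j' - j) := hgg.hadd j (j' - j) (by omega)
      rw [show j + (j' - j) = j' from by omega] at t1
      have t2 : fv ((L + 1 - j) - (L + 1 - j')) ≤ fv (L + 1 - j) + fv (L + 1 - j') :=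
        hgg.hsub (L + 1 - j) (L + 1 - j') (by omega) (by omega)
      rw [show (L + 1 - j) - (L + 1 - j') = j' - j from by omega] at t2
      omega
    · have t1 : fv (j - (j - j')) ≤ fv j + fv (j - j') := hgg.hsub j (j - j') (by omega) (by omega)
      rw [show j - (j - j') = j' from by omega] at t1
      have t2 : fv ((L + 1 - j') - (L + 1 - j)) ≤ fv (L + 1 - j') + fv (L + 1 - j) :=
        hgg.hsub (L + 1 - j') (L + 1 - j) (by omega) (by omega)
      rw [show (L + 1 - j') - (L + 1 - j) = j - j' from by omega] at t2
      omega
  refine ⟨cand, le_max_left _ _, ?_, ?_⟩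
  · intro j h1 h2
    rw [hcand]
    apply max_le
    · have h9 : 1 ≤ fv j := hpos' j h1 h2
      omega
    · apply Finset.sup_le
      intro j' hj'
      obtain ⟨h1', h2'⟩ := Finset.mem_Icc.1 hj'
      have k1 := hkey j j' h1 h2 h1' h2'
      have k2 := hkey j (L + 1 - j') h1 h2 (by omega) (by omega)
      rw [show L + 1 - (L + 1 - j') = j' from by omega] at k2
      apply max_le <;> omega
  · intro j h1 h2
    have h9 : max (fv j - fv (L + 1 - j)) (fv (L + 1 - j) - fv j) ≤ cand := by
      rw [hcand]
      exact le_trans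
        (Finset.le_sup (f := fun j => max (fv j - fv (L + 1 - j)) (fv (L + 1 - j) - fv j))
          (Finset.mem_Icc.2 ⟨h1, h2⟩)) (le_max_right _ _)
    have h9a : fv j - fv (L + 1 - j) ≤ cand := le_trans (le_max_left _ _) h9
    have h9b : fv (L + 1 - j) - fv j ≤ cand := le_trans (le_max_right _ _) h9
    constructor <;> omega

lemma extend_left (h : IsIntegerUrysohn X) (L : ℕ) (w : ℕ → X) (hg : Good h L w) :
    ∃ w' : ℕ → X, Good h (L + 1) w' ∧ ∀ i, i ≤ L → w' (i + 1) = w i := by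
  classical
  obtain ⟨cand, hcand1, hcand_le, hcand_ge⟩ := cands h L w hg
  obtain ⟨h1L, hinv, hpos⟩ := hg
  have hgg : Good h L w := ⟨h1L, hinv, hpos⟩
  set fv : ℕ → ℕ := fun k => D h (w 0) (w k) with hfv
  have hcle : ∀ j, 1 ≤ j → j ≤ L → cand ≤ fv j + fv (L + 1 - j) := hcand_le
  have hcge : ∀ j, 1 ≤ j → j ≤ L →
      fv j ≤ cand + fv (L + 1 - j) ∧ fv (L + 1 - j) ≤ cand + fv j := hcand_ge
  set gv : ℕ → ℕ := fun i => if i = L then cand else fv (i + 1) with hgv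
  have hinj : ∀ i j, i < L + 1 → j < L + 1 → w i = w j → i = j := by
    intro i j hi hj heq
    by_contra hne
    rcases Nat.lt_or_ge i j with hlt | hge
    · exact hgg.distinct i j hlt (by omega) heq
    · exact hgg.distinct j i (by omega) (by omega) heq.symm
  have main : ∀ i j, i < j → j < L + 1 →
      D h (w i) (w j) ≤ gv i + gv j ∧ gv i ≤ gv j + D h (w i) (w j) ∧
        gv j ≤ gv i + D h (w i) (w j) := by
    intro i j hij hj
    have hD : D h (w i) (w j) = fv (j - i) := hinv i j (by omega) (by omega)
    have hgvi : gv i = fv (i + 1) := if_neg (by omega)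
    by_cases hj' : j = L
    · have hgvj : gv j = cand := by rw [hj']; exact if_pos rfl
      have c1 := hcle (i + 1) (by omega) (by omega)
      have c2 := hcge (i + 1) (by omega) (by omega)
      rw [show L + 1 - (i + 1) = L - i from by omega] at c1 c2
      rw [hD, hgvi, hgvj, show j - i = L - i from by omega]
      omega
    · have hgvj : gv j = fv (j + 1) := if_neg hj'
      have t1 : fv ((j + 1) - (j - i)) ≤ fv (j + 1) + fv (j - i) :=
        hgg.hsub (j + 1) (j - i) (by omega) (by omega)
      rw [show (j + 1) - (j - i) = i + 1 from by omega] at t1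
      have t2 : fv ((i + 1) + (j - i)) ≤ fv (i + 1) + fv (j - i) :=
        hgg.hadd (i + 1) (j - i) (by omega)
      rw [show (i + 1) + (j - i) = j + 1 from by omega] at t2
      have t3 : fv ((j + 1) - (i + 1)) ≤ fv (j + 1) + fv (i + 1) :=
        hgg.hsub (j + 1) (i + 1) (by omega) (by omega)
      rw [show (j + 1) - (i + 1) = j - i from by omega] at t3
      rw [hD, hgvi, hgvj]
      omega
  have hcond : ∀ i j, i < L + 1 → j < L + 1 →
      D h (w i) (w j) ≤ gv i + gv j ∧ gv i ≤ gv j + D h (w i) (w j) := by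
    intro i j hi hj
    rcases lt_trichotomy i j with hlt | rfl | hlt
    · obtain ⟨m1, m2, m3⟩ := main i j hlt hj
      exact ⟨m1, m2⟩
    · rw [D_self]
      exact ⟨Nat.zero_le _, by omega⟩
    · obtain ⟨m1, m2, m3⟩ := main j i hlt hi
      rw [D_comm h (w j) (w i)] at m1 m2 m3
      exact ⟨by omega, by omega⟩
  obtain ⟨z, hz⟩ := exists_point h (L + 1) w hinj gv hcond
  refine ⟨fun i => if i = 0 then z else w (i - 1), ⟨by omega, ?_, ?_⟩, ?_⟩
  · intro i j hij hj
    show D h (if i = 0 then z else w (i - 1)) (if j = 0 then z else w (j - 1)) =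
      D h (if (0 : ℕ) = 0 then z else w (0 - 1)) (if j - i = 0 then z else w (j - i - 1))
    by_cases hi0 : i = 0
    · subst hi0
      rw [Nat.sub_zero]
    · rcases eq_or_ne i j with rfl | hne
      · rw [Nat.sub_self, if_pos rfl, D_self, D_self]
      · have hij' : i < j := by omega
        rw [if_neg hi0, if_neg (by omega : ¬ j = 0), if_pos rfl,
          if_neg (by omega : ¬ j - i = 0)]
        have e1 : D h (w (i - 1)) (w (j - 1)) = fv (j - i) := by
          have e0 := hinv (i - 1) (j - 1) (by omega) (by omega)
          rw [show j - 1 - (i - 1) = j - i from by omega] at e0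
          exact e0
        have e2 : D h z (w (j - i - 1)) = gv (j - i - 1) := hz (j - i - 1) (by omega)
        have e3 : gv (j - i - 1) = fv (j - i) := by
          have e4 : gv (j - i - 1) = fv (j - i - 1 + 1) := if_neg (by omega)
          rw [e4, show j - i - 1 + 1 = j - i from by omega]
        rw [e1, e2, e3]
  · intro k hk1 hk2
    show 1 ≤ D h (if (0 : ℕ) = 0 then z else w (0 - 1)) (if k = 0 then z else w (k - 1))
    rw [if_pos rfl, if_neg (by omega : ¬ k = 0)]
    have e2 : D h z (w (k - 1)) = gv (k - 1) := hz (k - 1) (by omega)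
    rw [e2]
    by_cases hkL : k - 1 = L
    · have e3 : gv (k - 1) = cand := by rw [hkL]; exact if_pos rfl
      rw [e3]; exact hcand1
    · have e3 : gv (k - 1) = fv (k - 1 + 1) := if_neg hkL
      rw [e3]
      exact hpos (k - 1 + 1) (by omega) (by omega)
  · intro i hi
    show (if i + 1 = 0 then z else w (i + 1 - 1)) = w i
    rw [if_neg (by omega : ¬ i + 1 = 0), show i + 1 - 1 = i from by omega]

lemma extend_right (h : IsIntegerUrysohn X) (L : ℕ) (w : ℕ → X) (hg : Good h L w) :
    ∃ w' : ℕ → X, Good h (L + 1) w' ∧ ∀ i, i ≤ L → w' i = w i := by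
  classical
  obtain ⟨cand, hcand1, hcand_le, hcand_ge⟩ := cands h L w hg
  obtain ⟨h1L, hinv, hpos⟩ := hg
  have hgg : Good h L w := ⟨h1L, hinv, hpos⟩
  set fv : ℕ → ℕ := fun k => D h (w 0) (w k) with hfv
  have hcle : ∀ j, 1 ≤ j → j ≤ L → cand ≤ fv j + fv (L + 1 - j) := hcand_le
  have hcge : ∀ j, 1 ≤ j → j ≤ L →
      fv j ≤ cand + fv (L + 1 - j) ∧ fv (L + 1 - j) ≤ cand + fv j := hcand_ge
  set gv : ℕ → ℕ := fun i => if i = 0 then cand else fv (L + 1 - i) with hgv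
  have hgv0 : gv 0 = cand := if_pos rfl
  have hgvn : ∀ i, ¬ i = 0 → gv i = fv (L + 1 - i) := fun i hi => if_neg hi
  have hinj : ∀ i j, i < L + 1 → j < L + 1 → w i = w j → i = j := by
    intro i j hi hj heq
    by_contra hne
    rcases Nat.lt_or_ge i j with hlt | hge
    · exact hgg.distinct i j hlt (by omega) heq
    · exact hgg.distinct j i (by omega) (by omega) heq.symm
  have main : ∀ i j, i < j → j < L + 1 →
      D h (w i) (w j) ≤ gv i + gv j ∧ gv i ≤ gv j + D h (w i) (w j) ∧
        gv j ≤ gv i + D h (w i) (w j) := by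
    intro i j hij hj
    have hD : D h (w i) (w j) = fv (j - i) := hinv i j (by omega) (by omega)
    have hgvj : gv j = fv (L + 1 - j) := hgvn j (by omega)
    by_cases hi' : i = 0
    · have c1 := hcle j (by omega) (by omega)
      have c2 := hcge j (by omega) (by omega)
      rw [hD, hi', hgv0, hgvj, Nat.sub_zero]
      omega
    · have hgvi : gv i = fv (L + 1 - i) := hgvn i hi'
      have t1 : fv ((L + 1 - i) - (L + 1 - j)) ≤ fv (L + 1 - i) + fv (L + 1 - j) :=
        hgg.hsub (L + 1 - i) (L + 1 - j) (by omega) (by omega)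
      rw [show (L + 1 - i) - (L + 1 - j) = j - i from by omega] at t1
      have t2 : fv ((L + 1 - j) + (j - i)) ≤ fv (L + 1 - j) + fv (j - i) :=
        hgg.hadd (L + 1 - j) (j - i) (by omega)
      rw [show (L + 1 - j) + (j - i) = L + 1 - i from by omega] at t2
      have t3 : fv ((L + 1 - i) - (j - i)) ≤ fv (L + 1 - i) + fv (j - i) :=
        hgg.hsub (L + 1 - i) (j - i) (by omega) (by omega)
      rw [show (L + 1 - i) - (j - i) = L + 1 - j from by omega] at t3
      rw [hD, hgvi, hgvj]
      omega
  have hcond : ∀ i j, i < L + 1 → j < L + 1 →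
      D h (w i) (w j) ≤ gv i + gv j ∧ gv i ≤ gv j + D h (w i) (w j) := by
    intro i j hi hj
    rcases lt_trichotomy i j with hlt | rfl | hlt
    · obtain ⟨m1, m2, m3⟩ := main i j hlt hj
      exact ⟨m1, m2⟩
    · rw [D_self]
      exact ⟨Nat.zero_le _, by omega⟩
    · obtain ⟨m1, m2, m3⟩ := main j i hlt hi
      rw [D_comm h (w j) (w i)] at m1 m2 m3
      exact ⟨by omega, by omega⟩
  obtain ⟨z, hz⟩ := exists_point h (L + 1) w hinj gv hcond
  refine ⟨fun i => if i = L + 1 then z else w i, ⟨by omega, ?_, ?_⟩, ?_⟩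
  · intro i j hij hj
    show D h (if i = L + 1 then z else w i) (if j = L + 1 then z else w j) =
      D h (if (0 : ℕ) = L + 1 then z else w 0) (if j - i = L + 1 then z else w (j - i))
    rw [if_neg (by omega : ¬ (0 : ℕ) = L + 1)]
    by_cases hj' : j = L + 1
    · subst hj'
      by_cases hi' : i = L + 1
      · subst hi'
        rw [if_pos rfl, Nat.sub_self, if_neg (by omega : ¬ (0 : ℕ) = L + 1),
          D_self h z, D_self h (w 0)]
      · by_cases hi0 : i = 0
        · subst hi0
          rw [Nat.sub_zero, if_neg (by omega : ¬ (0 : ℕ) = L + 1)]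
        · rw [if_pos rfl, if_neg hi', if_neg (by omega : ¬ L + 1 - i = L + 1)]
          rw [D_comm h (w i) z, hz i (by omega), hgvn i hi0]
    · rw [if_neg (by omega : ¬ i = L + 1), if_neg hj',
        if_neg (by omega : ¬ j - i = L + 1)]
      exact hinv i j hij (by omega)
  · intro k hk1 hk2
    show 1 ≤ D h (if (0 : ℕ) = L + 1 then z else w 0) (if k = L + 1 then z else w k)
    rw [if_neg (by omega : ¬ (0 : ℕ) = L + 1)]
    by_cases hk' : k = L + 1
    · rw [if_pos hk', D_comm h (w 0) z, hz 0 (by omega), hgv0]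
      exact hcand1
    · rw [if_neg hk']
      exact hpos k hk1 (by omega)
  · intro i hi
    show (if i = L + 1 then z else w i) = w i
    rw [if_neg (by omega : ¬ i = L + 1)]

lemma stage (h : IsIntegerUrysohn X) (L : ℕ) (w : ℕ → X) (hg : Good h L w) (x : X) :
    ∃ (L' : ℕ) (w' : ℕ → X), Good h L' w' ∧ L + 2 ≤ L' ∧
      (∀ i, i ≤ L → w' (i + 1) = w i) ∧ ∃ i, i ≤ L' ∧ w' i = x := by
  obtain ⟨w1, hg1, hsh⟩ := extend_left h L w hg
  obtain ⟨w2, hg2, hpr⟩ := extend_right h (L + 1) w1 hg1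
  by_cases hmem : ∃ i, i ≤ L + 2 ∧ w2 i = x
  · refine ⟨L + 2, w2, hg2, by omega, ?_, hmem⟩
    intro i hi
    rw [hpr (i + 1) (by omega), hsh i hi]
  · push_neg at hmem
    have hx : ∀ i, i ≤ L + 2 → w2 i ≠ x := fun i hi => hmem i hi
    obtain ⟨L3, w3, hg3, hL3, hpr3, htop⟩ := absorb h (L + 2) w2 hg2 x hx
    refine ⟨L3, w3, hg3, by omega, ?_, ⟨L3, le_refl _, htop⟩⟩
    intro i hi
    rw [hpr3 (i + 1) (by omega), hpr (i + 1) (by omega), hsh i hi]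

lemma init (h : IsIntegerUrysohn X) : ∃ w : ℕ → X, Good h 1 w := by
  classical
  obtain ⟨x0⟩ := h.1
  obtain ⟨z, hz⟩ := exists_point h 1 (fun _ => x0) (by intro i j hi hj _; omega)
    (fun _ => 1) (by
      intro i j hi hj
      rw [D_self]
      exact ⟨Nat.zero_le _, by simp⟩)
  have hz0 : D h z x0 = 1 := hz 0 (by omega)
  refine ⟨fun i => if i = 0 then x0 else z, by omega, ?_, ?_⟩
  · intro i j hij hj
    show D h (if i = 0 then x0 else z) (if j = 0 then x0 else z) =
      D h (if (0 : ℕ) = 0 then x0 else z) (if j - i = 0 then x0 else z)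
    rw [if_pos rfl]
    by_cases hi0 : i = 0
    · subst hi0
      rw [Nat.sub_zero, if_pos rfl]
    · have hi1 : i = 1 := by omega
      have hj1 : j = 1 := by omega
      subst hi1
      subst hj1
      rw [if_neg one_ne_zero, Nat.sub_self, if_pos rfl, D_self, D_self]
  · intro k hk1 hk2
    have hk : k = 1 := by omega
    subst hk
    show 1 ≤ D h (if (0 : ℕ) = 0 then x0 else z) (if (1 : ℕ) = 0 then x0 else z)
    rw [if_pos rfl, if_neg one_ne_zero, D_comm]
    omega

open Classical in
noncomputable def nxt (h : IsIntegerUrysohn X) (s : ℕ × (ℕ → X)) (x : X) : ℕ × (ℕ → X) :=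
  if hgs : Good h s.1 s.2 then
    ⟨(stage h s.1 s.2 hgs x).choose, (stage h s.1 s.2 hgs x).choose_spec.choose⟩
  else s

open Classical in
lemma nxt_spec (h : IsIntegerUrysohn X) (s : ℕ × (ℕ → X)) (x : X) (hgs : Good h s.1 s.2) :
    Good h (nxt h s x).1 (nxt h s x).2 ∧ s.1 + 2 ≤ (nxt h s x).1 ∧
      (∀ i, i ≤ s.1 → (nxt h s x).2 (i + 1) = s.2 i) ∧
      ∃ i, i ≤ (nxt h s x).1 ∧ (nxt h s x).2 i = x := by
  have hn : nxt h s x = ⟨(stage h s.1 s.2 hgs x).choose,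
      (stage h s.1 s.2 hgs x).choose_spec.choose⟩ := by
    rw [nxt, dif_pos hgs]
  rw [hn]
  exact (stage h s.1 s.2 hgs x).choose_spec.choose_spec

noncomputable def states (h : IsIntegerUrysohn X) (w0 u : ℕ → X) : ℕ → ℕ × (ℕ → X)
  | 0 => (1, w0)
  | t + 1 => nxt h (states h w0 u t) (u t)

section Assemble

variable (h : IsIntegerUrysohn X) (w0 u : ℕ → X) (hw0 : Good h 1 w0)

include hw0

lemma good_states : ∀ t, Good h (states h w0 u t).1 (states h w0 u t).2 := by
  intro t
  induction t with
  | zero => exact hw0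
  | succ t ih =>
    rw [states]
    exact (nxt_spec h _ (u t) ih).1

lemma states_step2 : ∀ t, (states h w0 u t).1 + 2 ≤ (states h w0 u (t + 1)).1 := by
  intro t
  have h9 := (nxt_spec h _ (u t) (good_states h w0 u hw0 t)).2.1
  rw [states]
  exact h9

lemma states_shift : ∀ t i, i ≤ (states h w0 u t).1 →
    (states h w0 u (t + 1)).2 (i + 1) = (states h w0 u t).2 i := by
  intro t i hi
  have h9 := (nxt_spec h _ (u t) (good_states h w0 u hw0 t)).2.2.1 i hi
  rw [states]
  exact h9

lemma states_hit : ∀ t, ∃ i, i ≤ (states h w0 u (t + 1)).1 ∧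
    (states h w0 u (t + 1)).2 i = u t := by
  intro t
  have h9 := (nxt_spec h _ (u t) (good_states h w0 u hw0 t)).2.2.2
  rw [states]
  exact h9

lemma states_mono : ∀ s k, (states h w0 u s).1 + 2 * k ≤ (states h w0 u (s + k)).1 := by
  intro s k
  induction k with
  | zero => simp
  | succ k ih =>
    have h9 := states_step2 h w0 u hw0 (s + k)
    have he : s + (k + 1) = (s + k) + 1 := rfl
    rw [he]
    omega

lemma states_lb : ∀ t, 1 + 2 * t ≤ (states h w0 u t).1 := by
  intro t
  have h9 := states_mono h w0 u hw0 0 t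
  have h0 : (states h w0 u 0).1 = 1 := rfl
  rw [h0] at h9
  simpa using h9

lemma states_coh : ∀ s k i, i ≤ (states h w0 u s).1 →
    (states h w0 u (s + k)).2 (i + k) = (states h w0 u s).2 i := by
  intro s k
  induction k with
  | zero => intro i hi; rfl
  | succ k ih =>
    intro i hi
    have h1 : i + k ≤ (states h w0 u (s + k)).1 := by
      have := states_mono h w0 u hw0 s k
      omega
    have h2 := states_shift h w0 u hw0 (s + k) (i + k) h1
    have he : s + (k + 1) = (s + k) + 1 := rfl
    have he2 : i + (k + 1) = (i + k) + 1 := rfl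
    rw [he, he2, h2]
    exact ih i hi

end Assemble

noncomputable def EE (h : IsIntegerUrysohn X) (w0 u : ℕ → X) : ℤ → X :=
  fun z => (states h w0 u z.natAbs).2 (z + z.natAbs).toNat

section Assemble2

variable (h : IsIntegerUrysohn X) (w0 u : ℕ → X) (hw0 : Good h 1 w0)

include hw0

lemma EE_eval : ∀ (t : ℕ) (idx : ℕ), idx ≤ (states h w0 u t).1 →
    EE h w0 u ((idx : ℤ) - t) = (states h w0 u t).2 idx := by
  intro t idx hidx
  have hz : EE h w0 u ((idx : ℤ) - t) =
      (states h w0 u ((idx : ℤ) - t).natAbs).2 (((idx : ℤ) - t) + ((idx : ℤ) - t).natAbs).toNat :=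
    rfl
  set z : ℤ := (idx : ℤ) - t with hzdef
  set T : ℕ := z.natAbs with hT
  have hlbT := states_lb h w0 u hw0 T
  have hzT : (z + T).toNat ≤ (states h w0 u T).1 := by omega
  set s : ℕ := max t T with hsmax
  have e1 := states_coh h w0 u hw0 T (s - T) ((z + T).toNat) hzT
  rw [show T + (s - T) = s from by omega] at e1
  have e2 := states_coh h w0 u hw0 t (s - t) idx hidx
  rw [show t + (s - t) = s from by omega] at e2
  have e3 : (z + T).toNat + (s - T) = idx + (s - t) := by omega
  rw [hz, ← e2, ← e3, e1]

lemma EE_gap : ∀ (p q p' q' : ℤ), p ≤ q → p' ≤ q' → q - p = q' - p' →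
    D h (EE h w0 u p) (EE h w0 u q) = D h (EE h w0 u p') (EE h w0 u q') := by
  intro p q p' q' hpq hpq' heq
  obtain ⟨t, htp, htq, htp', htq'⟩ :
      ∃ t : ℕ, p.natAbs ≤ t ∧ q.natAbs ≤ t ∧ p'.natAbs ≤ t ∧ q'.natAbs ≤ t :=
    ⟨p.natAbs + q.natAbs + p'.natAbs + q'.natAbs, by omega, by omega, by omega, by omega⟩
  have hlb := states_lb h w0 u hw0 t
  have hip : ((p + t).toNat : ℤ) - t = p := by omega
  have hiq : ((q + t).toNat : ℤ) - t = q := by omega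
  have hip' : ((p' + t).toNat : ℤ) - t = p' := by omega
  have hiq' : ((q' + t).toNat : ℤ) - t = q' := by omega
  have hbp : (p + t).toNat ≤ (states h w0 u t).1 := by omega
  have hbq : (q + t).toNat ≤ (states h w0 u t).1 := by omega
  have hbp' : (p' + t).toNat ≤ (states h w0 u t).1 := by omega
  have hbq' : (q' + t).toNat ≤ (states h w0 u t).1 := by omega
  have hep := EE_eval h w0 u hw0 t (p + t).toNat hbp
  rw [hip] at hep
  have heq1 := EE_eval h w0 u hw0 t (q + t).toNat hbq
  rw [hiq] at heq1
  have hep' := EE_eval h w0 u hw0 t (p' + t).toNat hbp'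
  rw [hip'] at hep'
  have heq2 := EE_eval h w0 u hw0 t (q' + t).toNat hbq'
  rw [hiq'] at heq2
  rw [hep, heq1, hep', heq2]
  have g1 := (good_states h w0 u hw0 t).2.1 (p + t).toNat (q + t).toNat (by omega) hbq
  have g2 := (good_states h w0 u hw0 t).2.1 (p' + t).toNat (q' + t).toNat (by omega) hbq'
  rw [g1, g2,
    show (q + t).toNat - (p + t).toNat = (q' + t).toNat - (p' + t).toNat from by omega]

lemma EE_pos : ∀ p q : ℤ, p < q → 1 ≤ D h (EE h w0 u p) (EE h w0 u q) := by
  intro p q hpq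
  obtain ⟨t, htp, htq⟩ : ∃ t : ℕ, p.natAbs ≤ t ∧ q.natAbs ≤ t :=
    ⟨p.natAbs + q.natAbs, by omega, by omega⟩
  have hlb := states_lb h w0 u hw0 t
  have hip : ((p + t).toNat : ℤ) - t = p := by omega
  have hiq : ((q + t).toNat : ℤ) - t = q := by omega
  have hbp : (p + t).toNat ≤ (states h w0 u t).1 := by omega
  have hbq : (q + t).toNat ≤ (states h w0 u t).1 := by omega
  have hep := EE_eval h w0 u hw0 t (p + t).toNat hbp
  rw [hip] at hep
  have heq1 := EE_eval h w0 u hw0 t (q + t).toNat hbq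
  rw [hiq] at heq1
  rw [hep, heq1]
  have g1 := (good_states h w0 u hw0 t).2.1 (p + t).toNat (q + t).toNat (by omega) hbq
  rw [g1]
  exact (good_states h w0 u hw0 t).2.2 _ (by omega) (by omega)

lemma EE_inj : Function.Injective (EE h w0 u) := by
  intro p q heq
  by_contra hne
  rcases lt_trichotomy p q with hlt | hlt | hlt
  · have h9 := EE_pos h w0 u hw0 p q hlt
    rw [heq, D_self] at h9
    omega
  · exact hne hlt
  · have h9 := EE_pos h w0 u hw0 q p hlt
    rw [heq, D_self] at h9
    omega

lemma EE_surj (hu : Function.Surjective u) : Function.Surjective (EE h w0 u) := by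
  intro x
  obtain ⟨t, ht⟩ := hu x
  obtain ⟨i, hi, hwi⟩ := states_hit h w0 u hw0 t
  refine ⟨(i : ℤ) - ((t + 1 : ℕ) : ℤ), ?_⟩
  rw [EE_eval h w0 u hw0 (t + 1) i hi, hwi, ht]

lemma EE_dist : ∀ p q : ℤ, dist (EE h w0 u p) (EE h w0 u q) =
    dist (EE h w0 u (p + 1)) (EE h w0 u (q + 1)) := by
  intro p q
  rcases le_total p q with hpq | hpq
  · rw [hD h (EE h w0 u p) (EE h w0 u q), hD h (EE h w0 u (p + 1)) (EE h w0 u (q + 1)),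
      EE_gap h w0 u hw0 p q (p + 1) (q + 1) hpq (by omega) (by ring)]
  · rw [dist_comm (EE h w0 u p) (EE h w0 u q),
      dist_comm (EE h w0 u (p + 1)) (EE h w0 u (q + 1)),
      hD h (EE h w0 u q) (EE h w0 u p), hD h (EE h w0 u (q + 1)) (EE h w0 u (p + 1)),
      EE_gap h w0 u hw0 q p (q + 1) (p + 1) hpq (by omega) (by ring)]

end Assemble2

end Steps
end IUAux


theorem stmt_6 (X : Type*) [MetricSpace X] (hX : IsIntegerUrysohn X) :
    ∃ g : X ≃ᵢ X, ∀ x y : X, ∃ n : ℤ, (g ^ n) x = y := by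
  classical
  have hNe : Nonempty X := hX.1
  have hCt : Countable X := hX.2.1
  obtain ⟨u, hu⟩ := exists_surjective_nat X
  obtain ⟨w0, hw0⟩ := IUAux.init hX
  set E : ℤ → X := IUAux.EE hX w0 u with hEdef
  have hinjE : Function.Injective E := IUAux.EE_inj hX w0 u hw0
  have hsurjE : Function.Surjective E := IUAux.EE_surj hX w0 u hw0 hu
  have hdistE : ∀ p q : ℤ, dist (E p) (E q) = dist (E (p + 1)) (E (q + 1)) :=
    IUAux.EE_dist hX w0 u hw0
  set e : ℤ ≃ X := Equiv.ofBijective E ⟨hinjE, hsurjE⟩ with he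
  have hxE : ∀ x : X, E (e.symm x) = x := fun x => e.apply_symm_apply x
  have hsymmE : ∀ z : ℤ, e.symm (E z) = z := fun z => e.symm_apply_apply z
  set g : X ≃ᵢ X := ⟨e.symm.trans ((Equiv.addRight (1 : ℤ)).trans e), by
    apply Isometry.of_dist_eq
    intro a b
    show dist (E (e.symm a + 1)) (E (e.symm b + 1)) = dist a b
    rw [← hdistE (e.symm a) (e.symm b), hxE a, hxE b]⟩ with hg
  have hgE : ∀ z : ℤ, g (E z) = E (z + 1) := by
    intro z
    show E (e.symm (E z) + 1) = E (z + 1)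
    rw [hsymmE z]
  have hpow : ∀ (n : ℤ) (z : ℤ), (g ^ n) (E z) = E (z + n) := by
    intro n
    induction n using Int.induction_on with
    | zero => intro z; simp
    | succ n ih =>
      intro z
      have h1 : (g ^ ((n : ℤ) + 1)) (E z) = (g ^ (n : ℤ)) (g (E z)) := by
        rw [zpow_add_one]; rfl
      rw [h1, hgE z, ih (z + 1), show z + 1 + (n : ℤ) = z + ((n : ℤ) + 1) from by ring]
    | pred n ih =>
      intro z
      have h1 : (g ^ (-(n : ℤ) - 1)) (E z) = (g ^ (-(n : ℤ))) (g⁻¹ (E z)) := by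
        rw [zpow_sub_one]; rfl
      have h2 : g⁻¹ (E z) = E (z - 1) := by
        have h3 := hgE (z - 1)
        rw [sub_add_cancel] at h3
        rw [← h3]
        show g.symm (g (E (z - 1))) = E (z - 1)
        exact g.symm_apply_apply _
      rw [h1, h2, ih (z - 1), show z - 1 + -(n : ℤ) = z + (-(n : ℤ) - 1) from by ring]
  refine ⟨g, fun x y => ?_⟩
  obtain ⟨p, rfl⟩ := hsurjE x
  obtain ⟨q, rfl⟩ := hsurjE y
  exact ⟨q - p, by rw [hpow (q - p) p, show p + (q - p) = q from by ring]⟩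
end

section
/- There exists a function f : ℕ → ℚ with f(0) = 0, f(i) > 0 for all i ≥ 1, and |f(i) − f(j)| ≤ f(i+j) ≤ f(i) + f(j) for all i, j ∈ ℕ (a Toeplitz distance function), which is universal in the following sense: for every n ≥ 1 and every function h : {1, …, n} → ℚ with h(i) > 0 for all i and satisfying |h(i) − h(i+k)| ≤ f(k) ≤ h(i) + h(i+k) whenever 1 ≤ i < i+k ≤ n, there exists N ∈ ℕ such that f(N + i) = h(i) for all i = 1, …, n. -/
namespace Stmt7

/-- cost of a list of generators -/
def cost (w : ℤ → ℚ) (l : List ℤ) : ℚ := (l.map w).sum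

lemma cost_nil (w : ℤ → ℚ) : cost w [] = 0 := rfl
lemma cost_cons (w : ℤ → ℚ) (a : ℤ) (l : List ℤ) : cost w (a :: l) = w a + cost w l := by
  simp [cost]
lemma cost_append (w : ℤ → ℚ) (l₁ l₂ : List ℤ) :
    cost w (l₁ ++ l₂) = cost w l₁ + cost w l₂ := by simp [cost]
lemma cost_perm (w : ℤ → ℚ) {l₁ l₂ : List ℤ} (h : l₁.Perm l₂) : cost w l₁ = cost w l₂ :=
  (h.map w).sum_eq

lemma list_sum_nonpos (l : List ℤ) (h : ∀ g ∈ l, g ≤ 0) : l.sum ≤ 0 := by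
  induction l with
  | nil => simp
  | cons a t ih =>
    simp only [List.sum_cons]
    have := h a (by simp)
    have := ih (fun g hg => h g (by simp [hg]))
    omega

lemma list_sum_neg (l : List ℤ) (h : ∀ g ∈ l, g < 0) (hne : l ≠ []) : l.sum < 0 := by
  cases l with
  | nil => exact absurd rfl hne
  | cons a t =>
    simp only [List.sum_cons]
    have := h a (by simp)
    have := list_sum_nonpos t (fun g hg => (h g (by simp [hg])).le)
    omega

lemma list_sum_nonneg (l : List ℤ) (h : ∀ g ∈ l, 0 ≤ g) : 0 ≤ l.sum := by
  induction l with
  | nil => simp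
  | cons a t ih =>
    simp only [List.sum_cons]
    have := h a (by simp)
    have := ih (fun g hg => h g (by simp [hg]))
    omega

lemma list_sum_pos (l : List ℤ) (h : ∀ g ∈ l, 0 < g) (hne : l ≠ []) : 0 < l.sum := by
  cases l with
  | nil => exact absurd rfl hne
  | cons a t =>
    simp only [List.sum_cons]
    have := h a (by simp)
    have := list_sum_nonneg t (fun g hg => (h g (by simp [hg])).le)
    omega

lemma list_map_neg_sum (l : List ℤ) : (l.map (fun x => -x)).sum = -l.sum := by
  induction l with
  | nil => simp
  | cons a t iht => simp only [List.map_cons, List.sum_cons, iht]; ring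

lemma exists_pos_lb (F : ℕ → ℚ) (a b : ℕ) (hpos : ∀ s, a ≤ s → s ≤ b → 0 < F s) :
    ∃ μ : ℚ, 0 < μ ∧ ∀ s, a ≤ s → s ≤ b → μ ≤ F s := by
  rcases Finset.eq_empty_or_nonempty (Finset.Icc a b) with he | hne
  · exact ⟨1, one_pos, fun s hs hs' => absurd (Finset.mem_Icc.mpr ⟨hs, hs'⟩) (by simp [he])⟩
  · obtain ⟨s₀, hs₀, hmin⟩ := Finset.exists_min_image (Finset.Icc a b) F hne
    rw [Finset.mem_Icc] at hs₀
    exact ⟨F s₀, hpos s₀ hs₀.1 hs₀.2, fun s hs hs' => hmin s (Finset.mem_Icc.mpr ⟨hs, hs'⟩)⟩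

lemma exists_ub (F : ℕ → ℚ) (a b : ℕ) :
    ∃ C : ℚ, ∀ s, a ≤ s → s ≤ b → F s ≤ C := by
  rcases Finset.eq_empty_or_nonempty (Finset.Icc a b) with he | hne
  · exact ⟨1, fun s hs hs' => absurd (Finset.mem_Icc.mpr ⟨hs, hs'⟩) (by simp [he])⟩
  · obtain ⟨s₀, _, hmax⟩ := Finset.exists_max_image (Finset.Icc a b) F hne
    exact ⟨F s₀, fun s hs hs' => hmax s (Finset.mem_Icc.mpr ⟨hs, hs'⟩)⟩

section DP

variable (G : Finset ℤ) (hG : G.Nonempty) (w : ℤ → ℚ) (BIG : ℚ)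

noncomputable def DPF : ℕ → ℤ → ℚ
  | 0, x => if x = 0 then 0 else BIG
  | k+1, x => min (DPF k x) (G.inf' hG (fun g => w g + DPF k (x - g)))

variable {G w BIG}

variable (hw : ∀ g ∈ G, 0 ≤ w g) (hB : 0 ≤ BIG)

lemma dpf_succ_le (k : ℕ) (x : ℤ) : DPF G hG w BIG (k+1) x ≤ DPF G hG w BIG k x :=
  min_le_left _ _

lemma dpf_anti {k k' : ℕ} (h : k ≤ k') (x : ℤ) :
    DPF G hG w BIG k' x ≤ DPF G hG w BIG k x := by
  induction k' with
  | zero => simp_all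
  | succ k'' ih =>
    rcases Nat.eq_or_lt_of_le h with rfl | hlt
    · exact le_refl _
    · exact (dpf_succ_le hG k'' x).trans (ih (by omega))

lemma dpf_step_le (k : ℕ) (x : ℤ) {g : ℤ} (hg : g ∈ G) :
    DPF G hG w BIG (k+1) x ≤ w g + DPF G hG w BIG k (x - g) :=
  (min_le_right _ _).trans (Finset.inf'_le _ hg)

include hw hB in
lemma dpf_nonneg (k : ℕ) (x : ℤ) : 0 ≤ DPF G hG w BIG k x := by
  induction k generalizing x with
  | zero => simp only [DPF]; split <;> simp [hB]
  | succ k ih =>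
    simp only [DPF, le_min_iff]
    refine ⟨ih x, Finset.le_inf' _ _ fun g hg => add_nonneg (hw g hg) (ih _)⟩

include hw hB in
lemma dpf_zero (k : ℕ) : DPF G hG w BIG k 0 = 0 := by
  refine le_antisymm ?_ (dpf_nonneg hG hw hB k 0)
  have := dpf_anti (w := w) (BIG := BIG) hG (Nat.zero_le k) (0 : ℤ)
  simpa [DPF] using this

include hB in
lemma dpf_le_BIG (k : ℕ) (x : ℤ) : DPF G hG w BIG k x ≤ BIG := by
  refine (dpf_anti hG (Nat.zero_le k) x).trans ?_
  simp only [DPF]; split <;> simp [hB]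

include hw hB in
lemma dpf_le_cost (l : List ℤ) (hl : ∀ g ∈ l, g ∈ G) (k : ℕ) (hk : l.length ≤ k) :
    DPF G hG w BIG k l.sum ≤ cost w l := by
  induction l generalizing k with
  | nil => simp [cost_nil, dpf_zero hG hw hB]
  | cons a t ih =>
    cases k with
    | zero => simp at hk
    | succ k' =>
      have h1 : DPF G hG w BIG (k'+1) (a :: t).sum ≤ w a + DPF G hG w BIG k' ((a :: t).sum - a) :=
        dpf_step_le hG k' _ (hl a (by simp))
      have h2 : ((a :: t).sum - a) = t.sum := by simp
      rw [h2] at h1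
      refine h1.trans ?_
      rw [cost_cons]
      exact add_le_add_right (ih (fun g hg => hl g (by simp [hg])) k' (by simpa using hk)) _

include hw hB in
lemma dpf_exists_list (k : ℕ) (x : ℤ) :
    DPF G hG w BIG k x = BIG ∨
    ∃ l : List ℤ, (∀ g ∈ l, g ∈ G) ∧ l.length ≤ k ∧ l.sum = x ∧
      cost w l ≤ DPF G hG w BIG k x := by
  induction k generalizing x with
  | zero =>
    by_cases hx : x = 0
    · exact Or.inr ⟨[], by simp, by simp, by simp [hx], by simp [cost_nil, DPF, hx]⟩
    · left; simp [DPF, hx]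
  | succ k ih =>
    have hmin : DPF G hG w BIG (k+1) x = DPF G hG w BIG k x ∨
        DPF G hG w BIG (k+1) x = G.inf' hG (fun g => w g + DPF G hG w BIG k (x - g)) :=
      min_cases _ _ |>.imp (fun h => h.1) (fun h => h.1)
    rcases hmin with he | he
    · rcases ih x with h | ⟨l, h1, h2, h3, h4⟩
      · left; rw [he, h]
      · exact Or.inr ⟨l, h1, h2.trans (Nat.le_succ k), h3, by rw [he]; exact h4⟩
    · obtain ⟨g, hg, hge⟩ := Finset.exists_mem_eq_inf' hG (fun g => w g + DPF G hG w BIG k (x - g))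
      rw [hge] at he
      rcases ih (x - g) with h | ⟨l, h1, h2, h3, h4⟩
      · -- DPF k (x-g) = BIG; then DPF (k+1) x = w g + BIG ≥ BIG, but also ≤ BIG
        have hle : DPF G hG w BIG (k+1) x ≤ BIG := dpf_le_BIG hG hB (k+1) x
        have : DPF G hG w BIG (k+1) x = BIG := by
          rw [he, h] at hle ⊢
          have := hw g hg
          linarith [le_antisymm hle (by linarith : BIG ≤ w g + BIG)]
        exact Or.inl this
      · refine Or.inr ⟨g :: l, ?_, by simpa using h2, by simp [h3], ?_⟩
        · intro g' hg'
          rcases List.mem_cons.mp hg' with rfl | h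
          · exact hg
          · exact h1 g' h
        · rw [cost_cons, he]; exact add_le_add_right h4 _

lemma dpf_symm (hGs : ∀ g ∈ G, -g ∈ G) (hws : ∀ g : ℤ, w (-g) = w g) (k : ℕ) (x : ℤ) :
    DPF G hG w BIG k (-x) = DPF G hG w BIG k x := by
  have key : ∀ k : ℕ, ∀ x : ℤ, DPF G hG w BIG k (-x) ≤ DPF G hG w BIG k x := by
    intro k
    induction k with
    | zero =>
      intro x
      simp only [DPF, neg_eq_zero]
      exact le_refl _
    | succ k ih =>
      intro x
      simp only [DPF, le_min_iff]
      constructor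
      · exact (min_le_left _ _).trans (ih x)
      · refine Finset.le_inf' _ _ fun g hg => ?_
        have h1 : DPF G hG w BIG (k+1) (-x) ≤ w (-g) + DPF G hG w BIG k (-x - -g) :=
          dpf_step_le hG k _ (hGs g hg)
        have h2 : (-x - -g) = -(x - g) := by ring
        rw [h2, hws g] at h1
        calc DPF G hG w BIG (k+1) (-x) ≤ w g + DPF G hG w BIG k (-(x-g)) := h1
          _ ≤ w g + DPF G hG w BIG k (x - g) := add_le_add_right (ih _) _
  have h1 := key k x
  have h2 := key k (-x)
  rw [neg_neg] at h2
  exact le_antisymm h1 h2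

lemma cost_ge_card {μ : ℚ} (hμ : ∀ g ∈ G, μ ≤ w g) (l : List ℤ) (hl : ∀ g ∈ l, g ∈ G) :
    μ * l.length ≤ cost w l := by
  induction l with
  | nil => simp [cost_nil]
  | cons a t ih =>
    rw [cost_cons]
    have h1 := hμ a (hl a (by simp))
    have h2 := ih (fun g hg => hl g (by simp [hg]))
    rw [List.length_cons]
    push_cast
    linarith

include hw hB in
lemma dpf_subadd {μ : ℚ} (hμ : ∀ g ∈ G, μ ≤ w g) (hμ0 : 0 < μ) {Λ K : ℕ}
    (hΛ : BIG ≤ μ * Λ) (hK : 2 * Λ ≤ K) (x y : ℤ) :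
    DPF G hG w BIG K (x + y) ≤ DPF G hG w BIG K x + DPF G hG w BIG K y := by
  rcases dpf_exists_list hG hw hB K x with hx | ⟨lx, hx1, _, hx3, hx4⟩
  · calc DPF G hG w BIG K (x+y) ≤ BIG := dpf_le_BIG hG hB K _
      _ ≤ DPF G hG w BIG K x + DPF G hG w BIG K y := by
        rw [hx]; linarith [dpf_nonneg hG hw hB K y]
  rcases dpf_exists_list hG hw hB K y with hy | ⟨ly, hy1, _, hy3, hy4⟩
  · calc DPF G hG w BIG K (x+y) ≤ BIG := dpf_le_BIG hG hB K _
      _ ≤ DPF G hG w BIG K x + DPF G hG w BIG K y := by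
        rw [hy]; linarith [dpf_nonneg hG hw hB K x]
  have hlen : ∀ l : List ℤ, (∀ g ∈ l, g ∈ G) → cost w l ≤ BIG → l.length ≤ Λ := by
    intro l h1 h2
    have := cost_ge_card hμ l h1
    have : μ * l.length ≤ μ * Λ := by linarith
    have := le_of_mul_le_mul_left this hμ0
    exact_mod_cast this
  have hlx : lx.length ≤ Λ := hlen lx hx1 (hx4.trans (dpf_le_BIG hG hB K x))
  have hly : ly.length ≤ Λ := hlen ly hy1 (hy4.trans (dpf_le_BIG hG hB K y))
  have hcat : DPF G hG w BIG K (lx ++ ly).sum ≤ cost w (lx ++ ly) := by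
    refine dpf_le_cost hG hw hB _ ?_ K ?_
    · intro g hg; rcases List.mem_append.mp hg with h | h; exacts [hx1 g h, hy1 g h]
    · rw [List.length_append]; omega
  rw [List.sum_append, hx3, hy3, cost_append] at hcat
  exact hcat.trans (add_le_add hx4 hy4)

end DP


section EXT

/-- generator set -/
noncomputable def GS (m n N : ℕ) : Finset ℤ :=
  (Finset.Icc (-((N:ℤ)+(n:ℤ))) ((N:ℤ)+(n:ℤ))).filter
    (fun g => (1 ≤ g.natAbs ∧ g.natAbs ≤ m) ∨ (N+1 ≤ g.natAbs ∧ g.natAbs ≤ N+n))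

/-- weight function -/
def wfun (m N : ℕ) (f h : ℕ → ℚ) (g : ℤ) : ℚ :=
  if g.natAbs ≤ m then f g.natAbs else h (g.natAbs - N)

/-- hypotheses context -/
structure Ctx (m n N : ℕ) (f h : ℕ → ℚ) (μ C₀ : ℚ) : Prop where
  hm : 1 ≤ m
  hn : 1 ≤ n
  hnm : n ≤ m
  hN1 : m + n ≤ N
  hf0 : f 0 = 0
  hT : ∀ i j : ℕ, |f i - f j| ≤ f (i+j) ∧ f (i+j) ≤ f i + f j
  hμ0 : 0 < μ
  hμf : ∀ s, 1 ≤ s → s ≤ m → μ ≤ f s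
  hμh : ∀ i, 1 ≤ i → i ≤ n → μ ≤ h i
  hC0f : ∀ s, s ≤ m → f s < C₀
  hC0h : ∀ i, 1 ≤ i → i ≤ n → h i < C₀
  hadm : ∀ i k, 1 ≤ i → 1 ≤ k → i + k ≤ n → |h i - h (i+k)| ≤ f k ∧ f k ≤ h i + h (i+k)
  hNq : C₀ * m ≤ μ * ((N:ℚ) + 1 - (m:ℚ) - (n:ℚ))

variable {m n N : ℕ} {f h : ℕ → ℚ} {μ C₀ : ℚ}

lemma Ctx.mem_GS (c : Ctx m n N f h μ C₀) {g : ℤ} :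
    g ∈ GS m n N ↔ ((1 ≤ g.natAbs ∧ g.natAbs ≤ m) ∨ (N+1 ≤ g.natAbs ∧ g.natAbs ≤ N+n)) := by
  have := c.hN1
  simp only [GS, Finset.mem_filter, Finset.mem_Icc]
  omega

lemma Ctx.GS_nonempty (c : Ctx m n N f h μ C₀) : (GS m n N).Nonempty := by
  refine ⟨1, c.mem_GS.mpr ?_⟩
  simp only [Int.natAbs_one]
  exact Or.inl ⟨le_refl 1, c.hm⟩
  
lemma Ctx.GS_symm (c : Ctx m n N f h μ C₀) : ∀ g ∈ GS m n N, -g ∈ GS m n N := by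
  intro g hg
  rw [c.mem_GS] at hg ⊢
  simpa using hg

lemma wfun_symm (m N : ℕ) (f h : ℕ → ℚ) (g : ℤ) :
    wfun m N f h (-g) = wfun m N f h g := by simp [wfun]

lemma Ctx.w_small (c : Ctx m n N f h μ C₀) {g : ℤ} (hg : g.natAbs ≤ m) :
    wfun m N f h g = f g.natAbs := if_pos hg

lemma Ctx.w_big (c : Ctx m n N f h μ C₀) {g : ℤ} (hg : N+1 ≤ g.natAbs) :
    wfun m N f h g = h (g.natAbs - N) := by
  have := c.hN1; have := c.hn
  exact if_neg (by omega)

lemma Ctx.w_mu (c : Ctx m n N f h μ C₀) : ∀ g ∈ GS m n N, μ ≤ wfun m N f h g := by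
  intro g hg
  rw [c.mem_GS] at hg
  rcases hg with ⟨h1, h2⟩ | ⟨h1, h2⟩
  · rw [c.w_small h2]; exact c.hμf _ h1 h2
  · rw [c.w_big h1]; exact c.hμh _ (by omega) (by omega)

lemma Ctx.w_nonneg (c : Ctx m n N f h μ C₀) : ∀ g ∈ GS m n N, 0 ≤ wfun m N f h g :=
  fun g hg => c.hμ0.le.trans (c.w_mu g hg)

lemma Ctx.C0_pos (c : Ctx m n N f h μ C₀) : 0 < C₀ := by
  have h1 := c.hC0f 0 (by omega)
  rw [c.hf0] at h1; exact h1

lemma Ctx.boxT (c : Ctx m n N f h μ C₀) (a b : ℤ) :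
    f ((a+b).natAbs) ≤ f a.natAbs + f b.natAbs := by
  have hcase : (a+b).natAbs = a.natAbs + b.natAbs ∨ (a+b).natAbs + b.natAbs = a.natAbs ∨
      (a+b).natAbs + a.natAbs = b.natAbs := by omega
  rcases hcase with hc | hc | hc
  · rw [hc]; exact (c.hT a.natAbs b.natAbs).2
  · have := (c.hT (a+b).natAbs b.natAbs).1
    rw [hc] at this
    have := abs_le.mp this
    linarith [this.1]
  · have := (c.hT (a+b).natAbs a.natAbs).1
    rw [hc] at this
    have := abs_le.mp this
    linarith [this.1]

/-- Claim A : small-generator lists -/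
lemma Ctx.claimA (c : Ctx m n N f h μ C₀) : ∀ (L : ℕ) (l : List ℤ), l.length ≤ L →
    (∀ g ∈ l, 1 ≤ g.natAbs ∧ g.natAbs ≤ m) → l.sum.natAbs ≤ m →
    f l.sum.natAbs ≤ cost (wfun m N f h) l := by
  intro L
  induction L with
  | zero =>
    intro l hL _ _
    have : l = [] := List.length_eq_zero_iff.mp (by omega)
    subst this
    simp [cost_nil, c.hf0]
  | succ L ih =>
    intro l hL hval hsum
    rcases eq_or_ne l [] with rfl | hne
    · simp [cost_nil, c.hf0]
    · have hex : ∃ g ∈ l, (l.sum - g).natAbs ≤ m := by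
        by_contra hcon
        push_neg at hcon
        rcases le_or_gt 0 l.sum with hs | hs
        · have hall : ∀ g ∈ l, g < 0 := by
            intro g hg
            have h1 := hval g hg
            have h2 := hcon g hg
            omega
          have := list_sum_neg l hall hne
          omega
        · have hall : ∀ g ∈ l, 0 < g := by
            intro g hg
            have h1 := hval g hg
            have h2 := hcon g hg
            omega
          have := list_sum_pos l hall hne
          omega
      obtain ⟨g, hgmem, hgsub⟩ := hex
      have hperm := List.perm_cons_erase hgmem
      have hcost : cost (wfun m N f h) l = wfun m N f h g + cost (wfun m N f h) (l.erase g) := by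
        rw [cost_perm _ hperm, cost_cons]
      have hsum2 : l.sum = g + (l.erase g).sum := by
        rw [hperm.sum_eq]; simp
      have hlen : (l.erase g).length ≤ L := by
        have := hperm.length_eq
        simp at this
        omega
      have hIH := ih (l.erase g) hlen
        (fun g' hg' => hval g' (List.mem_of_mem_erase hg'))
        (by rw [show (l.erase g).sum = l.sum - g by omega]; exact hgsub)
      rw [show (l.erase g).sum = l.sum - g by omega] at hIH
      have hbox := c.boxT g (l.sum - g)
      rw [show g + (l.sum - g) = l.sum by ring] at hbox
      rw [hcost, c.w_small (hval g hgmem).2]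
      linarith

/-- per-element bound for no-positive-big lists -/
lemma Ctx.sum_le_cost (c : Ctx m n N f h μ C₀) (l : List ℤ)
    (hl : ∀ g ∈ l, g ∈ GS m n N ∧ ¬((N:ℤ)+1 ≤ g)) :
    μ * ((l.sum : ℤ) : ℚ) ≤ (m:ℚ) * cost (wfun m N f h) l := by
  induction l with
  | nil => simp [cost_nil]
  | cons a t ih =>
    have ha := hl a (by simp)
    have hIH := ih (fun g hg => hl g (by simp [hg]))
    rw [cost_cons]
    have hwa : μ ≤ wfun m N f h a := c.w_mu a ha.1
    have helem : μ * ((a:ℤ):ℚ) ≤ (m:ℚ) * wfun m N f h a := by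
      have hmem := c.mem_GS.mp ha.1
      have hale : a ≤ (m:ℤ) := by
        rcases hmem with ⟨_, h2⟩ | ⟨h1, _⟩
        · omega
        · have : a ≤ -((N:ℤ)+1) := by omega
          have := c.hN1; omega
      have h1 : μ * ((a:ℤ):ℚ) ≤ μ * (m:ℚ) := by
        apply mul_le_mul_of_nonneg_left _ c.hμ0.le
        exact_mod_cast hale
      have h2 : μ * (m:ℚ) ≤ (m:ℚ) * wfun m N f h a := by
        rw [mul_comm]
        apply mul_le_mul_of_nonneg_left hwa (by positivity)
      linarith
    rw [List.sum_cons, Int.cast_add, mul_add, mul_add]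
    linarith

lemma Ctx.neg_sum_le_cost (c : Ctx m n N f h μ C₀) (l : List ℤ)
    (hl : ∀ g ∈ l, g ∈ GS m n N ∧ ¬(g ≤ -((N:ℤ)+1))) :
    μ * (-((l.sum : ℤ) : ℚ)) ≤ (m:ℚ) * cost (wfun m N f h) l := by
  have := c.sum_le_cost (l.map (fun x => -x)) (by
    intro g hg
    obtain ⟨a, ha, rfl⟩ := List.mem_map.mp hg
    have h1 := hl a ha
    refine ⟨c.GS_symm a h1.1, ?_⟩
    have := c.mem_GS.mp h1.1
    omega)
  have hsum : (l.map (fun x => -x)).sum = -l.sum := list_map_neg_sum l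
  have hcost : cost (wfun m N f h) (l.map (fun x => -x)) = cost (wfun m N f h) l := by
    simp only [cost, List.map_map]
    congr 1
    apply List.map_congr_left
    intro a _
    exact wfun_symm m N f h a
  rw [hsum, hcost] at this
  exact_mod_cast this

lemma Ctx.hdiff (c : Ctx m n N f h μ C₀) (i j : ℕ) (hi1 : 1 ≤ i) (hi2 : i ≤ n)
    (hj1 : 1 ≤ j) (hj2 : j ≤ n) : h i ≤ h j + f ((i:ℤ)-(j:ℤ)).natAbs := by
  rcases lt_trichotomy i j with hij | rfl | hij
  · have h1 := (c.hadm i (j - i) hi1 (by omega) (by omega)).1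
    rw [show i + (j-i) = j by omega] at h1
    have h2 := abs_le.mp h1
    rw [show ((i:ℤ)-(j:ℤ)).natAbs = j - i by omega]
    linarith [h2.2]
  · rw [show ((i:ℤ)-(i:ℤ)).natAbs = 0 by omega, c.hf0]; linarith
  · have h1 := (c.hadm j (i - j) hj1 (by omega) (by omega)).1
    rw [show j + (i-j) = i by omega] at h1
    have h2 := abs_le.mp h1
    rw [show ((i:ℤ)-(j:ℤ)).natAbs = i - j by omega]
    linarith [h2.1]

lemma Ctx.hpair (c : Ctx m n N f h μ C₀) (j k : ℕ) (hj1 : 1 ≤ j) (hj2 : j ≤ n)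
    (hk1 : 1 ≤ k) (hk2 : k ≤ n) : f ((j:ℤ)-(k:ℤ)).natAbs ≤ h j + h k := by
  rcases lt_trichotomy j k with hjk | rfl | hjk
  · have h1 := (c.hadm j (k - j) hj1 (by omega) (by omega)).2
    rw [show j + (k-j) = k by omega] at h1
    rw [show ((j:ℤ)-(k:ℤ)).natAbs = k - j by omega]
    exact h1
  · rw [show ((j:ℤ)-(j:ℤ)).natAbs = 0 by omega, c.hf0]
    have := c.hμh j hj1 hj2
    linarith [c.hμ0]
  · have h1 := (c.hadm k (j - k) hk1 (by omega) (by omega)).2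
    rw [show k + (j-k) = j by omega] at h1
    rw [show ((j:ℤ)-(k:ℤ)).natAbs = j - k by omega]
    linarith

/-- Claim B : general lists -/
lemma Ctx.claimB (c : Ctx m n N f h μ C₀) : ∀ (L : ℕ) (l : List ℤ), l.length ≤ L →
    (∀ g ∈ l, g ∈ GS m n N) → cost (wfun m N f h) l < C₀ →
    (l.sum.natAbs ≤ m → f l.sum.natAbs ≤ cost (wfun m N f h) l) ∧
    (∀ i : ℕ, 1 ≤ i → i ≤ n → l.sum = (N:ℤ) + i → h i ≤ cost (wfun m N f h) l) := by
  have hN1 := c.hN1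
  have hm := c.hm
  have hn := c.hn
  have hnm := c.hnm
  have hμ0 := c.hμ0
  have hNq := c.hNq
  intro L
  induction L with
  | zero =>
    intro l hL hval hcost
    have : l = [] := List.length_eq_zero_iff.mp (by omega)
    subst this
    constructor
    · intro _; simp [cost_nil, c.hf0]
    · intro i hi1 _ hsum
      simp only [List.sum_nil] at hsum
      omega
  | succ L ih =>
    intro l hL hval hcost
    by_cases hpos : ∃ g ∈ l, (N:ℤ)+1 ≤ g
    · obtain ⟨g₁, hg₁m, hg₁⟩ := hpos
      have hg₁G := c.mem_GS.mp (hval g₁ hg₁m)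
      have hj : 1 ≤ g₁.natAbs - N ∧ g₁.natAbs - N ≤ n ∧ g₁ = (N:ℤ) + ((g₁.natAbs - N : ℕ):ℤ) := by
        omega
      set j := g₁.natAbs - N with hjdef
      have hwg₁ : wfun m N f h g₁ = h j := c.w_big (by omega)
      have hμj := c.hμh j hj.1 hj.2.1
      by_cases hneg : ∃ g ∈ l, g ≤ -((N:ℤ)+1)
      · -- pairing case
        obtain ⟨g₂, hg₂m, hg₂⟩ := hneg
        have hg₂G := c.mem_GS.mp (hval g₂ hg₂m)
        have hk : 1 ≤ g₂.natAbs - N ∧ g₂.natAbs - N ≤ n ∧ g₂ = -((N:ℤ) + ((g₂.natAbs - N : ℕ):ℤ)) := by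
          omega
        set k := g₂.natAbs - N with hkdef
        have hwg₂ : wfun m N f h g₂ = h k := c.w_big (by omega)
        have hμk := c.hμh k hk.1 hk.2.1
        have hne12 : g₂ ≠ g₁ := by omega
        have hg₂m' : g₂ ∈ l.erase g₁ := (List.mem_erase_of_ne hne12).mpr hg₂m
        have hperm : l.Perm (g₁ :: g₂ :: (l.erase g₁).erase g₂) :=
          (List.perm_cons_erase hg₁m).trans ((List.perm_cons_erase hg₂m').cons g₁)
        set rest := (l.erase g₁).erase g₂ with hrestdef
        have hcostl : cost (wfun m N f h) l = h j + (h k + cost (wfun m N f h) rest) := by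
          rw [cost_perm _ hperm, cost_cons, cost_cons, hwg₁, hwg₂]
        have hsuml : l.sum = g₁ + (g₂ + rest.sum) := by
          rw [hperm.sum_eq]; simp
        have hrestval : ∀ g ∈ rest, g ∈ GS m n N := fun g hg =>
          hval g (List.mem_of_mem_erase (List.mem_of_mem_erase hg))
        have hlenl : l.length = rest.length + 2 := by
          have := hperm.length_eq; simpa using this
        rcases eq_or_ne j k with hjk | hjk
        · -- j = k : drop the pair
          have hrs : rest.sum = l.sum := by omega
          have hIH := ih rest (by omega) hrestval (by linarith)
          constructor
          · intro hs
            have h1 := hIH.1 (by rw [hrs]; exact hs)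
            rw [hrs] at h1
            linarith
          · intro i hi1 hi2 hsumNi
            have h1 := hIH.2 i hi1 hi2 (by rw [hrs]; exact hsumNi)
            linarith
        · -- j ≠ k : replace the pair by j - k
          have hl'val : ∀ g ∈ ((j:ℤ) - (k:ℤ)) :: rest, g ∈ GS m n N := by
            intro g hg
            rcases List.mem_cons.mp hg with rfl | hg'
            · exact c.mem_GS.mpr (Or.inl (by omega))
            · exact hrestval g hg'
          have hcostl' : cost (wfun m N f h) (((j:ℤ) - (k:ℤ)) :: rest)
              = f ((j:ℤ)-(k:ℤ)).natAbs + cost (wfun m N f h) rest := by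
            rw [cost_cons, c.w_small (by omega)]
          have hkey := c.hpair j k hj.1 hj.2.1 hk.1 hk.2.1
          have hc' : cost (wfun m N f h) (((j:ℤ) - (k:ℤ)) :: rest) ≤ cost (wfun m N f h) l := by
            rw [hcostl', hcostl]; linarith
          have hrs : (((j:ℤ) - (k:ℤ)) :: rest).sum = l.sum := by
            rw [List.sum_cons]; omega
          have hIH := ih (((j:ℤ) - (k:ℤ)) :: rest) (by simp only [List.length_cons]; omega)
            hl'val (by linarith)
          constructor
          · intro hs
            have h1 := hIH.1 (by rw [hrs]; exact hs)
            rw [hrs] at h1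
            linarith
          · intro i hi1 hi2 hsumNi
            have h1 := hIH.2 i hi1 hi2 (by rw [hrs]; exact hsumNi)
            linarith
      · -- positive big, no negative big
        have hperm := List.perm_cons_erase hg₁m
        set rest := l.erase g₁ with hrestdef
        have hcostl : cost (wfun m N f h) l = h j + cost (wfun m N f h) rest := by
          rw [cost_perm _ hperm, cost_cons, hwg₁]
        have hsuml : l.sum = g₁ + rest.sum := by
          rw [hperm.sum_eq]; simp
        have hrestval : ∀ g ∈ rest, g ∈ GS m n N := fun g hg =>
          hval g (List.mem_of_mem_erase hg)
        have hlen : rest.length ≤ L := by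
          have := hperm.length_eq; simp at this; omega
        constructor
        · intro hs
          exfalso
          have hb := c.neg_sum_le_cost rest (fun g hg =>
            ⟨hrestval g hg, fun hc => hneg ⟨g, List.mem_of_mem_erase hg, hc⟩⟩)
          have hZ : (N:ℤ) + 1 - (m:ℤ) ≤ -rest.sum := by omega
          have hZQ : ((N:ℚ)+1-(m:ℚ)) ≤ -((rest.sum : ℤ):ℚ) := by exact_mod_cast hZ
          have h1 : μ * ((N:ℚ)+1-(m:ℚ)) ≤ μ * (-((rest.sum:ℤ):ℚ)) :=
            mul_le_mul_of_nonneg_left hZQ hμ0.le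
          have h2 : (m:ℚ) * cost (wfun m N f h) rest ≤ (m:ℚ) * cost (wfun m N f h) l := by
            apply mul_le_mul_of_nonneg_left (by linarith) (by positivity)
          have h3 : (m:ℚ) * cost (wfun m N f h) l < (m:ℚ) * C₀ := by
            apply mul_lt_mul_of_pos_left hcost
            exact_mod_cast hm
          have h5 : μ*((N:ℚ)+1-(m:ℚ)) = μ*((N:ℚ)+1-(m:ℚ)-(n:ℚ)) + μ*(n:ℚ) := by ring
          have h6 : μ*1 ≤ μ*(n:ℚ) := by
            apply mul_le_mul_of_nonneg_left _ hμ0.le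
            exact_mod_cast hn
          have h7 : C₀ * (m:ℚ) = (m:ℚ) * C₀ := mul_comm _ _
          linarith [hNq]
        · intro i hi1 hi2 hsumNi
          have hrsum : rest.sum = (i:ℤ) - (j:ℤ) := by omega
          have hIH := (ih rest hlen hrestval (by linarith)).1
          have hna : rest.sum.natAbs ≤ m := by omega
          have h1 := hIH hna
          rw [hrsum] at h1
          have h2 := c.hdiff i j hi1 hi2 hj.1 hj.2.1
          linarith
    · -- no positive big
      constructor
      · intro hs
        by_cases hneg : ∃ g ∈ l, g ≤ -((N:ℤ)+1)
        · exfalso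
          obtain ⟨g₂, hg₂m, hg₂⟩ := hneg
          have hg₂G := c.mem_GS.mp (hval g₂ hg₂m)
          have hk : 1 ≤ g₂.natAbs - N ∧ g₂.natAbs - N ≤ n ∧ g₂ = -((N:ℤ) + ((g₂.natAbs - N : ℕ):ℤ)) := by
            omega
          set k := g₂.natAbs - N with hkdef
          have hwg₂ : wfun m N f h g₂ = h k := c.w_big (by omega)
          have hμk := c.hμh k hk.1 hk.2.1
          have hperm := List.perm_cons_erase hg₂m
          set rest := l.erase g₂ with hrestdef
          have hcostl : cost (wfun m N f h) l = h k + cost (wfun m N f h) rest := by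
            rw [cost_perm _ hperm, cost_cons, hwg₂]
          have hsuml : l.sum = g₂ + rest.sum := by
            rw [hperm.sum_eq]; simp
          have hb := c.sum_le_cost rest (fun g hg =>
            ⟨hval g (List.mem_of_mem_erase hg), fun hc => hpos ⟨g, List.mem_of_mem_erase hg, hc⟩⟩)
          have hZ : (N:ℤ) + 1 - (m:ℤ) ≤ rest.sum := by omega
          have hZQ : ((N:ℚ)+1-(m:ℚ)) ≤ ((rest.sum : ℤ):ℚ) := by exact_mod_cast hZ
          have h1 : μ * ((N:ℚ)+1-(m:ℚ)) ≤ μ * ((rest.sum:ℤ):ℚ) :=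
            mul_le_mul_of_nonneg_left hZQ hμ0.le
          have h2 : (m:ℚ) * cost (wfun m N f h) rest ≤ (m:ℚ) * cost (wfun m N f h) l := by
            apply mul_le_mul_of_nonneg_left (by linarith) (by positivity)
          have h3 : (m:ℚ) * cost (wfun m N f h) l < (m:ℚ) * C₀ := by
            apply mul_lt_mul_of_pos_left hcost
            exact_mod_cast hm
          have h5 : μ*((N:ℚ)+1-(m:ℚ)) = μ*((N:ℚ)+1-(m:ℚ)-(n:ℚ)) + μ*(n:ℚ) := by ring
          have h6 : μ*1 ≤ μ*(n:ℚ) := by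
            apply mul_le_mul_of_nonneg_left _ hμ0.le
            exact_mod_cast hn
          have h7 : C₀ * (m:ℚ) = (m:ℚ) * C₀ := mul_comm _ _
          linarith [hNq]
        · -- all generators small
          apply c.claimA (L+1) l hL _ hs
          intro g hg
          have hG := c.mem_GS.mp (hval g hg)
          have h1 : ¬((N:ℤ)+1 ≤ g) := fun hc => hpos ⟨g, hg, hc⟩
          have h2 : ¬(g ≤ -((N:ℤ)+1)) := fun hc => hneg ⟨g, hg, hc⟩
          omega
      · intro i hi1 hi2 hsumNi
        exfalso
        have hb := c.sum_le_cost l (fun g hg => ⟨hval g hg, fun hc => hpos ⟨g, hg, hc⟩⟩)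
        have hZQ : ((N:ℚ)+1) ≤ ((l.sum:ℤ):ℚ) := by
          exact_mod_cast (by omega : (N:ℤ)+1 ≤ l.sum)
        have h1 : μ * ((N:ℚ)+1) ≤ μ * ((l.sum:ℤ):ℚ) :=
          mul_le_mul_of_nonneg_left hZQ hμ0.le
        have h3 : (m:ℚ) * cost (wfun m N f h) l < (m:ℚ) * C₀ := by
          apply mul_lt_mul_of_pos_left hcost
          exact_mod_cast hm
        have h5 : μ*((N:ℚ)+1) = μ*((N:ℚ)+1-(m:ℚ)-(n:ℚ)) + μ*((m:ℚ)+(n:ℚ)) := by ring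
        have h6 : μ*1 ≤ μ*((m:ℚ)+(n:ℚ)) := by
          apply mul_le_mul_of_nonneg_left _ hμ0.le
          have : (1:ℚ) ≤ (m:ℚ) := by exact_mod_cast hm
          have : (0:ℚ) ≤ (n:ℚ) := by positivity
          linarith
        have h7 : C₀ * (m:ℚ) = (m:ℚ) * C₀ := mul_comm _ _
        linarith [hNq]

/-- main extension lemma, context version -/
lemma Ctx.extend (c : Ctx m n N f h μ C₀) :
    ∃ f' : ℕ → ℚ,
      f' 0 = 0 ∧ (∀ s, 1 ≤ s → 0 < f' s) ∧
      (∀ i j : ℕ, |f' i - f' j| ≤ f' (i+j) ∧ f' (i+j) ≤ f' i + f' j) ∧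
      (∀ p, p ≤ m → f' p = f p) ∧
      (∀ i, 1 ≤ i → i ≤ n → f' (N + i) = h i) := by
  have hμ0 := c.hμ0
  have hB : (0:ℚ) ≤ C₀ := c.C0_pos.le
  have hG := c.GS_nonempty
  set Λ := Nat.ceil (C₀ / μ) with hΛdef
  set K := 2 * Λ + 2 with hKdef
  have hΛ : C₀ ≤ μ * (Λ:ℚ) := by
    have h1 : C₀ / μ ≤ (Λ:ℚ) := Nat.le_ceil _
    have h2 := (div_le_iff₀ hμ0).mp h1
    linarith [h2]
  set w := wfun m N f h with hwdef
  have lbgen : ∀ (x : ℤ) (target : ℚ), target < C₀ →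
      (∀ l : List ℤ, (∀ g ∈ l, g ∈ GS m n N) → l.sum = x → cost w l < C₀ → target ≤ cost w l) →
      target ≤ DPF (GS m n N) hG w C₀ K x := by
    intro x target htgt hlist
    rcases dpf_exists_list hG c.w_nonneg hB K x with hBig | ⟨l, h1, h2, h3, h4⟩
    · rw [hBig]; exact htgt.le
    · rcases lt_or_ge (cost w l) C₀ with hc | hc
      · exact (hlist l h1 h3 hc).trans h4
      · linarith
  -- lower bounds
  have lb1 : ∀ s : ℕ, s ≤ m → f s ≤ DPF (GS m n N) hG w C₀ K (s:ℤ) := by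
    intro s hs
    refine lbgen (s:ℤ) (f s) (c.hC0f s hs) ?_
    intro l h1 h3 hc
    have := (c.claimB l.length l le_rfl h1 hc).1 (by rw [h3]; simpa using hs)
    rw [h3] at this
    simpa using this
  have lb2 : ∀ i : ℕ, 1 ≤ i → i ≤ n → h i ≤ DPF (GS m n N) hG w C₀ K ((N:ℤ)+(i:ℤ)) := by
    intro i hi1 hi2
    refine lbgen _ (h i) (c.hC0h i hi1 hi2) ?_
    intro l h1 h3 hc
    exact (c.claimB l.length l le_rfl h1 hc).2 i hi1 hi2 h3
  have lbpos : ∀ x : ℤ, x ≠ 0 → μ ≤ DPF (GS m n N) hG w C₀ K x := by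
    intro x hx
    refine lbgen x μ ?_ ?_
    · have h1 := c.hμf 1 le_rfl c.hm
      have h2 := c.hC0f 1 c.hm
      linarith
    · intro l h1 h3 _
      have hlne : l ≠ [] := by
        intro hnil
        rw [hnil] at h3
        simp at h3
        exact hx h3.symm
      have hcard := cost_ge_card c.w_mu l h1
      have hlen : (1:ℚ) ≤ (l.length:ℚ) := by
        have : 1 ≤ l.length := List.length_pos_iff.mpr hlne
        exact_mod_cast this
      calc μ = μ * 1 := by ring
        _ ≤ μ * (l.length:ℚ) := mul_le_mul_of_nonneg_left hlen hμ0.le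
        _ ≤ cost w l := hcard
  -- upper bounds
  have ub1 : ∀ s : ℕ, 1 ≤ s → s ≤ m → DPF (GS m n N) hG w C₀ K (s:ℤ) ≤ f s := by
    intro s hs1 hs2
    have hmem : (s:ℤ) ∈ GS m n N := c.mem_GS.mpr (Or.inl (by omega))
    have hlist := dpf_le_cost hG c.w_nonneg hB [(s:ℤ)]
      (by intro g hg; rw [List.mem_singleton] at hg; subst hg; exact hmem) K
      (by simp only [List.length_cons, List.length_nil]; omega)
    simp only [List.sum_cons, List.sum_nil, add_zero] at hlist
    have hcost1 : cost w [(s:ℤ)] = f s := by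
      rw [cost, List.map_cons, List.map_nil, List.sum_cons, List.sum_nil, add_zero,
        hwdef, c.w_small (by omega : (s:ℤ).natAbs ≤ m)]
      have : ((s:ℤ)).natAbs = s := by omega
      rw [this]
    rw [hcost1] at hlist
    exact hlist
  have ub2 : ∀ i : ℕ, 1 ≤ i → i ≤ n → DPF (GS m n N) hG w C₀ K ((N:ℤ)+(i:ℤ)) ≤ h i := by
    intro i hi1 hi2
    have hmem : ((N:ℤ)+(i:ℤ)) ∈ GS m n N := c.mem_GS.mpr (Or.inr (by omega))
    have hlist := dpf_le_cost hG c.w_nonneg hB [((N:ℤ)+(i:ℤ))]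
      (by intro g hg; rw [List.mem_singleton] at hg; subst hg; exact hmem) K
      (by simp only [List.length_cons, List.length_nil]; omega)
    simp only [List.sum_cons, List.sum_nil, add_zero] at hlist
    have hcost1 : cost w [((N:ℤ)+(i:ℤ))] = h i := by
      rw [cost, List.map_cons, List.map_nil, List.sum_cons, List.sum_nil, add_zero,
        hwdef, c.w_big (by omega : N + 1 ≤ ((N:ℤ)+(i:ℤ)).natAbs)]
      have : (((N:ℤ)+(i:ℤ))).natAbs - N = i := by omega
      rw [this]
    rw [hcost1] at hlist
    exact hlist
  have hsub : ∀ x y : ℤ, DPF (GS m n N) hG w C₀ K (x+y) ≤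
      DPF (GS m n N) hG w C₀ K x + DPF (GS m n N) hG w C₀ K y := by
    intro x y
    exact dpf_subadd hG c.w_nonneg hB c.w_mu hμ0 hΛ (by omega) x y
  have hsymm : ∀ x : ℤ, DPF (GS m n N) hG w C₀ K (-x) = DPF (GS m n N) hG w C₀ K x :=
    fun x => dpf_symm hG c.GS_symm (wfun_symm m N f h) K x
  refine ⟨fun p => DPF (GS m n N) hG w C₀ K (p:ℤ), ?_, ?_, ?_, ?_, ?_⟩
  · simpa using dpf_zero hG c.w_nonneg hB K
  · intro s hs
    have := lbpos (s:ℤ) (by exact_mod_cast (by omega : s ≠ 0))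
    linarith
  · intro i j
    have hcast : ((i+j : ℕ):ℤ) = (i:ℤ) + (j:ℤ) := by push_cast; ring
    constructor
    · rw [abs_sub_le_iff]
      constructor
      · have h1 := hsub ((i+j:ℕ):ℤ) (-(j:ℤ))
        rw [hcast] at h1
        rw [show (i:ℤ) + (j:ℤ) + -(j:ℤ) = (i:ℤ) by ring] at h1
        rw [hsymm (j:ℤ)] at h1
        rw [← hcast] at h1
        linarith
      · have h1 := hsub ((i+j:ℕ):ℤ) (-(i:ℤ))
        rw [hcast] at h1
        rw [show (i:ℤ) + (j:ℤ) + -(i:ℤ) = (j:ℤ) by ring] at h1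
        rw [hsymm (i:ℤ)] at h1
        rw [← hcast] at h1
        linarith
    · have h1 := hsub (i:ℤ) (j:ℤ)
      rw [← hcast] at h1
      exact h1
  · intro p hp
    rcases Nat.eq_zero_or_pos p with rfl | hp1
    · rw [c.hf0]
      simpa using dpf_zero hG c.w_nonneg hB K
    · exact le_antisymm (ub1 p hp1 hp) (lb1 p hp)
  · intro i hi1 hi2
    show DPF (GS m n N) hG w C₀ K ((N+i : ℕ):ℤ) = h i
    have hcast : ((N+i : ℕ):ℤ) = (N:ℤ) + (i:ℤ) := by push_cast; ring
    rw [hcast]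
    exact le_antisymm (ub2 i hi1 hi2) (lb2 i hi1 hi2)

/-- full extension lemma -/
lemma extend_all {m : ℕ} {f : ℕ → ℚ} (hm : 1 ≤ m) (hf0 : f 0 = 0)
    (hfpos : ∀ s, 1 ≤ s → 0 < f s)
    (hT : ∀ i j : ℕ, |f i - f j| ≤ f (i+j) ∧ f (i+j) ≤ f i + f j)
    {n : ℕ} {h : ℕ → ℚ} (hn : 1 ≤ n) (hnm : n ≤ m)
    (hpos : ∀ i, 1 ≤ i → i ≤ n → 0 < h i)
    (hadm : ∀ i k, 1 ≤ i → 1 ≤ k → i + k ≤ n → |h i - h (i+k)| ≤ f k ∧ f k ≤ h i + h (i+k)) :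
    ∃ (f' : ℕ → ℚ) (N : ℕ),
      f' 0 = 0 ∧ (∀ s, 1 ≤ s → 0 < f' s) ∧
      (∀ i j : ℕ, |f' i - f' j| ≤ f' (i+j) ∧ f' (i+j) ≤ f' i + f' j) ∧
      (∀ p, p ≤ m → f' p = f p) ∧
      (∀ i, 1 ≤ i → i ≤ n → f' (N + i) = h i) := by
  obtain ⟨μf, hμf0, hμf⟩ := exists_pos_lb f 1 m (fun s hs _ => hfpos s hs)
  obtain ⟨μh, hμh0, hμh⟩ := exists_pos_lb h 1 n hpos
  obtain ⟨Cf, hCf⟩ := exists_ub f 0 m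
  obtain ⟨Ch, hCh⟩ := exists_ub h 1 n
  set μ := min μf μh with hμdef
  have hμ0 : 0 < μ := lt_min hμf0 hμh0
  set C₀ := |Cf| + |Ch| + 1 with hC₀def
  set N := m + n + Nat.ceil ((m:ℚ) * C₀ / μ) with hNdef
  have hC0f : ∀ s, s ≤ m → f s < C₀ := by
    intro s hs
    have h1 := hCf s (by omega) hs
    have h2 := le_abs_self Cf
    have h3 := abs_nonneg Ch
    rw [hC₀def]; linarith
  have hC0h : ∀ i, 1 ≤ i → i ≤ n → h i < C₀ := by
    intro i hi1 hi2
    have h1 := hCh i hi1 hi2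
    have h2 := le_abs_self Ch
    have h3 := abs_nonneg Cf
    rw [hC₀def]; linarith
  have hNq : C₀ * (m:ℚ) ≤ μ * ((N:ℚ) + 1 - (m:ℚ) - (n:ℚ)) := by
    have h1 : (m:ℚ) * C₀ / μ ≤ (Nat.ceil ((m:ℚ) * C₀ / μ) : ℚ) := Nat.le_ceil _
    have h2 : (m:ℚ) * C₀ ≤ (Nat.ceil ((m:ℚ) * C₀ / μ) : ℚ) * μ := (div_le_iff₀ hμ0).mp h1
    have h3 : (N:ℚ) = (m:ℚ) + (n:ℚ) + (Nat.ceil ((m:ℚ) * C₀ / μ) : ℚ) := by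
      rw [hNdef]; push_cast; ring
    rw [h3]
    have h4 : μ * ((m:ℚ) + (n:ℚ) + (Nat.ceil ((m:ℚ) * C₀ / μ) : ℚ) + 1 - (m:ℚ) - (n:ℚ))
        = (Nat.ceil ((m:ℚ) * C₀ / μ) : ℚ) * μ + μ := by ring
    rw [h4]
    have := hμ0
    nlinarith [h2]
  have c : Ctx m n N f h μ C₀ := by
    refine ⟨hm, hn, hnm, by omega, hf0, hT, hμ0, ?_, ?_, hC0f, hC0h, hadm, hNq⟩
    · intro s h1 h2; exact (min_le_left _ _).trans (hμf s h1 h2)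
    · intro i h1 h2; exact (min_le_right _ _).trans (hμh i h1 h2)
  obtain ⟨f', a1, a2, a3, a4, a5⟩ := c.extend
  exact ⟨f', N, a1, a2, a3, a4, a5⟩

end EXT

section STAGES

/-- a stage of the construction -/
structure St where
  m : ℕ
  f : ℕ → ℚ
  hm : 1 ≤ m
  hf0 : f 0 = 0
  hpos : ∀ s, 1 ≤ s → 0 < f s
  hT : ∀ i j : ℕ, |f i - f j| ≤ f (i+j) ∧ f (i+j) ≤ f i + f j

def st0 : St where
  m := 1
  f := fun p => if p = 0 then 0 else 1
  hm := le_refl 1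
  hf0 := rfl
  hpos := by
    intro s hs
    have hne : s ≠ 0 := by omega
    simp only [hne, if_false]
    norm_num
  hT := by
    intro i j
    by_cases hi : i = 0 <;> by_cases hj : j = 0 <;>
      simp [hi, hj, Nat.add_eq_zero]

noncomputable def cand (t : ℕ) : List ℚ := Denumerable.ofNat (List ℚ) (Nat.unpair t).2

noncomputable def cn (t : ℕ) : ℕ := (cand t).length

noncomputable def ch (t : ℕ) : ℕ → ℚ := fun i => (cand t).getD (i-1) 0

def Eligible (t : ℕ) (s : St) : Prop :=
  1 ≤ cn t ∧ cn t ≤ s.m ∧ (∀ i, 1 ≤ i → i ≤ cn t → 0 < ch t i) ∧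
  (∀ i k, 1 ≤ i → 1 ≤ k → i + k ≤ cn t →
    |ch t i - ch t (i+k)| ≤ s.f k ∧ s.f k ≤ ch t i + ch t (i+k))

lemma next_ex (t : ℕ) (s : St) : ∃ s' : St, s.m < s'.m ∧ (∀ p, p ≤ s.m → s'.f p = s.f p) ∧
    (Eligible t s → ∃ N, N + cn t ≤ s'.m ∧
      ∀ i, 1 ≤ i → i ≤ cn t → s'.f (N + i) = ch t i) := by
  by_cases hE : Eligible t s
  · obtain ⟨hE1, hE2, hE3, hE4⟩ := hE
    obtain ⟨f', N, a1, a2, a3, a4, a5⟩ := extend_all s.hm s.hf0 s.hpos s.hT hE1 hE2 hE3 hE4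
    refine ⟨⟨s.m + N + cn t + 1, f', by omega, a1, a2, a3⟩, by simp; omega, a4,
      fun _ => ⟨N, by simp; omega, a5⟩⟩
  · obtain ⟨f', N, a1, a2, a3, a4, a5⟩ := extend_all s.hm s.hf0 s.hpos s.hT (le_refl 1) s.hm
      (fun i _ _ => (by norm_num : (0:ℚ) < 1))
      (by intro i k h1 h2 h3; omega)
    exact ⟨⟨s.m + 1, f', by omega, a1, a2, a3⟩, by simp, a4, fun hEc => absurd hEc hE⟩

noncomputable def stages : ℕ → St
  | 0 => st0
  | t+1 => Classical.choose (next_ex t (stages t))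

lemma stages_spec (t : ℕ) :
    (stages t).m < (stages (t+1)).m ∧
    (∀ p, p ≤ (stages t).m → (stages (t+1)).f p = (stages t).f p) ∧
    (Eligible t (stages t) → ∃ N, N + cn t ≤ (stages (t+1)).m ∧
      ∀ i, 1 ≤ i → i ≤ cn t → (stages (t+1)).f (N + i) = ch t i) := by
  have : stages (t+1) = Classical.choose (next_ex t (stages t)) := rfl
  rw [this]
  exact Classical.choose_spec (next_ex t (stages t))

lemma stages_m_lb (t : ℕ) : t + 1 ≤ (stages t).m := by
  induction t with
  | zero => exact st0.hm
  | succ t ih => have := (stages_spec t).1; omega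

lemma stages_m_mono (t d : ℕ) : (stages t).m ≤ (stages (t+d)).m := by
  induction d with
  | zero => exact le_refl _
  | succ d ih =>
    show (stages t).m ≤ (stages ((t+d)+1)).m
    exact ih.trans (stages_spec (t+d)).1.le

lemma stages_agree (t d p : ℕ) (hp : p ≤ (stages t).m) :
    (stages (t+d)).f p = (stages t).f p := by
  induction d with
  | zero => rfl
  | succ d ih =>
    have h1 := (stages_spec (t+d)).2.1 p (hp.trans (stages_m_mono t d))
    rw [show t + (d+1) = (t+d) + 1 by omega, h1, ih]

noncomputable def flim : ℕ → ℚ := fun p => (stages p).f p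

lemma flim_eq (t p : ℕ) (hp : p ≤ (stages t).m) : flim p = (stages t).f p := by
  rcases le_total t p with hle | hle
  · obtain ⟨d, rfl⟩ := Nat.exists_eq_add_of_le hle
    exact stages_agree t d (t+d) hp
  · obtain ⟨d, rfl⟩ := Nat.exists_eq_add_of_le hle
    exact (stages_agree p d p (by have := stages_m_lb p; omega)).symm

end STAGES

end Stmt7

theorem stmt_7 :
    ∃ f : ℕ → ℚ, f 0 = 0 ∧ (∀ i, 1 ≤ i → 0 < f i) ∧
      (∀ i j : ℕ, |f i - f j| ≤ f (i + j) ∧ f (i + j) ≤ f i + f j) ∧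
      (∀ n : ℕ, 1 ≤ n → ∀ h : ℕ → ℚ,
        (∀ i, 1 ≤ i → i ≤ n → 0 < h i) →
        (∀ i k, 1 ≤ i → 1 ≤ k → i + k ≤ n →
          |h i - h (i + k)| ≤ f k ∧ f k ≤ h i + h (i + k)) →
        ∃ N : ℕ, ∀ i, 1 ≤ i → i ≤ n → f (N + i) = h i) := by
  refine ⟨Stmt7.flim, ?_, ?_, ?_, ?_⟩
  · exact (Stmt7.stages 0).hf0
  · intro i hi
    exact (Stmt7.stages i).hpos i hi
  · intro i j
    have hm := Stmt7.stages_m_lb (i+j)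
    have h1 := Stmt7.flim_eq (i+j) i (by omega)
    have h2 := Stmt7.flim_eq (i+j) j (by omega)
    have h3 := Stmt7.flim_eq (i+j) (i+j) (by omega)
    rw [h1, h2, h3]
    exact (Stmt7.stages (i+j)).hT i j
  · intro n hn h hpos hadm
    set l := (List.range n).map (fun k => h (k+1)) with hldef
    set t := Nat.pair n (@Encodable.encode (List ℚ) Denumerable.toEncodable l) with htdef
    have hcand : Stmt7.cand t = l := by
      rw [Stmt7.cand, htdef, Nat.unpair_pair]
      exact Denumerable.ofNat_encode l
    have hcn : Stmt7.cn t = n := by rw [Stmt7.cn, hcand, hldef]; simp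
    have htn : n ≤ t := Nat.left_le_pair n _
    have hch : ∀ i, 1 ≤ i → i ≤ n → Stmt7.ch t i = h i := by
      intro i h1 h2
      rw [Stmt7.ch, hcand, hldef]
      have hlt : i - 1 < ((List.range n).map (fun k => h (k+1))).length := by simp; omega
      rw [List.getD_eq_getElem _ _ hlt]
      simp only [List.getElem_map, List.getElem_range]
      congr 1
      omega
    have hmlb := Stmt7.stages_m_lb t
    have hmt : n ≤ (Stmt7.stages t).m := by omega
    have hE : Stmt7.Eligible t (Stmt7.stages t) := by
      refine ⟨by omega, by omega, ?_, ?_⟩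
      · intro i h1 h2
        rw [hcn] at h2
        rw [hch i h1 h2]
        exact hpos i h1 h2
      · intro i k h1 h2 h3
        rw [hcn] at h3
        rw [hch i h1 (by omega), hch (i+k) (by omega) (by omega)]
        have hfk : (Stmt7.stages t).f k = Stmt7.flim k :=
          (Stmt7.flim_eq t k (by omega)).symm
        rw [hfk]
        exact hadm i k h1 h2 h3
    obtain ⟨N, hNm, hreal⟩ := (Stmt7.stages_spec t).2.2 hE
    rw [hcn] at hNm
    refine ⟨N, ?_⟩
    intro i h1 h2
    have heq : Stmt7.flim (N+i) = (Stmt7.stages (t+1)).f (N+i) :=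
      Stmt7.flim_eq (t+1) (N+i) (by omega)
    rw [heq, hreal i h1 (by omega), hch i h1 h2]
end

section
/- Let n ≥ 1 and let f : {0, …, n} → ℤ satisfy f(0) = 0, f(i) > 0 for 1 ≤ i ≤ n, and |f(i) − f(j)| ≤ f(i+j) ≤ f(i) + f(j) whenever i, j ≥ 0 and i + j ≤ n. Let h : {1, …, n} → ℤ be a function with h(i) > 0 for all i that is f-admissible, i.e. |h(i) − h(i+k)| ≤ f(k) ≤ h(i) + h(i+k) for all 1 ≤ i < i+k ≤ n. Then there exist an integer m ≥ 1 and a function F̄ : {0, …, 2n+m} → ℤ such that: F̄(0) = 0, F̄(i) > 0 for 1 ≤ i ≤ 2n+m, |F̄(i) − F̄(j)| ≤ F̄(i+j) ≤ F̄(i) + F̄(j) whenever i + j ≤ 2n+m, F̄(i) = f(i) for 0 ≤ i ≤ n, and F̄(n + m + i) = h(i) for 1 ≤ i ≤ n. -/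
set_option linter.unusedSectionVars false

namespace Stmt8Aux

def Ee (n m : ℕ) (d : ℤ) : ℤ :=
  if n + m + 1 ≤ d.natAbs then (if 0 ≤ d then 1 else -1) else 0

def W (n m : ℕ) (f h : ℕ → ℤ) (d : ℤ) : ℕ :=
  if d.natAbs ≤ n then (f d.natAbs).toNat else (h (d.natAbs - (n + m))).toNat

def Valid (n m : ℕ) (d : ℤ) : Prop :=
  d.natAbs ≤ n ∨ (n + m + 1 ≤ d.natAbs ∧ d.natAbs ≤ 2 * n + m)

def Reach (n m : ℕ) (f h : ℕ → ℤ) (k : ℤ) : Set ℕ :=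
  { c | ∃ L : List ℤ, (∀ d ∈ L, Valid n m d) ∧ L.sum = k ∧ (L.map (W n m f h)).sum = c }

/-! generic list lemmas -/

lemma extract_two {α : Type*} [DecidableEq α] {a b : α} {L : List α}
    (ha : a ∈ L) (hb : b ∈ L) (hab : a ≠ b) : ∃ L₂, L.Perm (a :: b :: L₂) := by
  have h1 := List.perm_cons_erase ha
  have hb' : b ∈ L.erase a := (List.mem_erase_of_ne (Ne.symm hab)).mpr hb
  have h2 := List.perm_cons_erase hb'
  exact ⟨(L.erase a).erase b, h1.trans (h2.cons a)⟩

lemma list_sum_nonpos : ∀ {L : List ℤ}, (∀ x ∈ L, x ≤ 0) → L.sum ≤ 0 := by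
  intro L
  induction L with
  | nil => simp
  | cons a L ih =>
    intro hx
    simp only [List.sum_cons]
    have := hx a (by simp)
    have := ih (fun x hxL => hx x (by simp [hxL]))
    omega

lemma list_all_zero {L : List ℤ} (h1 : ∀ x ∈ L, 0 ≤ x) (h2 : L.sum ≤ 0) :
    ∀ x ∈ L, x = 0 := by
  induction L with
  | nil => simp
  | cons a L ih =>
    simp only [List.sum_cons] at h2
    have ha := h1 a (by simp)
    have hs : 0 ≤ L.sum := List.sum_nonneg (fun x hx => h1 x (by simp [hx]))
    intro x hx
    rcases List.mem_cons.mp hx with rfl | hx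
    · omega
    · exact ih (fun y hy => h1 y (by simp [hy])) (by omega) x hx

lemma sum_split_mem {α M : Type*} [DecidableEq α] [AddCommMonoid M] {d0 : α} {L : List α}
    (hd : d0 ∈ L) (g : α → M) : (L.map g).sum = g d0 + ((L.erase d0).map g).sum := by
  have := ((List.perm_cons_erase hd).map g).sum_eq
  simpa using this

lemma sum_map_neg (L : List ℤ) : (L.map (fun x => -x)).sum = -L.sum := by
  induction L with
  | nil => simp
  | cons a L ih => simp [ih]; ring

section

variable {n m : ℕ} {f h : ℕ → ℤ}
variable (hn : 1 ≤ n) (hf0 : f 0 = 0)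
  (hfpos : ∀ i, 1 ≤ i → i ≤ n → 0 < f i)
  (hftri : ∀ i j : ℕ, i + j ≤ n → |f i - f j| ≤ f (i + j) ∧ f (i + j) ≤ f i + f j)
  (hhpos : ∀ i, 1 ≤ i → i ≤ n → 0 < h i)
  (hadm : ∀ i k, 1 ≤ i → 1 ≤ k → i + k ≤ n →
      |h i - h (i + k)| ≤ f k ∧ f k ≤ h i + h (i + k))

/-! lemmas not needing the hypotheses -/

lemma W_neg (d : ℤ) : W n m f h (-d) = W n m f h d := by
  unfold W; rw [Int.natAbs_neg]

lemma cost_perm {L M : List ℤ} (hp : L.Perm M) :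
    (L.map (W n m f h)).sum = (M.map (W n m f h)).sum := (hp.map _).sum_eq

lemma Ee_vals (d : ℤ) : Ee n m d = -1 ∨ Ee n m d = 0 ∨ Ee n m d = 1 := by
  unfold Ee; split_ifs <;> simp

lemma small_of_e0 (d : ℤ) (hv : Valid n m d) (he : Ee n m d = 0) : d.natAbs ≤ n := by
  unfold Ee at he
  by_cases h1 : n + m + 1 ≤ d.natAbs
  · rw [if_pos h1] at he
    by_cases h2 : 0 ≤ d
    · rw [if_pos h2] at he; exact absurd he (by norm_num)
    · rw [if_neg h2] at he; exact absurd he (by norm_num)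
  · rcases hv with hv | hv
    · exact hv
    · omega

lemma exists_e1 (L : List ℤ) (hsum : 1 ≤ (L.map (Ee n m)).sum) : ∃ d ∈ L, Ee n m d = 1 := by
  by_contra hno
  push_neg at hno
  have hall : ∀ x ∈ L.map (Ee n m), x ≤ 0 := by
    intro x hx
    obtain ⟨d, hd, rfl⟩ := List.mem_map.mp hx
    rcases Ee_vals (n := n) (m := m) d with he | he | he
    · omega
    · omega
    · exact absurd he (hno d hd)
  have := list_sum_nonpos hall
  omega

lemma exists_em1 (L : List ℤ) (hsum : (L.map (Ee n m)).sum ≤ 0)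
    (hbig : ∃ d ∈ L, Ee n m d ≠ 0) : ∃ d ∈ L, Ee n m d = -1 := by
  by_contra hno
  push_neg at hno
  obtain ⟨d0, hd0, hd0e⟩ := hbig
  have hd0e1 : Ee n m d0 = 1 := by
    rcases Ee_vals (n := n) (m := m) d0 with he | he | he
    · exact absurd he (hno d0 hd0)
    · omega
    · exact he
  have hsplit := sum_split_mem hd0 (Ee n m)
  have hrest : 0 ≤ ((L.erase d0).map (Ee n m)).sum := by
    apply List.sum_nonneg
    intro x hx
    obtain ⟨d, hd, rfl⟩ := List.mem_map.mp hx
    have hdL : d ∈ L := List.mem_of_mem_erase hd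
    rcases Ee_vals (n := n) (m := m) d with he | he | he
    · exact absurd he (hno d hdL)
    · omega
    · omega
  omega

lemma exists_nonzero_e (L : List ℤ) (hv : ∀ d ∈ L, Valid n m d)
    (hbig : ¬ ∀ d ∈ L, d.natAbs ≤ n) : ∃ d ∈ L, Ee n m d ≠ 0 := by
  push_neg at hbig
  obtain ⟨d, hd, hdn⟩ := hbig
  exact ⟨d, hd, fun he => absurd (small_of_e0 d (hv d hd) he) (by omega)⟩

lemma reach_add {k1 k2 : ℤ} {c1 c2 : ℕ} (h1 : c1 ∈ Reach n m f h k1)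
    (h2 : c2 ∈ Reach n m f h k2) : c1 + c2 ∈ Reach n m f h (k1 + k2) := by
  obtain ⟨L1, hv1, hs1, hc1⟩ := h1
  obtain ⟨L2, hv2, hs2, hc2⟩ := h2
  refine ⟨L1 ++ L2, ?_, ?_, ?_⟩
  · intro d hd
    rcases List.mem_append.mp hd with hd | hd
    · exact hv1 d hd
    · exact hv2 d hd
  · rw [List.sum_append, hs1, hs2]
  · rw [List.map_append, List.sum_append, hc1, hc2]

lemma reach_neg {k : ℤ} {c : ℕ} (h1 : c ∈ Reach n m f h k) : c ∈ Reach n m f h (-k) := by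
  obtain ⟨L, hv, hs, hc⟩ := h1
  refine ⟨L.map (fun x => -x), ?_, ?_, ?_⟩
  · intro d hd
    obtain ⟨e, he, rfl⟩ := List.mem_map.mp hd
    have := hv e he
    unfold Valid at this ⊢
    rwa [Int.natAbs_neg]
  · rw [sum_map_neg, hs]
  · rw [List.map_map,
      show (W n m f h) ∘ (fun x : ℤ => -x) = W n m f h from funext fun x => W_neg x, hc]

lemma reach_single (d : ℤ) (hv : Valid n m d) : W n m f h d ∈ Reach n m f h d :=
  ⟨[d], by simpa using hv, by simp, by simp⟩

/-! hypothesis-dependent lemmas -/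

include hn hf0 hfpos hftri hhpos hadm

lemma f_nonneg (k : ℕ) (hk : k ≤ n) : 0 ≤ f k := by
  rcases Nat.eq_zero_or_pos k with rfl | hk1
  · exact le_of_eq hf0.symm
  · exact le_of_lt (hfpos k hk1 hk)

lemma h_nonneg (k : ℕ) (hk1 : 1 ≤ k) (hk : k ≤ n) : 0 ≤ h k := le_of_lt (hhpos k hk1 hk)

lemma W_small_cast (d : ℤ) (hd : d.natAbs ≤ n) :
    (W n m f h d : ℤ) = f d.natAbs := by
  unfold W
  rw [if_pos hd]
  exact Int.toNat_of_nonneg (f_nonneg hn hf0 hfpos hftri hhpos hadm _ hd)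

lemma W_big_cast (d : ℤ) (h1 : n + m + 1 ≤ d.natAbs) (h2 : d.natAbs ≤ 2 * n + m) :
    (W n m f h d : ℤ) = h (d.natAbs - (n + m)) := by
  unfold W
  rw [if_neg (by omega)]
  exact Int.toNat_of_nonneg (h_nonneg hn hf0 hfpos hftri hhpos hadm _ (by omega) (by omega))

lemma w_pos (d : ℤ) (hv : Valid n m d) (hd : d ≠ 0) : 1 ≤ W n m f h d := by
  rcases hv with hsm | ⟨h1, h2⟩
  · have h0 : 1 ≤ d.natAbs := by omega
    have := hfpos d.natAbs h0 hsm
    unfold W; rw [if_pos hsm]; omega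
  · have := hhpos (d.natAbs - (n + m)) (by omega) (by omega)
    unfold W; rw [if_neg (by omega)]; omega

lemma f_merge (a b : ℤ) (ha : a.natAbs ≤ n) (hb : b.natAbs ≤ n)
    (hab : (a + b).natAbs ≤ n) :
    f ((a + b).natAbs) ≤ f a.natAbs + f b.natAbs := by
  have htri : (a+b).natAbs = a.natAbs + b.natAbs ∨ a.natAbs = b.natAbs + (a+b).natAbs ∨
      b.natAbs = a.natAbs + (a+b).natAbs := by omega
  rcases htri with hc | hc | hc
  · rw [hc]; exact (hftri a.natAbs b.natAbs (by omega)).2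
  · have h1 := (hftri b.natAbs (a+b).natAbs (by omega)).1
    rw [← hc] at h1
    have h2 := abs_le.mp h1
    linarith [h2.1, h2.2]
  · have h1 := (hftri a.natAbs (a+b).natAbs (by omega)).1
    rw [← hc] at h1
    have h2 := abs_le.mp h1
    linarith [h2.1, h2.2]

lemma small_lb_nonneg : ∀ (L : List ℤ), (∀ d ∈ L, 0 ≤ d) → (∀ d ∈ L, d.natAbs ≤ n) →
    L.sum.natAbs ≤ n → f L.sum.natAbs ≤ ((L.map (W n m f h)).sum : ℤ) := by
  intro L
  induction L with
  | nil => simp [hf0]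
  | cons a L ih =>
    intro hpos hsm hs
    have hsnn : 0 ≤ L.sum := List.sum_nonneg (fun x hx => hpos x (by simp [hx]))
    have hann : 0 ≤ a := hpos a (by simp)
    have hsum : (a :: L).sum = a + L.sum := List.sum_cons
    have hsplit : ((a :: L).sum).natAbs = a.natAbs + L.sum.natAbs := by
      rw [hsum]; omega
    have hLn : L.sum.natAbs ≤ n := by omega
    have h1 := ih (fun x hx => hpos x (by simp [hx])) (fun x hx => hsm x (by simp [hx])) hLn
    have h2 : f (a.natAbs + L.sum.natAbs) ≤ f a.natAbs + f L.sum.natAbs :=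
      (hftri a.natAbs L.sum.natAbs (by omega)).2
    have hWa : (W n m f h a : ℤ) = f a.natAbs :=
      W_small_cast hn hf0 hfpos hftri hhpos hadm a (hsm a (by simp))
    have hcost : (((a :: L).map (W n m f h)).sum : ℤ)
        = (W n m f h a : ℤ) + ((L.map (W n m f h)).sum : ℤ) := by
      simp [List.map_cons, List.sum_cons]
    rw [hsplit, hcost, hWa]
    linarith

lemma small_lb : ∀ (N : ℕ) (L : List ℤ), L.length ≤ N →
    (∀ d ∈ L, d.natAbs ≤ n) → L.sum.natAbs ≤ n →
    f L.sum.natAbs ≤ ((L.map (W n m f h)).sum : ℤ) := by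
  intro N
  induction N with
  | zero =>
    intro L hL _ _
    have hLnil : L = [] := List.length_eq_zero_iff.mp (Nat.le_zero.mp hL)
    subst hLnil; simp [hf0]
  | succ N ih =>
    intro L hlen hsm hs
    by_cases hmix : (∃ a ∈ L, 0 < a) ∧ (∃ b ∈ L, b < 0)
    · obtain ⟨⟨a, ha, hapos⟩, ⟨b, hb, hbneg⟩⟩ := hmix
      have hab : a ≠ b := by omega
      obtain ⟨L₂, hp⟩ := extract_two ha hb hab
      have hna : a.natAbs ≤ n := hsm a ha
      have hnb : b.natAbs ≤ n := hsm b hb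
      have hnab : (a + b).natAbs ≤ n := by omega
      have hsum2 : ((a + b) :: L₂).sum = L.sum := by
        have := hp.sum_eq; simp only [List.sum_cons] at this ⊢; omega
      have hlen2 : ((a + b) :: L₂).length ≤ N := by
        have := hp.length_eq; simp at this ⊢; omega
      have hsm2 : ∀ d ∈ (a + b) :: L₂, d.natAbs ≤ n := by
        intro d hd
        rcases List.mem_cons.mp hd with rfl | hd
        · exact hnab
        · exact hsm d (hp.mem_iff.mpr (by simp [hd]))
      have h1 := ih _ hlen2 hsm2 (by rw [hsum2]; exact hs)
      rw [hsum2] at h1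
      refine le_trans h1 ?_
      have hcL : (L.map (W n m f h)).sum
          = W n m f h a + W n m f h b + (L₂.map (W n m f h)).sum := by
        rw [cost_perm hp]; simp [List.map_cons, List.sum_cons]; omega
      have hcM : (((a + b) :: L₂).map (W n m f h)).sum
          = W n m f h (a + b) + (L₂.map (W n m f h)).sum := by
        simp [List.map_cons, List.sum_cons]
      have hWab : (W n m f h (a+b) : ℤ) ≤ (W n m f h a : ℤ) + (W n m f h b : ℤ) := by
        rw [W_small_cast hn hf0 hfpos hftri hhpos hadm _ hnab,
          W_small_cast hn hf0 hfpos hftri hhpos hadm _ hna,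
          W_small_cast hn hf0 hfpos hftri hhpos hadm _ hnb]
        exact f_merge hn hf0 hfpos hftri hhpos hadm a b hna hnb hnab
      rw [hcL, hcM]
      simp only [Nat.cast_add]
      linarith
    · rw [not_and_or] at hmix
      push_neg at hmix
      rcases hmix with hall | hall
      · set L' := L.map (fun x => -x) with hL'
        have hLs : L'.sum = -L.sum := sum_map_neg L
        have hpos' : ∀ d ∈ L', 0 ≤ d := by
          intro d hd
          obtain ⟨e, he, rfl⟩ := List.mem_map.mp hd
          have := hall e he; omega
        have hsm' : ∀ d ∈ L', d.natAbs ≤ n := by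
          intro d hd
          obtain ⟨e, he, rfl⟩ := List.mem_map.mp hd
          simpa [Int.natAbs_neg] using hsm e he
        have hres := small_lb_nonneg (m := m) hn hf0 hfpos hftri hhpos hadm L' hpos' hsm'
          (by rw [hLs]; simpa [Int.natAbs_neg] using hs)
        have hcost' : (L'.map (W n m f h)).sum = (L.map (W n m f h)).sum := by
          rw [hL', List.map_map]
          congr 1
          ext x
          simp [Function.comp, W_neg]
        have hnat : L'.sum.natAbs = L.sum.natAbs := by rw [hLs, Int.natAbs_neg]
        rw [hnat, hcost'] at hres
        exact hres
      · exact small_lb_nonneg (m := m) hn hf0 hfpos hftri hhpos hadm L hall hsm hs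

lemma big_pos_struct (d : ℤ) (hv : Valid n m d) (he : Ee n m d = 1) :
    ∃ t1 : ℕ, 1 ≤ t1 ∧ t1 ≤ n ∧ d = ((n + m : ℕ) : ℤ) + t1 ∧ (W n m f h d : ℤ) = h t1 := by
  unfold Ee at he
  have h1 : n + m + 1 ≤ d.natAbs := by
    by_contra hc
    rw [if_neg hc] at he
    exact absurd he (by norm_num)
  rw [if_pos h1] at he
  have h2 : 0 ≤ d := by
    by_contra hc
    rw [if_neg hc] at he
    exact absurd he (by norm_num)
  rcases hv with hv | hv
  · omega
  · refine ⟨d.natAbs - (n + m), by omega, by omega, by omega, ?_⟩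
    rw [W_big_cast hn hf0 hfpos hftri hhpos hadm d h1 hv.2]

lemma big_neg_struct (d : ℤ) (hv : Valid n m d) (he : Ee n m d = -1) :
    ∃ t2 : ℕ, 1 ≤ t2 ∧ t2 ≤ n ∧ d = -((n + m : ℕ) : ℤ) - t2 ∧ (W n m f h d : ℤ) = h t2 := by
  unfold Ee at he
  have h1 : n + m + 1 ≤ d.natAbs := by
    by_contra hc
    rw [if_neg hc] at he
    exact absurd he (by norm_num)
  rw [if_pos h1] at he
  have h2 : ¬ 0 ≤ d := by
    by_contra hc
    rw [if_pos hc] at he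
    exact absurd he (by norm_num)
  rcases hv with hv | hv
  · omega
  · refine ⟨d.natAbs - (n + m), by omega, by omega, by omega, ?_⟩
    rw [W_big_cast hn hf0 hfpos hftri hhpos hadm d h1 hv.2]

lemma f_le_h_add_h (t1 t2 : ℕ) (h1 : 1 ≤ t1) (h2 : t1 ≤ n) (h3 : 1 ≤ t2) (h4 : t2 ≤ n) :
    f (((t1 : ℤ) - t2).natAbs) ≤ h t1 + h t2 := by
  rcases lt_trichotomy t1 t2 with hlt | heq | hlt
  · have hcast : ((t1 : ℤ) - t2).natAbs = t2 - t1 := by omega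
    rw [hcast]
    have hx := (hadm t1 (t2 - t1) h1 (by omega) (by omega)).2
    have he : t1 + (t2 - t1) = t2 := by omega
    rw [he] at hx
    exact hx
  · subst heq
    have hcast : ((t1 : ℤ) - t1).natAbs = 0 := by omega
    rw [hcast, hf0]
    have := hhpos t1 h1 h2
    linarith
  · have hcast : ((t1 : ℤ) - t2).natAbs = t1 - t2 := by omega
    rw [hcast]
    have hx := (hadm t2 (t1 - t2) h3 (by omega) (by omega)).2
    have he : t2 + (t1 - t2) = t1 := by omega
    rw [he] at hx
    linarith

lemma merge_big (d1 d2 : ℤ) (hv1 : Valid n m d1) (hv2 : Valid n m d2)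
    (he1 : Ee n m d1 = 1) (he2 : Ee n m d2 = -1) :
    (d1 + d2).natAbs ≤ n ∧
    ((W n m f h (d1 + d2) : ℤ) ≤ (W n m f h d1 : ℤ) + (W n m f h d2 : ℤ)) ∧
    Ee n m (d1 + d2) = 0 := by
  obtain ⟨t1, ht11, ht12, hd1, hW1⟩ := big_pos_struct hn hf0 hfpos hftri hhpos hadm d1 hv1 he1
  obtain ⟨t2, ht21, ht22, hd2, hW2⟩ := big_neg_struct hn hf0 hfpos hftri hhpos hadm d2 hv2 he2
  have hsum : d1 + d2 = (t1 : ℤ) - t2 := by rw [hd1, hd2]; ring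
  have hna : (d1 + d2).natAbs ≤ n := by rw [hsum]; omega
  refine ⟨hna, ?_, ?_⟩
  · rw [W_small_cast hn hf0 hfpos hftri hhpos hadm _ hna, hW1, hW2, hsum]
    exact f_le_h_add_h hn hf0 hfpos hftri hhpos hadm t1 t2 ht11 ht12 ht21 ht22
  · unfold Ee; rw [if_neg (by omega)]

lemma big_lb0 : ∀ (N : ℕ) (L : List ℤ), L.length ≤ N → (∀ d ∈ L, Valid n m d) →
    (L.map (Ee n m)).sum = 0 → L.sum.natAbs ≤ n →
    f L.sum.natAbs ≤ ((L.map (W n m f h)).sum : ℤ) := by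
  intro N
  induction N with
  | zero =>
    intro L hL _ _ _
    have hLnil : L = [] := List.length_eq_zero_iff.mp (Nat.le_zero.mp hL)
    subst hLnil; simp [hf0]
  | succ N ih =>
    intro L hlen hv hT hs
    by_cases hallsm : ∀ d ∈ L, d.natAbs ≤ n
    · exact small_lb hn hf0 hfpos hftri hhpos hadm (N + 1) L hlen hallsm hs
    · obtain ⟨dx, hdx, hdxe⟩ := exists_nonzero_e L hv hallsm
      obtain ⟨d2, hd2m, hd2e⟩ := exists_em1 L (by omega) ⟨dx, hdx, hdxe⟩
      have hd1 : ∃ d ∈ L, Ee n m d = 1 := by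
        by_contra hno
        push_neg at hno
        have hsplit := sum_split_mem hd2m (Ee n m)
        have hrest : ((L.erase d2).map (Ee n m)).sum ≤ 0 := by
          apply list_sum_nonpos
          intro x hx
          obtain ⟨d, hd, rfl⟩ := List.mem_map.mp hx
          have hdL : d ∈ L := List.mem_of_mem_erase hd
          rcases Ee_vals (n := n) (m := m) d with he | he | he
          · omega
          · omega
          · exact absurd he (hno d hdL)
        omega
      obtain ⟨d1, hd1m, hd1e⟩ := hd1
      have hne : d1 ≠ d2 := by
        intro hEq; rw [hEq] at hd1e; omega
      obtain ⟨L₂, hp⟩ := extract_two hd1m hd2m hne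
      obtain ⟨hmna, hmW, hmE⟩ := merge_big hn hf0 hfpos hftri hhpos hadm d1 d2
        (hv d1 hd1m) (hv d2 hd2m) hd1e hd2e
      have hsumM : ((d1 + d2) :: L₂).sum = L.sum := by
        have := hp.sum_eq; simp only [List.sum_cons] at this ⊢; omega
      have hlenM : ((d1 + d2) :: L₂).length ≤ N := by
        have := hp.length_eq; simp at this ⊢; omega
      have hvM : ∀ d ∈ (d1 + d2) :: L₂, Valid n m d := by
        intro d hd
        rcases List.mem_cons.mp hd with rfl | hd
        · exact Or.inl hmna
        · exact hv d (hp.mem_iff.mpr (by simp [hd]))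
      have hTL : (L.map (Ee n m)).sum = Ee n m d1 + Ee n m d2 + (L₂.map (Ee n m)).sum := by
        have := (hp.map (Ee n m)).sum_eq
        simp only [List.map_cons, List.sum_cons] at this
        omega
      have hTM : (((d1 + d2) :: L₂).map (Ee n m)).sum = 0 := by
        simp only [List.map_cons, List.sum_cons, hmE]
        omega
      have h1 := ih _ hlenM hvM hTM (by rw [hsumM]; exact hs)
      rw [hsumM] at h1
      refine le_trans h1 ?_
      have hcL : (L.map (W n m f h)).sum
          = W n m f h d1 + W n m f h d2 + (L₂.map (W n m f h)).sum := by
        rw [cost_perm hp]; simp [List.map_cons, List.sum_cons]; omega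
      have hcM : (((d1 + d2) :: L₂).map (W n m f h)).sum
          = W n m f h (d1 + d2) + (L₂.map (W n m f h)).sum := by
        simp [List.map_cons, List.sum_cons]
      rw [hcL, hcM]
      simp only [Nat.cast_add]
      linarith

lemma big_lb1 : ∀ (N : ℕ) (L : List ℤ), L.length ≤ N → (∀ d ∈ L, Valid n m d) →
    (L.map (Ee n m)).sum = 1 → ∀ t : ℕ, 1 ≤ t → t ≤ n →
    L.sum = ((n + m : ℕ) : ℤ) + t →
    h t ≤ ((L.map (W n m f h)).sum : ℤ) := by
  intro N
  induction N with
  | zero =>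
    intro L hL _ hT _ _ _ _
    have hLnil : L = [] := List.length_eq_zero_iff.mp (Nat.le_zero.mp hL)
    subst hLnil; simp at hT
  | succ N ih =>
    intro L hlen hv hT t ht1 htn hsum
    by_cases hneg : ∃ d ∈ L, Ee n m d = -1
    · obtain ⟨d2, hd2m, hd2e⟩ := hneg
      obtain ⟨d1, hd1m, hd1e⟩ := exists_e1 (n := n) (m := m) L (by omega)
      have hne : d1 ≠ d2 := by intro hEq; rw [hEq] at hd1e; omega
      obtain ⟨L₂, hp⟩ := extract_two hd1m hd2m hne
      obtain ⟨hmna, hmW, hmE⟩ := merge_big hn hf0 hfpos hftri hhpos hadm d1 d2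
        (hv d1 hd1m) (hv d2 hd2m) hd1e hd2e
      have hsumM : ((d1 + d2) :: L₂).sum = L.sum := by
        have := hp.sum_eq; simp only [List.sum_cons] at this ⊢; omega
      have hlenM : ((d1 + d2) :: L₂).length ≤ N := by
        have := hp.length_eq; simp at this ⊢; omega
      have hvM : ∀ d ∈ (d1 + d2) :: L₂, Valid n m d := by
        intro d hd
        rcases List.mem_cons.mp hd with rfl | hd
        · exact Or.inl hmna
        · exact hv d (hp.mem_iff.mpr (by simp [hd]))
      have hTL : (L.map (Ee n m)).sum = Ee n m d1 + Ee n m d2 + (L₂.map (Ee n m)).sum := by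
        have := (hp.map (Ee n m)).sum_eq
        simp only [List.map_cons, List.sum_cons] at this
        omega
      have hTM : (((d1 + d2) :: L₂).map (Ee n m)).sum = 1 := by
        simp only [List.map_cons, List.sum_cons, hmE]
        omega
      have h1 := ih _ hlenM hvM hTM t ht1 htn (by rw [hsumM]; exact hsum)
      refine le_trans h1 ?_
      have hcL : (L.map (W n m f h)).sum
          = W n m f h d1 + W n m f h d2 + (L₂.map (W n m f h)).sum := by
        rw [cost_perm hp]; simp [List.map_cons, List.sum_cons]; omega
      have hcM : (((d1 + d2) :: L₂).map (W n m f h)).sum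
          = W n m f h (d1 + d2) + (L₂.map (W n m f h)).sum := by
        simp [List.map_cons, List.sum_cons]
      rw [hcL, hcM]
      simp only [Nat.cast_add]
      linarith
    · push_neg at hneg
      obtain ⟨d1, hd1m, hd1e⟩ := exists_e1 (n := n) (m := m) L (by omega)
      have hp : L.Perm (d1 :: L.erase d1) := List.perm_cons_erase hd1m
      have hTL : (L.map (Ee n m)).sum = Ee n m d1 + ((L.erase d1).map (Ee n m)).sum :=
        sum_split_mem hd1m (Ee n m)
      have hT₁ : ((L.erase d1).map (Ee n m)).sum = 0 := by omega
      have hall0 : ∀ x ∈ (L.erase d1).map (Ee n m), x = 0 := by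
        apply list_all_zero
        · intro x hx
          obtain ⟨d, hd, rfl⟩ := List.mem_map.mp hx
          have hdL : d ∈ L := List.mem_of_mem_erase hd
          rcases Ee_vals (n := n) (m := m) d with he | he | he
          · exact absurd he (hneg d hdL)
          · omega
          · omega
        · omega
      have hsmall : ∀ d ∈ L.erase d1, d.natAbs ≤ n := by
        intro d hd
        exact small_of_e0 d (hv d (List.mem_of_mem_erase hd))
          (hall0 _ (List.mem_map.mpr ⟨d, hd, rfl⟩))
      obtain ⟨t1, ht11, ht12, hd1eq, hW1⟩ :=
        big_pos_struct hn hf0 hfpos hftri hhpos hadm d1 (hv d1 hd1m) hd1e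
      have hsum1 : (L.erase d1).sum = (t : ℤ) - t1 := by
        have hps := hp.sum_eq
        simp only [List.sum_cons] at hps
        omega
      have hna1 : (L.erase d1).sum.natAbs ≤ n := by rw [hsum1]; omega
      have hlb := small_lb (m := m) hn hf0 hfpos hftri hhpos hadm N (L.erase d1)
        (by have := hp.length_eq; simp at this; omega) hsmall hna1
      have hkey : h t ≤ h t1 + f ((L.erase d1).sum.natAbs) := by
        rw [hsum1]
        rcases lt_trichotomy t t1 with hlt | heq | hlt
        · have hcast : ((t : ℤ) - t1).natAbs = t1 - t := by omega
          rw [hcast]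
          have hx := (hadm t (t1 - t) ht1 (by omega) (by omega)).1
          have he : t + (t1 - t) = t1 := by omega
          rw [he] at hx
          have hy := abs_le.mp hx
          linarith [hy.1, hy.2]
        · subst heq
          have hcast : ((t : ℤ) - t).natAbs = 0 := by omega
          rw [hcast, hf0]; linarith
        · have hcast : ((t : ℤ) - t1).natAbs = t - t1 := by omega
          rw [hcast]
          have hx := (hadm t1 (t - t1) ht11 (by omega) (by omega)).1
          have he : t1 + (t - t1) = t := by omega
          rw [he] at hx
          have hy := abs_le.mp hx
          linarith [hy.1, hy.2]
      have hcL : (L.map (W n m f h)).sum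
          = W n m f h d1 + ((L.erase d1).map (W n m f h)).sum :=
        sum_split_mem hd1m (W n m f h)
      rw [hcL, Nat.cast_add]
      linarith [hkey, hlb, hW1]

lemma letter_resid (d : ℤ) (hv : Valid n m d) :
    |d - Ee n m d * ((n : ℤ) + m)| ≤ (n : ℤ) * (W n m f h d : ℤ) := by
  by_cases hbig : n + m + 1 ≤ d.natAbs
  · rcases hv with hv | hv
    · omega
    · by_cases hd : 0 ≤ d
      · have he : Ee n m d = 1 := by unfold Ee; rw [if_pos hbig, if_pos hd]
        obtain ⟨t1, ht1, ht2, hde, hW⟩ :=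
          big_pos_struct hn hf0 hfpos hftri hhpos hadm d (Or.inr hv) he
        rw [hW, he, hde]
        have habs : |((n + m : ℕ) : ℤ) + t1 - 1 * ((n:ℤ) + m)| = (t1 : ℤ) := by
          push_cast
          rw [show ((n:ℤ) + m + t1 - 1 * ((n:ℤ) + m)) = (t1:ℤ) by ring,
            abs_of_nonneg (by positivity)]
        rw [habs]
        have hh1 : 1 ≤ h t1 := hhpos t1 ht1 ht2
        have ht2' : (t1 : ℤ) ≤ n := by exact_mod_cast ht2
        nlinarith
      · push_neg at hd
        have he : Ee n m d = -1 := by unfold Ee; rw [if_pos hbig, if_neg (by omega)]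
        obtain ⟨t2, ht1, ht2, hde, hW⟩ :=
          big_neg_struct hn hf0 hfpos hftri hhpos hadm d (Or.inr hv) he
        rw [hW, he, hde]
        have habs : |-((n + m : ℕ) : ℤ) - t2 - (-1) * ((n:ℤ) + m)| = (t2 : ℤ) := by
          push_cast
          rw [show (-((n:ℤ) + m) - t2 - (-1) * ((n:ℤ) + m)) = -(t2:ℤ) by ring, abs_neg,
            abs_of_nonneg (by positivity)]
        rw [habs]
        have hh1 : 1 ≤ h t2 := hhpos t2 ht1 ht2
        have ht2' : (t2 : ℤ) ≤ n := by exact_mod_cast ht2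
        nlinarith
  · have he : Ee n m d = 0 := by unfold Ee; rw [if_neg hbig]
    rw [he]
    simp only [zero_mul, sub_zero]
    have hsm : d.natAbs ≤ n := by
      rcases hv with hv | hv
      · exact hv
      · omega
    by_cases hd0 : d = 0
    · rw [hd0, abs_zero]; positivity
    · have hW : 1 ≤ W n m f h d := w_pos hn hf0 hfpos hftri hhpos hadm d (Or.inl hsm) hd0
      have h1 : |d| ≤ (n : ℤ) := by
        rw [Int.abs_eq_natAbs]; exact_mod_cast hsm
      have h2 : (1 : ℤ) ≤ (W n m f h d : ℤ) := by exact_mod_cast hW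
      nlinarith

lemma resid : ∀ (L : List ℤ), (∀ d ∈ L, Valid n m d) →
    |L.sum - (L.map (Ee n m)).sum * ((n : ℤ) + m)| ≤ (n : ℤ) * ((L.map (W n m f h)).sum : ℤ) := by
  intro L
  induction L with
  | nil => simp
  | cons a L ih =>
    intro hv
    have h1 := letter_resid hn hf0 hfpos hftri hhpos hadm a (hv a (by simp))
    have h2 := ih (fun d hd => hv d (by simp [hd]))
    have key : (a :: L).sum - ((a :: L).map (Ee n m)).sum * ((n:ℤ) + m)
        = (a - Ee n m a * ((n:ℤ) + m)) + (L.sum - (L.map (Ee n m)).sum * ((n:ℤ) + m)) := by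
      simp only [List.sum_cons, List.map_cons]
      ring
    rw [key]
    refine le_trans (abs_add_le _ _) ?_
    have hc : (((a :: L).map (W n m f h)).sum : ℤ)
        = (W n m f h a : ℤ) + ((L.map (W n m f h)).sum : ℤ) := by
      simp [List.map_cons, List.sum_cons]
    calc |a - Ee n m a * ((n:ℤ) + m)| + |L.sum - (L.map (Ee n m)).sum * ((n:ℤ) + m)|
        ≤ (n : ℤ) * (W n m f h a : ℤ) + (n : ℤ) * ((L.map (W n m f h)).sum : ℤ) := by
          linarith
      _ = (n : ℤ) * (((a :: L).map (W n m f h)).sum : ℤ) := by rw [hc]; ring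

omit hf0 hfpos hftri hhpos hadm in
lemma reach_nonempty (k : ℕ) : (Reach n m f h (k : ℤ)).Nonempty := by
  refine ⟨((List.replicate k (1 : ℤ)).map (W n m f h)).sum, List.replicate k 1, ?_, ?_, rfl⟩
  · intro d hd
    rw [List.eq_of_mem_replicate hd]
    exact Or.inl (by simpa using hn)
  · simp [List.sum_replicate]

end

end Stmt8Aux
open Stmt8Aux in
theorem stmt_8 (n : ℕ) (hn : 1 ≤ n) (f : ℕ → ℤ) (hf0 : f 0 = 0)
    (hfpos : ∀ i, 1 ≤ i → i ≤ n → 0 < f i)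
    (hftri : ∀ i j : ℕ, i + j ≤ n → |f i - f j| ≤ f (i + j) ∧ f (i + j) ≤ f i + f j)
    (h : ℕ → ℤ) (hhpos : ∀ i, 1 ≤ i → i ≤ n → 0 < h i)
    (hadm : ∀ i k, 1 ≤ i → 1 ≤ k → i + k ≤ n →
      |h i - h (i + k)| ≤ f k ∧ f k ≤ h i + h (i + k)) :
    ∃ (m : ℕ) (F : ℕ → ℤ), 1 ≤ m ∧ F 0 = 0 ∧
      (∀ i, 1 ≤ i → i ≤ 2 * n + m → 0 < F i) ∧
      (∀ i j : ℕ, i + j ≤ 2 * n + m → |F i - F j| ≤ F (i + j) ∧ F (i + j) ≤ F i + F j) ∧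
      (∀ i, i ≤ n → F i = f i) ∧
      (∀ i, 1 ≤ i → i ≤ n → F (n + m + i) = h i) := by
  classical
  set S : ℕ := (Finset.range (n + 1)).sup (fun k => (f k).toNat ⊔ (h k).toNat) with hS
  have hfS : ∀ k, k ≤ n → f k ≤ (S : ℤ) := by
    intro k hk
    have h1 : (f k).toNat ≤ S :=
      le_trans le_sup_left (Finset.le_sup (f := fun k => (f k).toNat ⊔ (h k).toNat)
        (Finset.mem_range.mpr (by omega)))
    calc f k ≤ ((f k).toNat : ℤ) := Int.self_le_toNat _
      _ ≤ (S : ℤ) := by exact_mod_cast h1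
  have hhS : ∀ k, k ≤ n → h k ≤ (S : ℤ) := by
    intro k hk
    have h1 : (h k).toNat ≤ S :=
      le_trans le_sup_right (Finset.le_sup (f := fun k => (f k).toNat ⊔ (h k).toNat)
        (Finset.mem_range.mpr (by omega)))
    calc h k ≤ ((h k).toNat : ℤ) := Int.self_le_toNat _
      _ ≤ (S : ℤ) := by exact_mod_cast h1
  set m : ℕ := n * S + n + 1 with hm
  set F : ℕ → ℤ := fun k => (((sInf (Reach n m f h (k : ℤ)) : ℕ)) : ℤ) with hFdef
  have hFeq : ∀ k : ℕ, F k = (((sInf (Reach n m f h (k : ℤ)) : ℕ)) : ℤ) := fun _ => rfl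
  have hne : ∀ k : ℕ, (Reach n m f h (k : ℤ)).Nonempty := reach_nonempty hn
  have hBeq : ((n : ℤ) + m) = n * S + 2 * n + 1 := by rw [hm]; push_cast; ring
  have hF0 : F 0 = 0 := by
    have h0 : (0 : ℕ) ∈ Reach n m f h ((0 : ℕ) : ℤ) := ⟨[], by simp, by simp, by simp⟩
    have h1 := Nat.sInf_le h0
    rw [hFeq]
    exact_mod_cast Nat.le_zero.mp h1
  have hFadd : ∀ i j : ℕ, F (i + j) ≤ F i + F j := by
    intro i j
    have hci := Nat.sInf_mem (hne i)
    have hcj := Nat.sInf_mem (hne j)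
    have hmem := reach_add hci hcj
    have hcast : ((i : ℤ) + j) = ((i + j : ℕ) : ℤ) := by push_cast; ring
    rw [hcast] at hmem
    have h1 := Nat.sInf_le hmem
    rw [hFeq, hFeq, hFeq]
    exact_mod_cast h1
  have hFlow : ∀ i j : ℕ, F i ≤ F j + F (i + j) := by
    intro i j
    have hcj := Nat.sInf_mem (hne j)
    have hcij := Nat.sInf_mem (hne (i + j))
    have hmem := reach_add (reach_neg hcj) hcij
    have hcast : (-(j : ℤ) + ((i + j : ℕ) : ℤ)) = ((i : ℕ) : ℤ) := by push_cast; ring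
    rw [hcast] at hmem
    have h1 := Nat.sInf_le hmem
    rw [hFeq, hFeq, hFeq]
    exact_mod_cast h1
  have hFf : ∀ i, i ≤ n → F i = f i := by
    intro i hi
    rcases Nat.eq_zero_or_pos i with rfl | hi1
    · rw [hF0, hf0]
    · have hub : F i ≤ f i := by
        have hv : Valid n m (i : ℤ) := Or.inl (by simpa using hi)
        have h1 := Nat.sInf_le (reach_single (f := f) (h := h) (i : ℤ) hv)
        have hW : (W n m f h (i : ℤ) : ℤ) = f i := by
          rw [W_small_cast hn hf0 hfpos hftri hhpos hadm _ (by simpa using hi)]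
          rw [Int.natAbs_natCast]
        rw [hFeq]
        calc (((sInf (Reach n m f h (i : ℤ)) : ℕ)) : ℤ) ≤ (W n m f h (i : ℤ) : ℤ) := by
              exact_mod_cast h1
          _ = f i := hW
      have hlb : f i ≤ F i := by
        obtain ⟨L, hv, hsum, hcost⟩ := Nat.sInf_mem (hne i)
        by_contra hcon
        push_neg at hcon
        rw [hFeq] at hcon
        set c := sInf (Reach n m f h ((i : ℕ) : ℤ)) with hc
        have hcS : (c : ℤ) ≤ (S : ℤ) - 1 := by
          have := hfS i hi
          omega
        have hres := resid hn hf0 hfpos hftri hhpos hadm L hv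
        rw [hsum, hcost] at hres
        set T := (L.map (Ee n m)).sum with hT
        have hncn : (n : ℤ) * (c : ℤ) ≤ (n : ℤ) * ((S : ℤ) - 1) := by
          have hn' : (0 : ℤ) ≤ n := by positivity
          nlinarith
        have hT0 : T = 0 := by
          by_contra hTne
          have h1 : 1 ≤ |T| := by
            rcases lt_or_gt_of_ne hTne with hlt | hgt
            · rw [abs_of_neg hlt]; omega
            · rw [abs_of_pos hgt]; omega
          have hBpos : (0 : ℤ) ≤ (n : ℤ) + m := by positivity
          have h2 : |T * ((n : ℤ) + m)| = |T| * ((n : ℤ) + m) := by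
            rw [abs_mul, abs_of_nonneg hBpos]
          have h3 : ((n : ℤ) + m) ≤ |T * ((n : ℤ) + m)| := by
            rw [h2]; nlinarith
          have h4 : |T * ((n : ℤ) + m)| - |(i : ℤ)| ≤ |(i : ℤ) - T * ((n : ℤ) + m)| := by
            rw [abs_sub_comm]
            exact abs_sub_abs_le_abs_sub _ _
          have h5 : |(i : ℤ)| ≤ (n : ℤ) := by
            rw [abs_of_nonneg (by positivity)]; exact_mod_cast hi
          linarith [h3, h4, h5, hres, hncn, hBeq]
        have hfin := big_lb0 hn hf0 hfpos hftri hhpos hadm L.length L le_rfl hv hT0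
          (by rw [hsum, Int.natAbs_natCast]; exact hi)
        rw [hsum, Int.natAbs_natCast, hcost] at hfin
        omega
      omega
  have hFh : ∀ t, 1 ≤ t → t ≤ n → F (n + m + t) = h t := by
    intro t ht1 htn
    have hnaeq : ((n + m + t : ℕ) : ℤ).natAbs = n + m + t := Int.natAbs_natCast _
    have hub : F (n + m + t) ≤ h t := by
      have hv : Valid n m ((n + m + t : ℕ) : ℤ) := by
        refine Or.inr ⟨?_, ?_⟩ <;> rw [hnaeq] <;> omega
      have hWc : (W n m f h ((n + m + t : ℕ) : ℤ) : ℤ) = h t := by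
        rw [W_big_cast hn hf0 hfpos hftri hhpos hadm _ (by rw [hnaeq]; omega)
          (by rw [hnaeq]; omega), hnaeq]
        congr 1
        omega
      have h1 := Nat.sInf_le (reach_single (f := f) (h := h) ((n + m + t : ℕ) : ℤ) hv)
      rw [hFeq]
      calc (((sInf (Reach n m f h ((n + m + t : ℕ) : ℤ)) : ℕ)) : ℤ)
          ≤ (W n m f h ((n + m + t : ℕ) : ℤ) : ℤ) := by exact_mod_cast h1
        _ = h t := hWc
    have hlb : h t ≤ F (n + m + t) := by
      obtain ⟨L, hv, hsum, hcost⟩ := Nat.sInf_mem (hne (n + m + t))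
      by_contra hcon
      push_neg at hcon
      rw [hFeq] at hcon
      set c := sInf (Reach n m f h ((n + m + t : ℕ) : ℤ)) with hc
      have hcS : (c : ℤ) ≤ (S : ℤ) - 1 := by
        have := hhS t htn
        omega
      have hres := resid hn hf0 hfpos hftri hhpos hadm L hv
      rw [hsum, hcost] at hres
      set T := (L.map (Ee n m)).sum with hT
      have hncn : (n : ℤ) * (c : ℤ) ≤ (n : ℤ) * ((S : ℤ) - 1) := by
        have hn' : (0 : ℤ) ≤ n := by positivity
        nlinarith
      have hk : ((n + m + t : ℕ) : ℤ) = ((n : ℤ) + m) + t := by push_cast; ring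
      rw [hk] at hres
      have hBpos : (0 : ℤ) ≤ (n : ℤ) + m := by positivity
      have ht1' : (1 : ℤ) ≤ (t : ℤ) := by exact_mod_cast ht1
      have htn' : (t : ℤ) ≤ n := by exact_mod_cast htn
      have hT1 : T = 1 := by
        by_contra hTne
        rcases le_or_gt T 0 with hTle | hTgt
        · have hmul : 0 ≤ -T * ((n : ℤ) + m) := mul_nonneg (by omega) hBpos
          have habs := le_abs_self (((n : ℤ) + m) + t - T * ((n : ℤ) + m))
          linarith [hBeq, habs, hres, hncn, hmul, ht1']
        · have hT2 : (2 : ℤ) ≤ T := by omega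
          have hmul : 0 ≤ (T - 2) * ((n : ℤ) + m) := mul_nonneg (by omega) hBpos
          have habs := neg_abs_le (((n : ℤ) + m) + t - T * ((n : ℤ) + m))
          linarith [hBeq, habs, hres, hncn, hmul, htn']
      have hfin := big_lb1 hn hf0 hfpos hftri hhpos hadm L.length L le_rfl hv hT1 t ht1 htn
        (by rw [hsum]; push_cast; ring)
      rw [hcost] at hfin
      omega
    omega
  refine ⟨m, F, by omega, hF0, ?_, ?_, hFf, hFh⟩
  · intro i hi1 _
    obtain ⟨L, hv, hsum, hcost⟩ := Nat.sInf_mem (hne i)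
    have hnz : ∃ d ∈ L, d ≠ 0 := by
      by_contra hall
      push_neg at hall
      have h0 : L.sum = 0 := List.sum_eq_zero hall
      rw [hsum] at h0
      have : i = 0 := by exact_mod_cast h0
      omega
    obtain ⟨d, hd, hdnz⟩ := hnz
    have hw := w_pos hn hf0 hfpos hftri hhpos hadm d (hv d hd) hdnz
    have hmem : W n m f h d ∈ L.map (W n m f h) := List.mem_map_of_mem hd
    have hle := List.single_le_sum (fun x _ => Nat.zero_le x) _ hmem
    rw [hFeq]
    have h1 : 1 ≤ sInf (Reach n m f h ((i : ℕ) : ℤ)) := by omega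
    exact_mod_cast h1
  · intro i j _
    refine ⟨?_, hFadd i j⟩
    rw [abs_sub_le_iff]
    constructor
    · have h1 := hFlow i j
      linarith
    · have h1 := hFlow j i
      rw [Nat.add_comm j i] at h1
      linarith
end

section
/- Let n ≥ 1 and let f : {0, …, n} → ℤ satisfy f(0) = 0, f(i) ≥ 1 for 1 ≤ i ≤ n, and |f(i) − f(j)| ≤ f(i+j) ≤ f(i) + f(j) whenever i + j ≤ n. Let h : {1, …, n} → ℤ with h(i) ≥ 1 for all i be f-admissible, i.e. |h(i) − h(i+k)| ≤ f(k) ≤ h(i) + h(i+k) for all 1 ≤ i < i+k ≤ n. Set d = max of all the values f(1), …, f(n), h(1), …, h(n), and assume d ≥ 3. Then there exist integers g₁ and g_N such that: (i) the extended function f′ on {0, …, n+1} defined by f′(i) = f(i) for i ≤ n and f′(n+1) = g₁ satisfies |f′(i) − f′(j)| ≤ f′(i+j) ≤ f′(i) + f′(j) whenever i + j ≤ n+1; (ii) the vector (g_N, h(1), …, h(n)) of length n+1 is f′-admissible; (iii) 2 ≤ g₁ ≤ d−1 and 2 ≤ g_N ≤ d−1. -/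
theorem stmt_10 (n : ℕ) (hn : 1 ≤ n) (f : ℕ → ℤ) (hf0 : f 0 = 0)
    (hfpos : ∀ i, 1 ≤ i → i ≤ n → 1 ≤ f i)
    (hftri : ∀ i j : ℕ, i + j ≤ n → |f i - f j| ≤ f (i + j) ∧ f (i + j) ≤ f i + f j)
    (h : ℕ → ℤ) (hhpos : ∀ i, 1 ≤ i → i ≤ n → 1 ≤ h i)
    (hadm : ∀ i k, 1 ≤ i → 1 ≤ k → i + k ≤ n →
      |h i - h (i + k)| ≤ f k ∧ f k ≤ h i + h (i + k))
    (d : ℤ) (hub : ∀ i, 1 ≤ i → i ≤ n → f i ≤ d ∧ h i ≤ d)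
    (hatt : ∃ i, 1 ≤ i ∧ i ≤ n ∧ (f i = d ∨ h i = d)) (hd3 : 3 ≤ d) :
    ∃ g₁ gN : ℤ, 2 ≤ g₁ ∧ g₁ ≤ d - 1 ∧ 2 ≤ gN ∧ gN ≤ d - 1 ∧
      (∀ i j : ℕ, i + j ≤ n + 1 →
        |(if i = n + 1 then g₁ else f i) - (if j = n + 1 then g₁ else f j)| ≤
            (if i + j = n + 1 then g₁ else f (i + j)) ∧
          (if i + j = n + 1 then g₁ else f (i + j)) ≤
            (if i = n + 1 then g₁ else f i) + (if j = n + 1 then g₁ else f j)) ∧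
      (∀ i k, 1 ≤ i → 1 ≤ k → i + k ≤ n + 1 →
        |(if i = 1 then gN else h (i - 1)) - (if i + k = 1 then gN else h (i + k - 1))| ≤
            (if k = n + 1 then g₁ else f k) ∧
          (if k = n + 1 then g₁ else f k) ≤
            (if i = 1 then gN else h (i - 1)) + (if i + k = 1 then gN else h (i + k - 1))) := by
  -- basic subadditivity facts for f
  have hsub1 : ∀ a b : ℕ, a + b ≤ n → f (a + b) ≤ f a + f b := fun a b hab => (hftri a b hab).2
  have hsub2 : ∀ a b : ℕ, a + b ≤ n → f a ≤ f (a + b) + f b := by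
    intro a b hab
    have h1 := (hftri a b hab).1
    have h2 : f a - f b ≤ |f a - f b| := le_abs_self _
    linarith
  -- pairwise lemma for g₁
  have pairF : ∀ i i' : ℕ, 1 ≤ i → i ≤ n → 1 ≤ i' → i' ≤ n →
      f i - f (n + 1 - i) ≤ f i' + f (n + 1 - i') := by
    intro i i' hi1 hi2 hi1' hi2'
    rcases le_or_gt i i' with hle | hlt
    · have h1 : f i ≤ f i' + f (i' - i) := by
        have := hsub2 i (i' - i) (by omega)
        rwa [show i + (i' - i) = i' by omega] at this
      have h2 : f (i' - i) ≤ f (n + 1 - i) + f (n + 1 - i') := by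
        have := hsub2 (i' - i) (n + 1 - i') (by omega)
        rwa [show i' - i + (n + 1 - i') = n + 1 - i by omega] at this
      linarith
    · have h1 : f i ≤ f i' + f (i - i') := by
        have := hsub1 i' (i - i') (by omega)
        rwa [show i' + (i - i') = i by omega] at this
      have h2 : f (i - i') ≤ f (n + 1 - i') + f (n + 1 - i) := by
        have := hsub2 (i - i') (n + 1 - i) (by omega)
        rwa [show i - i' + (n + 1 - i) = n + 1 - i' by omega] at this
      linarith
  -- pairwise lemma for gN
  have pairH : ∀ k j : ℕ, 1 ≤ k → k ≤ n → 1 ≤ j → j ≤ n →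
      h k - f k ≤ h j + f j ∧ f k - h k ≤ h j + f j := by
    intro k j hk1 hk2 hj1 hj2
    rcases lt_trichotomy k j with hkj | hkj | hkj
    · have ha := hadm k (j - k) hk1 (by omega) (by omega)
      rw [show k + (j - k) = j by omega] at ha
      have h1 : h k - h j ≤ f (j - k) := by
        have := le_abs_self (h k - h j); linarith [ha.1]
      have h2 : f (j - k) ≤ f j + f k := by
        have := hsub2 (j - k) k (by omega)
        rwa [show j - k + k = j by omega] at this
      have h3 : f k ≤ f j + f (j - k) := by
        have := hsub2 k (j - k) (by omega)
        rwa [show k + (j - k) = j by omega] at this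
      exact ⟨by linarith, by linarith [ha.2]⟩
    · subst hkj
      have := hfpos k hk1 hk2
      have := hhpos k hk1 hk2
      constructor <;> linarith
    · have ha := hadm j (k - j) hj1 (by omega) (by omega)
      rw [show j + (k - j) = k by omega] at ha
      have h1 : h k - h j ≤ f (k - j) := by
        have := neg_abs_le (h j - h k); linarith [ha.1]
      have h2 : f (k - j) ≤ f k + f j := by
        have := hsub2 (k - j) j (by omega)
        rwa [show k - j + j = k by omega] at this
      have h3 : f k ≤ f j + f (k - j) := by
        have := hsub1 j (k - j) (by omega)
        rwa [show j + (k - j) = k by omega] at this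
      exact ⟨by linarith, by linarith [ha.2]⟩
  have hne : (Finset.Icc 1 n).Nonempty := ⟨1, by simp [hn]⟩
  set A := (Finset.Icc 1 n).sup' hne (fun i => |f i - f (n + 1 - i)|) with hA
  set B := (Finset.Icc 1 n).sup' hne (fun k => |h k - f k|) with hB
  refine ⟨max 2 A, max 2 B, le_max_left _ _, ?_, le_max_left _ _, ?_, ?_, ?_⟩
  · -- g₁ ≤ d - 1
    apply max_le (by linarith)
    apply Finset.sup'_le
    intro a ha
    rw [Finset.mem_Icc] at ha
    have h1 := hub a ha.1 ha.2
    have h2 := hub (n + 1 - a) (by omega) (by omega)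
    have h3 := hfpos a ha.1 ha.2
    have h4 := hfpos (n + 1 - a) (by omega) (by omega)
    rw [abs_sub_le_iff]; constructor <;> linarith
  · -- gN ≤ d - 1
    apply max_le (by linarith)
    apply Finset.sup'_le
    intro a ha
    rw [Finset.mem_Icc] at ha
    have h1 := hub a ha.1 ha.2
    have h3 := hfpos a ha.1 ha.2
    have h4 := hhpos a ha.1 ha.2
    rw [abs_sub_le_iff]; constructor <;> linarith
  · -- extended triangle
    have lbA : ∀ i : ℕ, 1 ≤ i → i ≤ n → |f i - f (n + 1 - i)| ≤ max 2 A := by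
      intro i h1 h2
      have : |f i - f (n + 1 - i)| ≤ A := by
        rw [hA]; exact Finset.le_sup' (fun i => |f i - f (n + 1 - i)|) (Finset.mem_Icc.mpr ⟨h1, h2⟩)
      exact le_trans this (le_max_right _ _)
    have ubA : ∀ i : ℕ, 1 ≤ i → i ≤ n → max 2 A ≤ f i + f (n + 1 - i) := by
      intro i h1 h2
      have hp1 := hfpos i h1 h2
      have hp2 := hfpos (n + 1 - i) (by omega) (by omega)
      apply max_le (by linarith)
      apply Finset.sup'_le
      intro a ha
      rw [Finset.mem_Icc] at ha
      rw [abs_sub_le_iff]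
      refine ⟨pairF a i ha.1 ha.2 h1 h2, ?_⟩
      have := pairF (n + 1 - a) i (by omega) (by omega) h1 h2
      rwa [show n + 1 - (n + 1 - a) = a by omega] at this
    intro i j hij
    by_cases hc : i + j = n + 1
    · rcases Nat.eq_zero_or_pos i with hi0 | hi1
      · subst hi0
        have hj : j = n + 1 := by omega
        subst hj
        have h1 : ¬((0 : ℕ) = n + 1) := by omega
        rw [if_neg h1, if_pos rfl, if_pos hc, hf0]
        have h2 : (0 : ℤ) ≤ max 2 A := by positivity
        rw [abs_sub_comm, sub_zero, abs_of_nonneg h2]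
        constructor <;> linarith
      · rcases Nat.eq_zero_or_pos j with hj0 | hj1
        · subst hj0
          have hi : i = n + 1 := by omega
          subst hi
          have h1 : ¬((0 : ℕ) = n + 1) := by omega
          rw [if_neg h1, if_pos rfl, hf0]
          have h2 : (0 : ℤ) ≤ max 2 A := by positivity
          rw [sub_zero, abs_of_nonneg h2]
          constructor <;> linarith
        · have hi : i ≠ n + 1 := by omega
          have hj : j ≠ n + 1 := by omega
          rw [if_neg hi, if_neg hj, if_pos hc]
          have hjeq : j = n + 1 - i := by omega
          subst hjeq
          exact ⟨lbA i (by omega) (by omega), ubA i (by omega) (by omega)⟩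
    · have hi : i ≠ n + 1 := by omega
      have hj : j ≠ n + 1 := by omega
      rw [if_neg hi, if_neg hj, if_neg hc]
      exact hftri i j (by omega)
  · -- extended admissibility
    intro i k hi hk hik
    have hkn : k ≤ n := by omega
    have hkne : k ≠ n + 1 := by omega
    have h1 : ¬(i + k = 1) := by omega
    rw [if_neg hkne, if_neg h1]
    by_cases hi1 : i = 1
    · subst hi1
      rw [if_pos rfl, show 1 + k - 1 = k by omega]
      have hlb : |h k - f k| ≤ max 2 B := by
        have : |h k - f k| ≤ B := by
          rw [hB]; exact Finset.le_sup' (fun k => |h k - f k|) (Finset.mem_Icc.mpr ⟨hk, hkn⟩)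
        exact le_trans this (le_max_right _ _)
      have hub' : max 2 B ≤ h k + f k := by
        have hp1 := hfpos k hk hkn
        have hp2 := hhpos k hk hkn
        apply max_le (by linarith)
        apply Finset.sup'_le
        intro a ha
        rw [Finset.mem_Icc] at ha
        rw [abs_sub_le_iff]
        exact ⟨(pairH a k ha.1 ha.2 hk hkn).1, (pairH a k ha.1 ha.2 hk hkn).2⟩
      have e1 : h k - f k ≤ |h k - f k| := le_abs_self _
      have e2 : f k - h k ≤ |h k - f k| := by
        have := le_abs_self (f k - h k); rwa [abs_sub_comm] at this
      constructor
      · rw [abs_sub_le_iff]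
        constructor <;> linarith
      · linarith
    · rw [if_neg hi1, show i + k - 1 = (i - 1) + k by omega]
      exact hadm (i - 1) k (by omega) hk (by omega)
end
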